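/- arXiv:2505.20851 — 7 statements merged into one kernel-verified Lean document; each statement's English description precedes it below -/
import Mathlib

section
/- There exists a Sidon set S of positive integers such that ∑_{s∈S} 1/s = DDC, i.e., the supremum defining the distinct distance constant is attained by some Sidon set. -/
open scoped ENNReal

/-- A set of positive integers is a Sidon set: all pairwise sums `s + t`
with `s ≤ t` are distinct. -/
def IsSidon (S : Set ℕ) : Prop :=
  (∀ s ∈ S, 0 < s) ∧
    ∀ a ∈ S, ∀ b ∈ S, ∀ c ∈ S, ∀ d ∈ S,
      a ≤ b → c ≤ d → a + b = c + d → a = c ∧ b = d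

/-- The distinct distance constant: the supremum of reciprocal sums of Sidon sets. -/
noncomputable def DDC : ℝ≥0∞ :=
  ⨆ T : {T : Set ℕ // IsSidon T}, ∑' s : T.1, (1 : ℝ≥0∞) / (s : ℕ)

open Finset Set Filter

/-- Reciprocal function into `ℝ≥0∞`. -/
noncomputable def rf (s : ℕ) : ℝ≥0∞ := 1 / (s : ℕ)

open scoped Classical

/-- Number of elements of `T` that are `≤ s`. -/
noncomputable def cnt (T : Set ℕ) (s : ℕ) : ℕ :=
  ((Finset.range (s + 1)).filter (· ∈ T)).card

open scoped Classical

lemma sidon_sym2 {T : Set ℕ} (hT : IsSidon T) {a b c d : ℕ}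
    (ha : a ∈ T) (hb : b ∈ T) (hc : c ∈ T) (hd : d ∈ T) (h : a + b = c + d) :
    s(a, b) = s(c, d) := by
  rcases le_total a b with hab | hab <;> rcases le_total c d with hcd | hcd
  · obtain ⟨h1, h2⟩ := hT.2 a ha b hb c hc d hd hab hcd h
    rw [h1, h2]
  · obtain ⟨h1, h2⟩ := hT.2 a ha b hb d hd c hc hab hcd (by omega)
    rw [h1, h2, Sym2.eq_swap]
  · obtain ⟨h1, h2⟩ := hT.2 b hb a ha c hc d hd hab hcd (by omega)
    rw [← h1, ← h2, Sym2.eq_swap]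
  · obtain ⟨h1, h2⟩ := hT.2 b hb a ha d hd c hc hab hcd (by omega)
    rw [h1, h2, Sym2.eq_swap]

lemma cnt_lt_cnt {T : Set ℕ} {s₁ s₂ : ℕ} (h : s₁ < s₂) (hs₂ : s₂ ∈ T) :
    cnt T s₁ < cnt T s₂ := by
  apply Finset.card_lt_card
  constructor
  · apply Finset.filter_subset_filter
    exact Finset.range_subset_range.2 (by omega)
  · intro hsub
    have := hsub (Finset.mem_filter.2 ⟨Finset.mem_range.2 (by omega), hs₂⟩)
    simp only [Finset.mem_filter, Finset.mem_range] at this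
    omega

lemma cnt_injOn {T : Set ℕ} {s₁ s₂ : ℕ} (h1 : s₁ ∈ T) (h2 : s₂ ∈ T)
    (h : cnt T s₁ = cnt T s₂) : s₁ = s₂ := by
  rcases lt_trichotomy s₁ s₂ with hlt | heq | hgt
  · exact absurd h (cnt_lt_cnt hlt h2).ne
  · exact heq
  · exact absurd h.symm (cnt_lt_cnt hgt h1).ne

/-- Counting lemma: a Sidon set has `O(√s)` elements below `s`. -/
lemma sidon_cnt_sq {T : Set ℕ} (hT : IsSidon T) {s : ℕ} (hs : s ∈ T) :
    cnt T s * (cnt T s + 1) ≤ 4 * s := by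
  set F : Finset ℕ := (Finset.range (s + 1)).filter (· ∈ T) with hF
  have hmemF : ∀ a ∈ F, a ∈ T ∧ 0 < a ∧ a ≤ s := by
    intro a haF
    simp only [hF, Finset.mem_filter, Finset.mem_range] at haF
    exact ⟨haF.2, hT.1 a haF.2, by omega⟩
  have hcard : F.sym2.card ≤ (Finset.Icc 2 (2 * s)).card := by
    apply Finset.card_le_card_of_injOn (Sym2.lift ⟨fun a b => a + b, fun _ _ => add_comm _ _⟩)
    · intro e he
      induction e using Sym2.inductionOn with
      | _ a b =>
        rw [Finset.mem_coe, Finset.mk_mem_sym2_iff] at he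
        obtain ⟨-, ha, ha'⟩ := hmemF a he.1
        obtain ⟨-, hb, hb'⟩ := hmemF b he.2
        simp only [Sym2.lift_mk]
        exact Finset.mem_Icc.2 ⟨by omega, by omega⟩
    · intro e₁ he₁ e₂ he₂ hsum
      induction e₁ using Sym2.inductionOn with
      | _ a b =>
        induction e₂ using Sym2.inductionOn with
        | _ c d =>
          simp only [Finset.mem_coe, Finset.mk_mem_sym2_iff] at he₁ he₂
          simp only [Sym2.lift_mk] at hsum
          exact sidon_sym2 hT (hmemF a he₁.1).1 (hmemF b he₁.2).1
            (hmemF c he₂.1).1 (hmemF d he₂.2).1 hsum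
  rw [Finset.card_sym2, Nat.card_Icc] at hcard
  have hj : F.card = cnt T s := rfl
  rw [hj] at hcard
  set j := cnt T s
  rw [Nat.choose_two_right, Nat.add_sub_cancel] at hcard
  obtain ⟨r, hr⟩ := Nat.even_mul_succ_self j
  rw [mul_comm (j + 1) j, hr] at hcard
  omega

/-- Term bound: if `s ∈ T` Sidon with `N < s` then `1/s ≤ min (1/(N+1)) (4/(j(j+1)))`. -/
lemma term_bound {T : Set ℕ} (hT : IsSidon T) {s N : ℕ} (hs : s ∈ T) (hNs : N < s) :
    rf s ≤ min ((1 : ℝ≥0∞) / (N + 1)) (4 / ((cnt T s : ℝ≥0∞) * (cnt T s + 1))) := by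
  refine le_min ?_ ?_
  · apply ENNReal.div_le_div_left
    exact_mod_cast Nat.cast_le.2 (by omega : N + 1 ≤ s)
  · have h4 := sidon_cnt_sq hT hs
    have hle : (cnt T s : ℝ≥0∞) * (cnt T s + 1) ≤ 4 * s := by
      exact_mod_cast h4
    calc rf s = 4 / (4 * (s : ℝ≥0∞)) := by
          rw [rf]
          rw [show (4 : ℝ≥0∞) = 4 * 1 by ring, show (4:ℝ≥0∞) * 1 * ((s:ℝ≥0∞)) = 4 * (s:ℝ≥0∞) by ring]
          rw [ENNReal.mul_div_mul_left 1 (s : ℝ≥0∞) (by norm_num) (by norm_num)]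
      _ ≤ 4 / ((cnt T s : ℝ≥0∞) * (cnt T s + 1)) := ENNReal.div_le_div_left hle 4

/-- Telescoping identity in `ℝ≥0∞`. -/
lemma tel_id (m : ℕ) (hm : 1 ≤ m) :
    (1 : ℝ≥0∞) / ((m : ℝ≥0∞) * (m + 1)) + 1 / ((m : ℝ≥0∞) + 1) = 1 / m := by
  have hm0 : (m : ℝ≥0∞) ≠ 0 := by exact_mod_cast (by omega : m ≠ 0)
  have hmt : (m : ℝ≥0∞) ≠ ⊤ := ENNReal.natCast_ne_top m
  have h1 : (1 : ℝ≥0∞) / ((m : ℝ≥0∞) + 1) = (m : ℝ≥0∞) / ((m : ℝ≥0∞) * ((m : ℝ≥0∞) + 1)) := by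
    rw [← ENNReal.mul_div_mul_left 1 ((m : ℝ≥0∞) + 1) hm0 hmt, mul_one]
  rw [h1, ENNReal.div_add_div_same]
  rw [show (1 : ℝ≥0∞) + m = m + 1 by ring]
  rw [show (m : ℝ≥0∞) * ((m : ℝ≥0∞) + 1) = ((m : ℝ≥0∞) + 1) * m by ring]
  rw [← mul_one ((m : ℝ≥0∞) + 1)]
  rw [show ((m : ℝ≥0∞) + 1) * 1 * m = ((m : ℝ≥0∞) + 1) * m by ring]
  exact ENNReal.mul_div_mul_left 1 (m : ℝ≥0∞)
    (by simp [hm0]) (by simp [hmt, ENNReal.add_ne_top])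

/-- Telescoping sum bound. -/
lemma tel_sum {K n : ℕ} (hK : 1 ≤ K) (hKn : K ≤ n) :
    ∑ j ∈ Finset.Ico K n, (1 : ℝ≥0∞) / ((j : ℝ≥0∞) * (j + 1)) + 1 / (n : ℝ≥0∞) = 1 / K := by
  induction n, hKn using Nat.le_induction with
  | base => simp
  | succ n hn ih =>
    rw [Finset.sum_Ico_succ_top hn]
    have : (((n : ℕ) : ℝ≥0∞) + 1) = ((n + 1 : ℕ) : ℝ≥0∞) := by push_cast; ring
    rw [add_assoc, ← this]
    rw [tel_id n (by omega)]
    exact ih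

/-- The comparison series bound. -/
lemma comp_series {N K : ℕ} (hK : 1 ≤ K) :
    (∑' j : ℕ, min ((1 : ℝ≥0∞) / (N + 1)) (4 / ((j : ℝ≥0∞) * (j + 1))))
      ≤ (K : ℝ≥0∞) / (N + 1) + 4 / K := by
  apply ENNReal.tsum_le_of_sum_range_le
  intro n
  have hsplit : ∀ m : ℕ, m ≤ K →
      ∑ j ∈ Finset.range m, min ((1 : ℝ≥0∞) / (N + 1)) (4 / ((j : ℝ≥0∞) * (j + 1)))
        ≤ (K : ℝ≥0∞) / (N + 1) := by
    intro m hm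
    calc ∑ j ∈ Finset.range m, min ((1 : ℝ≥0∞) / (N + 1)) (4 / ((j : ℝ≥0∞) * (j + 1)))
        ≤ ∑ _j ∈ Finset.range m, (1 : ℝ≥0∞) / (N + 1) :=
          Finset.sum_le_sum fun _ _ => min_le_left _ _
      _ = (m : ℝ≥0∞) * (1 / (N + 1)) := by rw [Finset.sum_const, Finset.card_range, nsmul_eq_mul]
      _ ≤ (K : ℝ≥0∞) * (1 / (N + 1)) := by
          exact mul_le_mul_left (by exact_mod_cast hm) _
      _ = (K : ℝ≥0∞) / (N + 1) := by rw [mul_one_div]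
  rcases le_total n K with hnK | hKn
  · calc ∑ j ∈ Finset.range n, min ((1 : ℝ≥0∞) / (N + 1)) (4 / ((j : ℝ≥0∞) * (j + 1)))
        ≤ (K : ℝ≥0∞) / (N + 1) := hsplit n hnK
      _ ≤ _ := le_self_add
  · rw [Finset.range_eq_Ico, ← Finset.sum_Ico_consecutive _ (Nat.zero_le K) hKn,
      ← Finset.range_eq_Ico]
    apply add_le_add (hsplit K le_rfl)
    calc ∑ j ∈ Finset.Ico K n, min ((1 : ℝ≥0∞) / (N + 1)) (4 / ((j : ℝ≥0∞) * (j + 1)))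
        ≤ ∑ j ∈ Finset.Ico K n, 4 / ((j : ℝ≥0∞) * (j + 1)) :=
          Finset.sum_le_sum fun _ _ => min_le_right _ _
      _ = 4 * ∑ j ∈ Finset.Ico K n, 1 / ((j : ℝ≥0∞) * (j + 1)) := by
          rw [Finset.mul_sum]
          exact Finset.sum_congr rfl fun j _ => (mul_one_div 4 _).symm
      _ ≤ 4 * ((1 : ℝ≥0∞) / K) := by
          apply mul_le_mul_right
          calc ∑ j ∈ Finset.Ico K n, (1 : ℝ≥0∞) / ((j : ℝ≥0∞) * (j + 1))
              ≤ _ + 1 / (n : ℝ≥0∞) := le_self_add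
            _ = 1 / K := tel_sum hK hKn
      _ = 4 / K := by rw [mul_one_div]

/-- The uniform tail bound for Sidon sets. -/
lemma tail_bound {T : Set ℕ} (hT : IsSidon T) (N K : ℕ) (hK : 1 ≤ K) :
    (∑' s : ℕ, Set.indicator {s | s ∈ T ∧ N < s} rf s)
      ≤ (K : ℝ≥0∞) / (N + 1) + 4 / K := by
  rw [← _root_.tsum_subtype]
  refine le_trans ?_ (comp_series hK (N := N))
  apply Summable.tsum_le_tsum_of_inj (hf := ENNReal.summable) (fun x : {s | s ∈ T ∧ N < s} => cnt T x.1)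
  · intro x y hxy
    exact Subtype.ext (cnt_injOn x.2.1 y.2.1 hxy)
  · intro c _
    exact zero_le
  · intro ⟨s, hsT, hsN⟩
    exact term_bound hT hsT hsN
  · exact ENNReal.summable

/-- Splitting the reciprocal sum of a set of positive integers at a threshold `N`. -/
lemma sum_split (T : Set ℕ) (hpos : ∀ s ∈ T, 0 < s) (N : ℕ) :
    (∑' s : T, rf s) = (∑ s ∈ Finset.range (N + 1), Set.indicator {s | s ∈ T ∧ s ≤ N} rf s)
      + ∑' s : ℕ, Set.indicator {s | s ∈ T ∧ N < s} rf s := by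
  have hTeq : T = {s | s ∈ T ∧ s ≤ N} ∪ {s | s ∈ T ∧ N < s} := by
    ext s; simp only [Set.mem_union, Set.mem_setOf_eq]
    constructor
    · intro h
      rcases le_or_gt s N with h' | h'
      · exact Or.inl ⟨h, h'⟩
      · exact Or.inr ⟨h, h'⟩
    · rintro (⟨h, -⟩ | ⟨h, -⟩) <;> exact h
  have hdisj : Disjoint {s | s ∈ T ∧ s ≤ N} {s | s ∈ T ∧ N < s} := by
    rw [Set.disjoint_left]
    intro s h1 h2
    exact absurd h2.2 (not_lt.2 h1.2)
  rw [_root_.tsum_subtype]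
  conv_lhs => rw [hTeq]
  rw [Set.indicator_union_of_disjoint hdisj]
  rw [ENNReal.tsum_add]
  congr 1
  apply tsum_eq_sum
  intro b hb
  apply Set.indicator_of_notMem
  intro hbmem
  have := hbmem.2
  exact hb (Finset.mem_range.2 (by omega))

theorem exists_sidon_recip_sum_eq_DDC :
    ∃ S : Set ℕ, IsSidon S ∧ (∑' s : S, (1 : ℝ≥0∞) / (s : ℕ)) = DDC := by
  classical
  -- every Sidon sum is at most 5
  have bound5 : ∀ T : Set ℕ, IsSidon T → (∑' s : T, rf s) ≤ 5 := by
    intro T hT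
    rw [sum_split T hT.1 0]
    have h1 : (∑ s ∈ Finset.range 1, Set.indicator {s | s ∈ T ∧ s ≤ 0} rf s) = 0 := by
      simp only [Finset.sum_range_one]
      apply Set.indicator_of_notMem
      intro h
      exact absurd rfl (hT.1 0 h.1).ne
    rw [h1, zero_add]
    refine le_trans (tail_bound hT 0 1 le_rfl) ?_
    norm_num
  have hDDC_le5 : DDC ≤ 5 := by
    rw [DDC]
    exact iSup_le fun T => bound5 T.1 T.2
  have hDDC_ne_top : DDC ≠ ⊤ := (lt_of_le_of_lt hDDC_le5 (by norm_num)).ne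
  by_cases h0 : DDC = 0
  · refine ⟨∅, ⟨by simp, by simp⟩, ?_⟩
    rw [h0, tsum_empty]
  -- choose near-optimal Sidon sets
  have hchoice : ∀ n : ℕ, ∃ T : Set ℕ, IsSidon T ∧
      DDC - 1 / (n + 1) < ∑' s : T, rf s := by
    intro n
    have hlt : DDC - 1 / (n + 1) < DDC := by
      apply ENNReal.sub_lt_self hDDC_ne_top h0
      simp [ENNReal.div_eq_zero_iff]
    rw [DDC, lt_iSup_iff] at hlt
    obtain ⟨⟨T, hTs⟩, hTlt⟩ := hlt
    exact ⟨T, hTs, hTlt⟩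
  choose T hTsidon hTsum using hchoice
  -- ultrafilter limit
  let U : Ultrafilter ℕ := Ultrafilter.of Filter.atTop
  have hUle : (U : Filter ℕ) ≤ Filter.atTop := Ultrafilter.of_le _
  set S : Set ℕ := {k | {n | k ∈ T n} ∈ U} with hS
  have hSidon : IsSidon S := by
    constructor
    · intro s hs
      obtain ⟨n, hn⟩ := Filter.nonempty_of_mem (f := (U : Filter ℕ)) hs
      exact (hTsidon n).1 s hn
    · intro a ha b hb c hc d hd hab hcd habcd
      have : {n | a ∈ T n} ∩ {n | b ∈ T n} ∩ {n | c ∈ T n} ∩ {n | d ∈ T n} ∈ U :=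
        Filter.inter_mem (Filter.inter_mem (Filter.inter_mem ha hb) hc) hd
      obtain ⟨n, hn⟩ := Filter.nonempty_of_mem (f := (U : Filter ℕ)) this
      exact (hTsidon n).2 a hn.1.1.1 b hn.1.1.2 c hn.1.2 d hn.2 hab hcd habcd
  -- finite agreement
  have agree : ∀ N : ℕ, {n | ∀ k ∈ Finset.range (N + 1), (k ∈ S ↔ k ∈ T n)} ∈ (U : Filter ℕ) := by
    intro N
    rw [show {n | ∀ k ∈ Finset.range (N + 1), (k ∈ S ↔ k ∈ T n)}
      = ⋂ k ∈ Finset.range (N + 1), {n | k ∈ S ↔ k ∈ T n} by ext n; simp]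
    apply (Filter.biInter_finset_mem _).2
    intro k _
    by_cases hk : k ∈ S
    · exact Filter.mem_of_superset hk fun n hn => by simp [hk, hn]
    · have : {n | k ∈ T n}ᶜ ∈ U := by
        rw [Ultrafilter.compl_mem_iff_notMem]
        exact hk
      exact Filter.mem_of_superset this fun n hn => by
        simp only [Set.mem_compl_iff, Set.mem_setOf_eq] at hn ⊢
        simp [hk, hn]
  -- key inequality
  have key : ∀ N K n : ℕ, 1 ≤ K →
      DDC ≤ (∑' s : S, rf s) + ((K : ℝ≥0∞) / (N + 1) + 4 / K + 1 / (n + 1)) := by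
    intro N K n hK
    have hmem : {m | ∀ k ∈ Finset.range (N + 1), (k ∈ S ↔ k ∈ T m)} ∩ {m | n ≤ m} ∈ U :=
      Filter.inter_mem (agree N) (hUle (Filter.eventually_ge_atTop n))
    obtain ⟨m, hm_agree, hm_ge⟩ := Filter.nonempty_of_mem (f := (U : Filter ℕ)) hmem
    have hfin_eq : (∑ s ∈ Finset.range (N + 1), Set.indicator {s | s ∈ T m ∧ s ≤ N} rf s)
        = ∑ s ∈ Finset.range (N + 1), Set.indicator {s | s ∈ S ∧ s ≤ N} rf s := by
      apply Finset.sum_congr rfl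
      intro k hk
      have hiff := hm_agree k hk
      by_cases hkS : k ∈ S
      · rw [Set.indicator_of_mem (by exact ⟨hiff.1 hkS, by
          simp only [Finset.mem_range] at hk; omega⟩),
          Set.indicator_of_mem (by exact ⟨hkS, by simp only [Finset.mem_range] at hk; omega⟩)]
      · rw [Set.indicator_of_notMem (by intro hc; exact hkS (hiff.2 hc.1)),
          Set.indicator_of_notMem (by intro hc; exact hkS hc.1)]
    have hfin_le : (∑ s ∈ Finset.range (N + 1), Set.indicator {s | s ∈ S ∧ s ≤ N} rf s)
        ≤ ∑' s : S, rf s := by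
      rw [sum_split S hSidon.1 N]
      exact le_self_add
    calc DDC ≤ DDC - 1 / ((m : ℝ≥0∞) + 1) + 1 / ((m : ℝ≥0∞) + 1) := le_tsub_add
      _ ≤ (∑' s : T m, rf s) + 1 / ((m : ℝ≥0∞) + 1) := add_le_add_left (hTsum m).le _
      _ ≤ (∑' s : T m, rf s) + 1 / ((n : ℝ≥0∞) + 1) := by
          apply add_le_add_right
          apply ENNReal.div_le_div_left
          exact_mod_cast add_le_add_left (Nat.cast_le.2 hm_ge) 1
      _ ≤ (∑' s : S, rf s) + ((K : ℝ≥0∞) / (N + 1) + 4 / K) + 1 / ((n : ℝ≥0∞) + 1) := by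
          apply add_le_add_left
          rw [sum_split (T m) (hTsidon m).1 N, hfin_eq]
          exact add_le_add hfin_le (tail_bound (hTsidon m) N K hK)
      _ = (∑' s : S, rf s) + ((K : ℝ≥0∞) / (N + 1) + 4 / K + 1 / (n + 1)) := by ring
  -- conclude DDC ≤ sum S
  have hsumS_le : (∑' s : S, rf s) ≤ DDC := by
    rw [DDC]
    exact le_iSup (fun T : {T : Set ℕ // IsSidon T} => ∑' s : T.1, (1 : ℝ≥0∞) / (s : ℕ))
      ⟨S, hSidon⟩
  have hle : DDC ≤ ∑' s : S, rf s := by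
    apply ENNReal.le_of_forall_pos_le_add
    intro ε hε _
    have hε3 : (ε : ℝ≥0∞) / 3 ≠ 0 := by
      simp [ENNReal.div_eq_zero_iff, hε.ne']
    -- choose K
    obtain ⟨K₀, hK₀⟩ := ENNReal.exists_inv_nat_lt (a := (ε : ℝ≥0∞) / 3 / 4) (by
      simp [ENNReal.div_eq_zero_iff, hε.ne'])
    set K := K₀ + 1 with hKdef
    have hKinv : (K : ℝ≥0∞)⁻¹ < (ε : ℝ≥0∞) / 3 / 4 := by
      refine lt_of_le_of_lt ?_ hK₀
      apply ENNReal.inv_le_inv.2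
      exact_mod_cast Nat.le_succ K₀
    have hK4 : (4 : ℝ≥0∞) / K ≤ (ε : ℝ≥0∞) / 3 := by
      rw [div_eq_mul_inv]
      calc (4 : ℝ≥0∞) * (K : ℝ≥0∞)⁻¹ ≤ 4 * ((ε : ℝ≥0∞) / 3 / 4) :=
            mul_le_mul_right hKinv.le _
        _ = (ε : ℝ≥0∞) / 3 := by
            rw [ENNReal.mul_div_cancel (by norm_num) (by norm_num)]
    -- choose N
    obtain ⟨N, hN⟩ := ENNReal.exists_inv_nat_lt (a := (ε : ℝ≥0∞) / 3 / K) (by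
      apply ENNReal.div_ne_zero.2
      exact ⟨hε3, ENNReal.natCast_ne_top K⟩)
    have hNinv : ((N : ℝ≥0∞) + 1)⁻¹ ≤ (N : ℝ≥0∞)⁻¹ := by
      apply ENNReal.inv_le_inv.2
      exact le_add_of_nonneg_right zero_le
    have hKN : (K : ℝ≥0∞) / ((N : ℝ≥0∞) + 1) ≤ (ε : ℝ≥0∞) / 3 := by
      rw [div_eq_mul_inv]
      calc (K : ℝ≥0∞) * ((N : ℝ≥0∞) + 1)⁻¹ ≤ (K : ℝ≥0∞) * ((ε : ℝ≥0∞) / 3 / K) :=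
            mul_le_mul_right (le_trans hNinv hN.le) _
        _ = (ε : ℝ≥0∞) / 3 := ENNReal.mul_div_cancel (by positivity) (ENNReal.natCast_ne_top K)
    -- choose n
    obtain ⟨n, hn⟩ := ENNReal.exists_inv_nat_lt (a := (ε : ℝ≥0∞) / 3) hε3
    have hn1 : (1 : ℝ≥0∞) / ((n : ℝ≥0∞) + 1) ≤ (ε : ℝ≥0∞) / 3 := by
      rw [one_div]
      refine le_trans ?_ hn.le
      apply ENNReal.inv_le_inv.2
      exact le_add_of_nonneg_right zero_le
    calc DDC ≤ (∑' s : S, rf s) + ((K : ℝ≥0∞) / (N + 1) + 4 / K + 1 / (n + 1)) :=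
          key N K n (by omega)
      _ ≤ (∑' s : S, rf s) + ((ε : ℝ≥0∞) / 3 + (ε : ℝ≥0∞) / 3 + (ε : ℝ≥0∞) / 3) := by
          apply add_le_add_right
          exact add_le_add (add_le_add hKN hK4) hn1
      _ = (∑' s : S, rf s) + ε := by rw [ENNReal.add_thirds]
  exact ⟨S, hSidon, le_antisymm hsumS_le hle⟩
end

section
/- For every real number α > 1/2 there exists a Sidon set S_α of positive integers such that ∑_{s∈S_α} s^{-α} = sup{∑_{s∈S} s^{-α} : S ⊆ ℕ* a Sidon set}, and this supremum is finite. -/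
open scoped ENNReal

/-- In a Sidon set, differences are distinct. -/
lemma IsSidon.diff_inj {S : Set ℕ} (hS : IsSidon S) {a b c d : ℕ}
    (ha : a ∈ S) (hb : b ∈ S) (hc : c ∈ S) (hd : d ∈ S)
    (hab : a < b) (hcd : c < d) (h : b - a = d - c) : a = c ∧ b = d := by
  rcases le_total a d with h1 | h1 <;> rcases le_total c b with h2 | h2
  · have := hS.2 a ha d hd c hc b hb h1 h2 (by omega)
    omega
  · have := hS.2 a ha d hd b hb c hc h1 h2 (by omega)
    omega
  · have := hS.2 d hd a ha c hc b hb h1 h2 (by omega)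
    omega
  · have := hS.2 d hd a ha b hb c hc h1 h2 (by omega)
    omega

lemma IsSidon.card_bound {S : Set ℕ} (hS : IsSidon S) (F : Finset ℕ)
    (hF : ∀ x ∈ F, x ∈ S) (n : ℕ) (hn : ∀ x ∈ F, x ≤ n) :
    F.card * F.card - F.card ≤ 2 * n := by
  classical
  set φ : ℕ × ℕ → ℕ := fun p => if p.1 < p.2 then p.2 - p.1 else n + (p.1 - p.2) with hφ
  have hmaps : ∀ p ∈ F.offDiag, φ p ∈ Finset.Icc 1 (2 * n) := by
    rintro ⟨a, b⟩ hp
    rw [Finset.mem_offDiag] at hp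
    obtain ⟨haF, hbF, hne⟩ := hp
    have ha1 : 1 ≤ a := hS.1 a (hF a haF)
    have hb1 : 1 ≤ b := hS.1 b (hF b hbF)
    have han : a ≤ n := hn a haF
    have hbn : b ≤ n := hn b hbF
    simp only [hφ, Finset.mem_Icc]
    split_ifs with h <;> omega
  have hinj : Set.InjOn φ F.offDiag := by
    rintro ⟨a, b⟩ hp ⟨c, d⟩ hq heq
    rw [Finset.coe_offDiag, Set.mem_offDiag] at hp hq
    obtain ⟨haF, hbF, hne⟩ := hp
    obtain ⟨hcF, hdF, hne'⟩ := hq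
    have ha1 : 1 ≤ a := hS.1 a (hF a haF)
    have hb1 : 1 ≤ b := hS.1 b (hF b hbF)
    have hc1 : 1 ≤ c := hS.1 c (hF c hcF)
    have hd1 : 1 ≤ d := hS.1 d (hF d hdF)
    have han : a ≤ n := hn a haF
    have hbn : b ≤ n := hn b hbF
    have hcn : c ≤ n := hn c hcF
    have hdn : d ≤ n := hn d hdF
    simp only [hφ] at heq
    split_ifs at heq with h1 h2 h2
    · have := hS.diff_inj (hF a haF) (hF b hbF) (hF c hcF) (hF d hdF) h1 h2 heq
      simp [Prod.ext_iff]; omega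
    · omega
    · omega
    · have hba : b < a := by omega
      have hdc : d < c := by omega
      have := hS.diff_inj (hF b hbF) (hF a haF) (hF d hdF) (hF c hcF) hba hdc (by omega)
      simp [Prod.ext_iff]; omega
  calc F.card * F.card - F.card = F.offDiag.card := (Finset.offDiag_card F).symm
    _ ≤ (Finset.Icc 1 (2 * n)).card := Finset.card_le_card_of_injOn φ hmaps hinj
    _ = 2 * n := by rw [Nat.card_Icc]; omega

open Classical in
/-- The number of elements of `S` in `[1, s]`. -/
noncomputable def sidonCnt (S : Set ℕ) (s : ℕ) : ℕ :=
  ((Finset.Icc 1 s).filter (· ∈ S)).card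

lemma sidonCnt_sq_le {S : Set ℕ} (hS : IsSidon S) {s : ℕ} (hs : s ∈ S) :
    sidonCnt S s * sidonCnt S s ≤ 4 * s := by
  classical
  set F := (Finset.Icc 1 s).filter (· ∈ S) with hF
  have hFS : ∀ x ∈ F, x ∈ S := by intro x hx; simp only [hF, Finset.mem_filter] at hx; exact hx.2
  have hFn : ∀ x ∈ F, x ≤ s := by
    intro x hx; simp only [hF, Finset.mem_filter, Finset.mem_Icc] at hx; exact hx.1.2
  have hs1 : 1 ≤ s := hS.1 s hs
  have hsF : s ∈ F := by
    simp only [hF, Finset.mem_filter, Finset.mem_Icc]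
    refine ⟨⟨hs1, le_rfl⟩, by simpa using hs⟩
  have hr1 : 1 ≤ F.card := Finset.card_pos.mpr ⟨s, hsF⟩
  have hA : F.card * F.card - F.card ≤ 2 * s := hS.card_bound F hFS s hFn
  have hA' : F.card * F.card ≤ 2 * s + F.card := by omega
  show F.card * F.card ≤ 4 * s
  rcases Nat.lt_or_ge F.card 2 with h | h
  · have : F.card * F.card ≤ 1 * 1 := Nat.mul_le_mul (by omega) (by omega)
    omega
  · have h2 : 2 * F.card ≤ F.card * F.card := Nat.mul_le_mul_right F.card h
    linarith

lemma sidonCnt_pos {S : Set ℕ} (hS : IsSidon S) {s : ℕ} (hs : s ∈ S) :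
    1 ≤ sidonCnt S s := by
  classical
  have hs1 : 1 ≤ s := hS.1 s hs
  apply Finset.card_pos.mpr
  exact ⟨s, by simp only [Finset.mem_filter, Finset.mem_Icc]; exact ⟨⟨hs1, le_rfl⟩, by simpa using hs⟩⟩

lemma sidonCnt_strictMono {S : Set ℕ} (hS : IsSidon S) {s t : ℕ}
    (hs : s ∈ S) (ht : t ∈ S) (hst : s < t) : sidonCnt S s < sidonCnt S t := by
  classical
  apply Finset.card_lt_card
  constructor
  · exact Finset.filter_subset_filter _ (Finset.Icc_subset_Icc_right (by omega))
  · intro hsub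
    have := hsub (by
      simp only [Finset.mem_filter, Finset.mem_Icc]
      exact ⟨⟨hS.1 t ht, le_rfl⟩, by simpa using ht⟩)
    simp only [Finset.mem_filter, Finset.mem_Icc] at this
    omega

/-- The uniform bound for `∑ s^(-β)` over Sidon sets. -/
noncomputable def sidonBound (β : ℝ) : ℝ≥0∞ :=
  ∑' r : ℕ, (if r = 0 then 0 else (4 : ℝ≥0∞) ^ β * ((r : ℝ≥0∞)) ^ (-(2 * β)))

lemma sidonBound_ne_top {β : ℝ} (hβ : 1 / 2 < β) : sidonBound β ≠ ⊤ := by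
  have hβ0 : (0 : ℝ) < β := by linarith
  have hsum : Summable (fun r : ℕ => (4 : ℝ) ^ β * ((r : ℝ)) ^ (-(2 * β))) := by
    apply Summable.mul_left
    exact Real.summable_nat_rpow.mpr (by linarith)
  have hnonneg : ∀ r : ℕ, 0 ≤ (4 : ℝ) ^ β * ((r : ℝ)) ^ (-(2 * β)) := fun r => by positivity
  have hle : ∀ r : ℕ, (if r = 0 then 0 else (4 : ℝ≥0∞) ^ β * ((r : ℝ≥0∞)) ^ (-(2 * β)))
      ≤ ENNReal.ofReal ((4 : ℝ) ^ β * ((r : ℝ)) ^ (-(2 * β))) := by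
    intro r
    rcases Nat.eq_zero_or_pos r with h | h
    · simp [h]
    · rw [if_neg (by omega)]
      rw [ENNReal.ofReal_mul (by positivity),
        ← ENNReal.ofReal_rpow_of_pos (show (0:ℝ) < 4 by norm_num),
        ← ENNReal.ofReal_rpow_of_pos (show (0:ℝ) < (r:ℝ) by positivity),
        ENNReal.ofReal_ofNat, ENNReal.ofReal_natCast]
  refine ne_top_of_le_ne_top ?_ (ENNReal.tsum_le_tsum hle)
  rw [← ENNReal.ofReal_tsum_of_nonneg hnonneg hsum]
  exact ENNReal.ofReal_ne_top

lemma sidon_tsum_indicator_le {β : ℝ} (hβ : 1 / 2 < β) {S : Set ℕ} (hS : IsSidon S) :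
    (∑' k : ℕ, S.indicator (fun k => ((k : ℕ) : ℝ≥0∞) ^ (-β)) k) ≤ sidonBound β := by
  classical
  have hβ0 : (0 : ℝ) ≤ β := by linarith
  set g : ℕ → ℝ≥0∞ := fun r => if r = 0 then 0 else (4 : ℝ≥0∞) ^ β * ((r : ℝ≥0∞)) ^ (-(2 * β)) with hg
  have h4top : ((4 : ℝ≥0∞) ^ β) ≠ ⊤ := by
    exact ENNReal.rpow_ne_top_of_nonneg hβ0 (by norm_num)
  have h40 : ((4 : ℝ≥0∞) ^ β) ≠ 0 := by
    simp [ENNReal.rpow_eq_zero_iff]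
  have hpt : ∀ k : ℕ, S.indicator (fun k => ((k : ℕ) : ℝ≥0∞) ^ (-β)) k ≤
      S.indicator (fun k => g (sidonCnt S k)) k := by
    intro k
    by_cases hk : k ∈ S
    · rw [Set.indicator_of_mem hk, Set.indicator_of_mem hk]
      set r := sidonCnt S k with hr
      have hr1 : 1 ≤ r := sidonCnt_pos hS hk
      have hgr : g r = (4 : ℝ≥0∞) ^ β * ((r : ℝ≥0∞)) ^ (-(2 * β)) := by
        simp only [hg]
        rw [if_neg (by omega)]
      rw [hgr]
      have hsq : r * r ≤ 4 * k := sidonCnt_sq_le hS hk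
      have hsq' : ((r : ℝ≥0∞)) * r ≤ 4 * k := by
        have := Nat.cast_le (α := ℝ≥0∞).mpr hsq
        push_cast at this
        exact this
      -- r ^ (2β) ≤ 4^β * k^β
      have h1 : ((r : ℝ≥0∞)) ^ (2 * β) ≤ (4 : ℝ≥0∞) ^ β * ((k : ℝ≥0∞)) ^ β := by
        have : ((r : ℝ≥0∞)) ^ (2 * β) = (((r : ℝ≥0∞)) ^ (2 : ℝ)) ^ β := by
          rw [← ENNReal.rpow_mul]
        rw [this]
        calc (((r : ℝ≥0∞)) ^ (2 : ℝ)) ^ β ≤ ((4 : ℝ≥0∞) * k) ^ β := by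
              apply ENNReal.rpow_le_rpow _ hβ0
              rw [show ((2 : ℝ)) = ((2 : ℕ) : ℝ) by norm_num, ENNReal.rpow_natCast]
              calc ((r : ℝ≥0∞)) ^ (2 : ℕ) = (r : ℝ≥0∞) * r := sq (r : ℝ≥0∞) ▸ (sq (r : ℝ≥0∞)).symm ▸ by ring
                _ ≤ 4 * k := hsq'
          _ = (4 : ℝ≥0∞) ^ β * ((k : ℝ≥0∞)) ^ β := ENNReal.mul_rpow_of_nonneg _ _ hβ0
      -- conclude
      rw [ENNReal.rpow_neg ((k : ℝ≥0∞)) β, ENNReal.rpow_neg ((r : ℝ≥0∞)) (2 * β)]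
      have h2 : ((4 : ℝ≥0∞) ^ β * ((k : ℝ≥0∞)) ^ β)⁻¹ ≤ (((r : ℝ≥0∞)) ^ (2 * β))⁻¹ :=
        ENNReal.inv_le_inv.mpr h1
      calc (((k : ℝ≥0∞)) ^ β)⁻¹
          = (4 : ℝ≥0∞) ^ β * ((4 : ℝ≥0∞) ^ β * ((k : ℝ≥0∞)) ^ β)⁻¹ := by
            rw [ENNReal.mul_inv (Or.inl h40) (Or.inl h4top), ← mul_assoc,
              ENNReal.mul_inv_cancel h40 h4top, one_mul]
        _ ≤ (4 : ℝ≥0∞) ^ β * (((r : ℝ≥0∞)) ^ (2 * β))⁻¹ := mul_le_mul_right h2 _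
    · rw [Set.indicator_of_notMem hk, Set.indicator_of_notMem hk]
  -- dominate by indicator of composed function, then compare with tsum over ℕ
  calc (∑' k : ℕ, S.indicator (fun k => ((k : ℕ) : ℝ≥0∞) ^ (-β)) k)
      ≤ ∑' k : ℕ, S.indicator (fun k => g (sidonCnt S k)) k := ENNReal.tsum_le_tsum hpt
    _ = ∑' s : S, g (sidonCnt S s) := (tsum_subtype S fun k => g (sidonCnt S k)).symm
    _ ≤ ∑' r : ℕ, g r := by
        apply ENNReal.tsum_comp_le_tsum_of_injective
        intro s t hst
        by_contra hne
        have hne' : (s : ℕ) ≠ (t : ℕ) := fun h => hne (Subtype.ext h)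
        rcases Nat.lt_or_ge (s : ℕ) (t : ℕ) with h | h
        · exact absurd hst (sidonCnt_strictMono hS s.2 t.2 h).ne
        · exact absurd hst.symm (sidonCnt_strictMono hS t.2 s.2 (by omega)).ne
    _ = sidonBound β := rfl

lemma sidon_tail_le {α β δ : ℝ} (hβ : 1 / 2 < β) (hδ : 0 < δ) (hαβδ : α = β + δ)
    {S : Set ℕ} (hS : IsSidon S) (N : ℕ) :
    (∑' k : ℕ, if N + 1 ≤ k then S.indicator (fun k => ((k : ℕ) : ℝ≥0∞) ^ (-α)) k else 0) ≤
      (((N : ℝ≥0∞) + 1)) ^ (-δ) * sidonBound β := by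
  have hpt : ∀ k : ℕ, (if N + 1 ≤ k then S.indicator (fun k => ((k : ℕ) : ℝ≥0∞) ^ (-α)) k else 0) ≤
      ((N : ℝ≥0∞) + 1) ^ (-δ) * S.indicator (fun k => ((k : ℕ) : ℝ≥0∞) ^ (-β)) k := by
    intro k
    by_cases hNk : N + 1 ≤ k
    · rw [if_pos hNk]
      by_cases hk : k ∈ S
      · rw [Set.indicator_of_mem hk, Set.indicator_of_mem hk]
        have hm0 : ((k : ℝ≥0∞)) ≠ 0 := by
          simp only [ne_eq, Nat.cast_eq_zero]
          omega
        have hmt : ((k : ℝ≥0∞)) ≠ ⊤ := ENNReal.natCast_ne_top k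
        have hsplit : ((k : ℝ≥0∞)) ^ (-α) = ((k : ℝ≥0∞)) ^ (-δ) * ((k : ℝ≥0∞)) ^ (-β) := by
          rw [← ENNReal.rpow_add _ _ hm0 hmt]
          congr 1
          rw [hαβδ]; ring
        rw [hsplit]
        apply mul_le_mul_left
        rw [ENNReal.rpow_neg, ENNReal.rpow_neg]
        apply ENNReal.inv_le_inv.mpr
        apply ENNReal.rpow_le_rpow _ hδ.le
        have h1 : ((N : ℝ≥0∞) + 1) = ((N + 1 : ℕ) : ℝ≥0∞) := by push_cast; ring
        rw [h1]
        exact Nat.cast_le.mpr hNk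
      · rw [Set.indicator_of_notMem hk, Set.indicator_of_notMem hk]
        simp
    · rw [if_neg hNk]
      exact zero_le
  calc (∑' k : ℕ, if N + 1 ≤ k then S.indicator (fun k => ((k : ℕ) : ℝ≥0∞) ^ (-α)) k else 0)
      ≤ ∑' k : ℕ, ((N : ℝ≥0∞) + 1) ^ (-δ) *
          S.indicator (fun k => ((k : ℕ) : ℝ≥0∞) ^ (-β)) k :=
        ENNReal.tsum_le_tsum hpt
    _ = ((N : ℝ≥0∞) + 1) ^ (-δ) *
          ∑' k : ℕ, S.indicator (fun k => ((k : ℕ) : ℝ≥0∞) ^ (-β)) k :=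
        ENNReal.tsum_mul_left
    _ ≤ ((N : ℝ≥0∞) + 1) ^ (-δ) * sidonBound β :=
        mul_le_mul_right (sidon_tsum_indicator_le hβ hS) _

lemma exists_nat_rpow_ge (δ : ℝ) (hδ : 0 < δ) (m : ℕ) :
    ∃ N : ℕ, (m : ℝ≥0∞) ≤ ((N : ℝ≥0∞) + 1) ^ δ := by
  obtain ⟨k, hk⟩ := exists_nat_ge (1 / δ)
  refine ⟨m ^ k, ?_⟩
  rcases Nat.eq_zero_or_pos m with h | h
  · simp [h]
  have hm1 : (1 : ℝ≥0∞) ≤ (m : ℝ≥0∞) := by exact_mod_cast h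
  have h1 : (m : ℝ≥0∞) = ((m : ℝ≥0∞)) ^ (1 : ℝ) := (ENNReal.rpow_one _).symm
  have hkδ : (1 : ℝ) ≤ (k : ℝ) * δ := by
    rwa [div_le_iff₀ hδ] at hk
  calc (m : ℝ≥0∞) = ((m : ℝ≥0∞)) ^ (1 : ℝ) := h1
    _ ≤ ((m : ℝ≥0∞)) ^ ((k : ℝ) * δ) := ENNReal.rpow_le_rpow_of_exponent_le hm1 hkδ
    _ = (((m : ℝ≥0∞)) ^ (k : ℝ)) ^ δ := ENNReal.rpow_mul _ _ _
    _ = (((m : ℝ≥0∞)) ^ (k : ℕ)) ^ δ := by rw [ENNReal.rpow_natCast]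
    _ ≤ ((((m ^ k : ℕ)) : ℝ≥0∞) + 1) ^ δ := by
        apply ENNReal.rpow_le_rpow _ hδ.le
        push_cast
        exact le_add_of_le_of_nonneg le_rfl zero_le_one

set_option maxHeartbeats 1000000 in
lemma sidon_limit_ge {α δ β : ℝ} (hβ : 1 / 2 < β) (hδ : 0 < δ) (hαβδ : α = β + δ)
    (L : ℝ≥0∞) (T : ℕ → {T : Set ℕ // IsSidon T})
    (hT : ∀ n : ℕ, L ≤ (∑' k : ℕ, ((T n).1).indicator (fun k => ((k : ℕ) : ℝ≥0∞) ^ (-α)) k) +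
      ((n : ℝ≥0∞) + 1)⁻¹) :
    ∃ S : Set ℕ, IsSidon S ∧
      L ≤ ∑' k : ℕ, S.indicator (fun k => ((k : ℕ) : ℝ≥0∞) ^ (-α)) k := by
  classical
  set U : Ultrafilter ℕ := Filter.hyperfilter ℕ with hU
  set S : Set ℕ := {k : ℕ | ∀ᶠ n in (U : Filter ℕ), k ∈ (T n).1} with hSdef
  have hSmem : ∀ k : ℕ, k ∈ S ↔ ∀ᶠ n in (U : Filter ℕ), k ∈ (T n).1 := fun k => Iff.rfl
  have hSidonS : IsSidon S := by
    constructor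
    · intro s hs
      obtain ⟨n, hn⟩ := ((hSmem s).mp hs).exists
      exact (T n).2.1 s hn
    · intro a ha b hb c hc d hd hab hcd habcd
      obtain ⟨n, hn⟩ := ((((hSmem a).mp ha).and ((hSmem b).mp hb)).and
        (((hSmem c).mp hc).and ((hSmem d).mp hd))).exists
      exact (T n).2.2 a hn.1.1 b hn.1.2 c hn.2.1 d hn.2.2 hab hcd habcd
  refine ⟨S, hSidonS, ?_⟩
  -- the key inequality for every cutoff N and every M
  have key : ∀ N M : ℕ, L ≤ (∑' k : ℕ, S.indicator (fun k => ((k : ℕ) : ℝ≥0∞) ^ (-α)) k) +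
      (((N : ℝ≥0∞) + 1) ^ (-δ) * sidonBound β + ((M : ℝ≥0∞) + 1)⁻¹) := by
    intro N M
    have hEk : ∀ k : ℕ, ∀ᶠ n in (U : Filter ℕ), (k ∈ (T n).1 ↔ k ∈ S) := by
      intro k
      by_cases hk : k ∈ S
      · filter_upwards [(hSmem k).mp hk] with n hn
        exact iff_of_true hn hk
      · have : ¬ ∀ᶠ n in (U : Filter ℕ), k ∈ (T n).1 := fun h => hk ((hSmem k).mpr h)
        have h2 : ∀ᶠ n in (U : Filter ℕ), k ∉ (T n).1 := Ultrafilter.eventually_not.mpr this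
        filter_upwards [h2] with n hn
        exact iff_of_false hn hk
    have hagree : ∀ᶠ n in (U : Filter ℕ), ∀ k ∈ Finset.range (N + 1), (k ∈ (T n).1 ↔ k ∈ S) := by
      rw [Filter.eventually_all_finset]
      intro k _
      exact hEk k
    have hge : ∀ᶠ n in (U : Filter ℕ), M ≤ n := by
      have : {n : ℕ | M ≤ n} ∈ (U : Filter ℕ) := by
        apply Filter.mem_of_superset (Filter.hyperfilter_le_cofinite
          (Set.finite_Iio M).compl_mem_cofinite)
        intro n hn
        simp only [Set.mem_compl_iff, Set.mem_Iio, not_lt] at hn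
        exact hn
      exact this
    obtain ⟨n, hnM, hnagree⟩ := (hge.and hagree).exists
    have step1 : L ≤ (∑' k : ℕ, ((T n).1).indicator (fun k => ((k : ℕ) : ℝ≥0∞) ^ (-α)) k) +
        ((M : ℝ≥0∞) + 1)⁻¹ := by
      refine le_trans (hT n) (add_le_add_right ?_ _)
      apply ENNReal.inv_le_inv.mpr
      have : ((M : ℝ≥0∞)) ≤ (n : ℝ≥0∞) := by exact_mod_cast hnM
      exact add_le_add_left this 1
    have split : (∑' k : ℕ, ((T n).1).indicator (fun k => ((k : ℕ) : ℝ≥0∞) ^ (-α)) k) =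
        (∑ i ∈ Finset.range (N + 1), ((T n).1).indicator (fun k => ((k : ℕ) : ℝ≥0∞) ^ (-α)) i) +
          ∑' k : ℕ, (if N + 1 ≤ k then
            ((T n).1).indicator (fun k => ((k : ℕ) : ℝ≥0∞) ^ (-α)) k else 0) := by
      have hpt : ∀ k : ℕ, ((T n).1).indicator (fun k => ((k : ℕ) : ℝ≥0∞) ^ (-α)) k =
          (if k < N + 1 then ((T n).1).indicator (fun k => ((k : ℕ) : ℝ≥0∞) ^ (-α)) k else 0) +
          (if N + 1 ≤ k then ((T n).1).indicator (fun k => ((k : ℕ) : ℝ≥0∞) ^ (-α)) k else 0) := by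
        intro k
        rcases Nat.lt_or_ge k (N + 1) with h | h
        · rw [if_pos h, if_neg (by omega), add_zero]
        · rw [if_neg (by omega), if_pos h, zero_add]
      calc (∑' k : ℕ, ((T n).1).indicator (fun k => ((k : ℕ) : ℝ≥0∞) ^ (-α)) k)
          = ∑' k : ℕ,
              ((if k < N + 1 then ((T n).1).indicator (fun k => ((k : ℕ) : ℝ≥0∞) ^ (-α)) k else 0) +
               (if N + 1 ≤ k then ((T n).1).indicator (fun k => ((k : ℕ) : ℝ≥0∞) ^ (-α)) k else 0)) :=
            tsum_congr hpt
        _ = (∑' k : ℕ, if k < N + 1 then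
                ((T n).1).indicator (fun k => ((k : ℕ) : ℝ≥0∞) ^ (-α)) k else 0) +
              ∑' k : ℕ, (if N + 1 ≤ k then
                ((T n).1).indicator (fun k => ((k : ℕ) : ℝ≥0∞) ^ (-α)) k else 0) :=
            ENNReal.tsum_add
        _ = (∑ i ∈ Finset.range (N + 1), ((T n).1).indicator (fun k => ((k : ℕ) : ℝ≥0∞) ^ (-α)) i) +
              ∑' k : ℕ, (if N + 1 ≤ k then
                ((T n).1).indicator (fun k => ((k : ℕ) : ℝ≥0∞) ^ (-α)) k else 0) := by
            congr 1
            rw [tsum_eq_sum (s := Finset.range (N + 1))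
              (fun b hb => if_neg (by simp at hb; omega))]
            apply Finset.sum_congr rfl
            intro i hi
            rw [if_pos (by simp at hi; omega)]
    have hsum_eq : (∑ i ∈ Finset.range (N + 1),
          ((T n).1).indicator (fun k => ((k : ℕ) : ℝ≥0∞) ^ (-α)) i) =
        ∑ i ∈ Finset.range (N + 1), S.indicator (fun k => ((k : ℕ) : ℝ≥0∞) ^ (-α)) i := by
      apply Finset.sum_congr rfl
      intro i hi
      have hiff := hnagree i hi
      by_cases h : i ∈ S
      · rw [Set.indicator_of_mem h, Set.indicator_of_mem (hiff.mpr h)]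
      · rw [Set.indicator_of_notMem h, Set.indicator_of_notMem (fun hc => h (hiff.mp hc))]
    have htail : (∑' k : ℕ, (if N + 1 ≤ k then
          ((T n).1).indicator (fun k => ((k : ℕ) : ℝ≥0∞) ^ (-α)) k else 0)) ≤
        ((N : ℝ≥0∞) + 1) ^ (-δ) * sidonBound β := sidon_tail_le hβ hδ hαβδ (T n).2 N
    calc L ≤ (∑' k : ℕ, ((T n).1).indicator (fun k => ((k : ℕ) : ℝ≥0∞) ^ (-α)) k) +
          ((M : ℝ≥0∞) + 1)⁻¹ := step1
      _ = ((∑ i ∈ Finset.range (N + 1), S.indicator (fun k => ((k : ℕ) : ℝ≥0∞) ^ (-α)) i) +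
            ∑' k : ℕ, (if N + 1 ≤ k then
              ((T n).1).indicator (fun k => ((k : ℕ) : ℝ≥0∞) ^ (-α)) k else 0)) +
            ((M : ℝ≥0∞) + 1)⁻¹ := by rw [split, hsum_eq]
      _ ≤ ((∑' k : ℕ, S.indicator (fun k => ((k : ℕ) : ℝ≥0∞) ^ (-α)) k) +
            ((N : ℝ≥0∞) + 1) ^ (-δ) * sidonBound β) + ((M : ℝ≥0∞) + 1)⁻¹ := by
          apply add_le_add_left
          exact add_le_add (ENNReal.sum_le_tsum _) htail
      _ = (∑' k : ℕ, S.indicator (fun k => ((k : ℕ) : ℝ≥0∞) ^ (-α)) k) +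
            (((N : ℝ≥0∞) + 1) ^ (-δ) * sidonBound β + ((M : ℝ≥0∞) + 1)⁻¹) := by ring
  -- conclude via epsilon argument
  apply ENNReal.le_of_forall_pos_le_add
  intro ε hε _
  set c : ℝ≥0∞ := (ε : ℝ≥0∞) / 2 with hc
  have hc0 : c ≠ 0 := by
    simp only [hc, ne_eq, ENNReal.div_eq_zero_iff]
    push_neg
    exact ⟨by exact_mod_cast hε.ne', by norm_num⟩
  obtain ⟨M, hM⟩ := ENNReal.exists_inv_nat_lt hc0
  have hMle : ((M : ℝ≥0∞) + 1)⁻¹ ≤ c := by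
    refine le_trans (ENNReal.inv_le_inv.mpr ?_) hM.le
    exact le_add_of_le_of_nonneg le_rfl zero_le_one
  have hCne : sidonBound β ≠ ⊤ := sidonBound_ne_top hβ
  have hNexists : ∃ N : ℕ, ((N : ℝ≥0∞) + 1) ^ (-δ) * sidonBound β ≤ c := by
    by_cases hC0 : sidonBound β = 0
    · exact ⟨0, by simp [hC0]⟩
    · have hdiv0 : c / sidonBound β ≠ 0 := by
        simp only [ne_eq, ENNReal.div_eq_zero_iff]
        push_neg
        exact ⟨hc0, hCne⟩
      obtain ⟨m, hm⟩ := ENNReal.exists_inv_nat_lt hdiv0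
      obtain ⟨N, hN⟩ := exists_nat_rpow_ge δ hδ m
      refine ⟨N, ?_⟩
      have h1 : ((N : ℝ≥0∞) + 1) ^ (-δ) ≤ ((m : ℝ≥0∞))⁻¹ := by
        rw [ENNReal.rpow_neg]
        exact ENNReal.inv_le_inv.mpr hN
      calc ((N : ℝ≥0∞) + 1) ^ (-δ) * sidonBound β ≤ ((m : ℝ≥0∞))⁻¹ * sidonBound β :=
            mul_le_mul_left h1 _
        _ ≤ (c / sidonBound β) * sidonBound β := mul_le_mul_left hm.le _
        _ = c := ENNReal.div_mul_cancel hC0 hCne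
  obtain ⟨N, hN⟩ := hNexists
  calc L ≤ (∑' k : ℕ, S.indicator (fun k => ((k : ℕ) : ℝ≥0∞) ^ (-α)) k) +
        (((N : ℝ≥0∞) + 1) ^ (-δ) * sidonBound β + ((M : ℝ≥0∞) + 1)⁻¹) := key N M
    _ ≤ (∑' k : ℕ, S.indicator (fun k => ((k : ℕ) : ℝ≥0∞) ^ (-α)) k) + (c + c) :=
        add_le_add_right (add_le_add hN hMle) _
    _ = (∑' k : ℕ, S.indicator (fun k => ((k : ℕ) : ℝ≥0∞) ^ (-α)) k) + ε := by
        rw [hc, ENNReal.add_halves]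

theorem exists_sidon_maximizing_rpow_sum (α : ℝ) (hα : 1 / 2 < α) :
    ∃ S : Set ℕ, IsSidon S ∧
      (∑' s : S, ((s : ℕ) : ℝ≥0∞) ^ (-α)) =
        (⨆ T : {T : Set ℕ // IsSidon T}, ∑' s : T.1, ((s : ℕ) : ℝ≥0∞) ^ (-α)) ∧
      (⨆ T : {T : Set ℕ // IsSidon T}, ∑' s : T.1, ((s : ℕ) : ℝ≥0∞) ^ (-α)) ≠ ⊤ := by
  classical
  have htsub : ∀ T : Set ℕ, (∑' s : T, ((s : ℕ) : ℝ≥0∞) ^ (-α)) =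
      ∑' k : ℕ, T.indicator (fun k => ((k : ℕ) : ℝ≥0∞) ^ (-α)) k :=
    fun T => tsum_subtype T (fun k : ℕ => ((k : ℕ) : ℝ≥0∞) ^ (-α))
  set L : ℝ≥0∞ := ⨆ T : {T : Set ℕ // IsSidon T}, ∑' s : T.1, ((s : ℕ) : ℝ≥0∞) ^ (-α) with hL
  have hδ : (0 : ℝ) < (α - 1 / 2) / 2 := by linarith
  have hβ : (1 : ℝ) / 2 < α - (α - 1 / 2) / 2 := by linarith
  have hαβδ : α = (α - (α - 1 / 2) / 2) + (α - 1 / 2) / 2 := by ring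
  have hLne : L ≠ ⊤ := by
    have hle : L ≤ sidonBound α := by
      rw [hL]
      apply iSup_le
      rintro ⟨T, hT⟩
      rw [htsub T]
      exact sidon_tsum_indicator_le hα hT
    exact ne_top_of_le_ne_top (sidonBound_ne_top hα) hle
  have hex : ∀ n : ℕ, ∃ T : {T : Set ℕ // IsSidon T},
      L ≤ (∑' k : ℕ, (T.1).indicator (fun k => ((k : ℕ) : ℝ≥0∞) ^ (-α)) k) +
        ((n : ℝ≥0∞) + 1)⁻¹ := by
    intro n
    by_cases hL0 : L = 0
    · exact ⟨⟨∅, ⟨by simp, by simp⟩⟩, by rw [hL0]; exact zero_le⟩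
    · have hlt : L - ((n : ℝ≥0∞) + 1)⁻¹ < L :=
        ENNReal.sub_lt_self hLne hL0 (by simp)
      obtain ⟨T, hT⟩ := lt_iSup_iff.mp (hL ▸ hlt)
      refine ⟨T, ?_⟩
      rw [← htsub T.1]
      exact tsub_le_iff_right.mp hT.le
  choose T hT using hex
  obtain ⟨S, hS, hge⟩ := sidon_limit_ge hβ hδ hαβδ L T hT
  refine ⟨S, hS, ?_, hLne⟩
  refine le_antisymm (le_iSup (fun T : {T : Set ℕ // IsSidon T} =>
    ∑' s : T.1, ((s : ℕ) : ℝ≥0∞) ^ (-α)) ⟨S, hS⟩) ?_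
  rw [htsub S]
  exact hge
end

section
/- Let f : [0,1) → ℝ be continuous with ∫₀¹ |f(t)| √t / √(1−t) dt < ∞. Then the supremum over all Sidon sets S of ∫₀¹ f_S(t) |f(t)| dt is finite, and it is attained: there exists a Sidon set S₀ with ∫₀¹ f_{S₀}(t) |f(t)| dt equal to this supremum. -/
open scoped ENNReal

/-- The generating function `f_S(t) = ∑_{s ∈ S} t ^ s`. -/
noncomputable def genFun (S : Set ℕ) (t : ℝ) : ℝ :=
  ∑' s : S, t ^ (s : ℕ)

open Filter MeasureTheory Topology

/-! ### Combinatorial lemmas -/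

open Classical in
noncomputable def srank (S : Set ℕ) (s : ℕ) : ℕ :=
  ((Finset.range (s+1)).filter (· ∈ S)).card

def eFun : ℕ → ℕ
  | 0 => 0
  | (k+1) => eFun k + k

lemma eFun_eq (k : ℕ) : eFun k = ∑ i ∈ Finset.range k, i := by
  induction k with
  | zero => simp [eFun]
  | succ n ih => simp [eFun, Finset.sum_range_succ, ih]

lemma eFun_two (k : ℕ) : 2 * eFun k = k * (k - 1) := by
  rw [eFun_eq, mul_comm, Finset.sum_range_id_mul_two]

lemma eFun_ge (K j : ℕ) : K * j ≤ eFun (K + j) := by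
  induction j with
  | zero => simp
  | succ n ih =>
    have h1 : K + (n + 1) = (K + n) + 1 := by ring
    rw [h1]
    have h3 : eFun ((K + n) + 1) = eFun (K + n) + (K + n) := rfl
    have h2 : K * (n+1) = K * n + K := by ring
    omega

lemma eFun_succ_ge (k : ℕ) : k ≤ eFun (k + 1) := by
  have := eFun_ge 1 k
  have h : eFun (k+1) = eFun (1 + k) := by rw [Nat.add_comm]
  omega

lemma srank_pos (S : Set ℕ) {s : ℕ} (hs : s ∈ S) : 1 ≤ srank S s := by
  classical
  have : s ∈ (Finset.range (s+1)).filter (· ∈ S) := by simp [hs]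
  exact Finset.card_pos.mpr ⟨s, this⟩

lemma srank_lt (S : Set ℕ) {a b : ℕ} (ha : a ∈ S) (hb : b ∈ S) (hab : a < b) :
    srank S a < srank S b := by
  classical
  apply Finset.card_lt_card
  constructor
  · intro x hx
    simp only [Finset.mem_filter, Finset.mem_range] at hx ⊢
    exact ⟨by omega, hx.2⟩
  · intro hsub
    have hbmem : b ∈ (Finset.range (b+1)).filter (· ∈ S) := by
      simp [hb]
    have := hsub hbmem
    simp only [Finset.mem_filter, Finset.mem_range] at this
    omega

lemma sidon_card_bound {S : Set ℕ} (hS : IsSidon S) {s : ℕ} (hs : s ∈ S) :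
    srank S s * srank S s - srank S s ≤ 2 * s - 2 := by
  classical
  set T := (Finset.range (s+1)).filter (· ∈ S) with hT
  have hmem : ∀ x ∈ T, 1 ≤ x ∧ x ≤ s := by
    intro x hx
    simp only [hT, Finset.mem_filter, Finset.mem_range] at hx
    exact ⟨hS.1 x hx.2, by omega⟩
  have hS1 : ∀ x ∈ T, x ∈ S := by
    intro x hx; simp only [hT, Finset.mem_filter] at hx; exact hx.2
  have hs1 : 1 ≤ s := hS.1 s hs
  have key : T.offDiag.card ≤ ((Finset.Icc (1 - (s:ℤ)) ((s:ℤ) - 1)).erase 0).card := by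
    apply Finset.card_le_card_of_injOn (fun p => (p.2 : ℤ) - p.1)
    · rintro ⟨a, b⟩ hp
      rw [Finset.mem_coe, Finset.mem_offDiag] at hp
      obtain ⟨haT, hbT, hne⟩ := hp
      have ha := hmem a haT
      have hb := hmem b hbT
      have hne' : a ≠ b := hne
      simp only [Finset.mem_coe, Finset.mem_erase, Finset.mem_Icc]
      refine ⟨by omega, by omega, by omega⟩
    · rintro ⟨a, b⟩ hp ⟨c, d⟩ hq hpq
      simp only [Finset.coe_offDiag, Set.mem_offDiag] at hp hq
      obtain ⟨haT, hbT, hab⟩ := hp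
      obtain ⟨hcT, hdT, hcd⟩ := hq
      simp only [Prod.mk.injEq]
      simp only at hpq
      have hsum : a + d = c + b := by omega
      have ha := hS1 a haT; have hb := hS1 b hbT
      have hc := hS1 c hcT; have hd := hS1 d hdT
      have h2 := hS.2
      rcases le_total a d with h1 | h1 <;> rcases le_total c b with h3 | h3
      · obtain ⟨e1, e2⟩ := h2 a ha d hd c hc b hb h1 h3 hsum
        omega
      · obtain ⟨e1, e2⟩ := h2 a ha d hd b hb c hc h1 h3 (by omega)
        omega
      · obtain ⟨e1, e2⟩ := h2 d hd a ha c hc b hb h1 h3 (by omega)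
        omega
      · obtain ⟨e1, e2⟩ := h2 d hd a ha b hb c hc h1 h3 (by omega)
        omega
  rw [Finset.offDiag_card] at key
  have hcard : ((Finset.Icc (1 - (s:ℤ)) ((s:ℤ) - 1)).erase 0).card = 2 * s - 2 := by
    rw [Finset.card_erase_of_mem (by simp [Finset.mem_Icc]; omega)]
    rw [Int.card_Icc]
    have : ((s:ℤ) - 1 + 1 - (1 - (s:ℤ))) = 2 * s - 1 := by ring
    rw [this]
    omega
  rw [hcard] at key
  exact key

lemma sidon_exponent {S : Set ℕ} (hS : IsSidon S) {s : ℕ} (hs : s ∈ S) :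
    eFun (srank S s) + 1 ≤ s := by
  have h1 := sidon_card_bound hS hs
  have h3 : srank S s * (srank S s - 1) = srank S s * srank S s - srank S s := by
    cases' (srank S s) with m
    · simp
    · have hx : (m+1)*(m+1) = (m+1)*m + (m+1) := by ring
      simp only [Nat.succ_sub_one]
      omega
  have h4 : 2 * eFun (srank S s) ≤ 2 * s - 2 := by
    rw [eFun_two, h3]; exact h1
  have hs1 : 1 ≤ s := hS.1 s hs
  omega

/-! ### Analytic lemmas -/

lemma theta_bound {t : ℝ} (h0 : 0 < t) (h1 : t < 1) :
    ∑' k : ℕ, t ^ (eFun (k+1)) ≤ 5 / Real.sqrt (1 - t) := by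
  set ε := 1 - t with hε
  have hε0 : 0 < ε := by simp [hε]; linarith
  have hε1 : ε ≤ 1 := by simp [hε]; linarith
  set δ := Real.sqrt ε with hδ
  have hδ0 : 0 < δ := Real.sqrt_pos.mpr hε0
  have hδ1 : δ ≤ 1 := by
    rw [hδ, show (1:ℝ) = Real.sqrt 1 by simp]
    exact Real.sqrt_le_sqrt hε1
  have hδδ : δ * δ = ε := Real.mul_self_sqrt hε0.le
  set K := ⌈1/δ⌉₊ with hK
  have hK1 : 1/δ ≤ (K:ℝ) := Nat.le_ceil _
  have hK2 : (K:ℝ) < 1/δ + 1 := Nat.ceil_lt_add_one (by positivity)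
  have hinvδ : 1 ≤ 1/δ := by rw [le_div_iff₀ hδ0]; linarith
  have hK2' : (K:ℝ) ≤ 2/δ := by
    have : 1/δ + 1 ≤ 2/δ := by
      rw [div_add' _ _ _ (ne_of_gt hδ0), div_le_div_iff₀ hδ0 hδ0]
      nlinarith
    linarith
  have hKpos : 0 < K := by
    by_contra h
    push_neg at h
    interval_cases K
    simp at hK1
    linarith
  have hsum_geo : Summable (fun n : ℕ => t ^ n) := summable_geometric_of_lt_one h0.le h1
  have hle : ∀ k : ℕ, t ^ (eFun (k+1)) ≤ t ^ k := fun k =>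
    pow_le_pow_of_le_one h0.le h1.le (eFun_succ_ge k)
  have hnn : ∀ k : ℕ, 0 ≤ t ^ (eFun (k+1)) := fun k => pow_nonneg h0.le _
  have hsumB : Summable (fun k : ℕ => t ^ (eFun (k+1))) :=
    Summable.of_nonneg_of_le hnn hle hsum_geo
  have hsplit := Summable.sum_add_tsum_nat_add (f := fun k : ℕ => t ^ (eFun (k+1))) K hsumB
  have hhead : (∑ i ∈ Finset.range K, t ^ (eFun (i+1))) ≤ (K:ℝ) := by
    calc (∑ i ∈ Finset.range K, t ^ (eFun (i+1)))
        ≤ ∑ i ∈ Finset.range K, 1 := by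
          apply Finset.sum_le_sum
          intro i _
          exact pow_le_one₀ h0.le h1.le
      _ = (K:ℝ) := by simp
  have htK : t ^ K < 1 := pow_lt_one₀ h0.le h1 (by omega)
  have htK0 : 0 ≤ t ^ K := pow_nonneg h0.le _
  have htail_le : ∀ i : ℕ, t ^ (eFun (i + K + 1)) ≤ (t ^ K) ^ i := by
    intro i
    rw [← pow_mul]
    apply pow_le_pow_of_le_one h0.le h1.le
    have := eFun_ge K (i+1)
    have heq : K + (i+1) = i + K + 1 := by ring
    rw [heq] at this
    nlinarith
  have htail : (∑' i : ℕ, t ^ (eFun (i + K + 1))) ≤ (1 - t ^ K)⁻¹ := by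
    calc (∑' i : ℕ, t ^ (eFun (i + K + 1)))
        ≤ ∑' i : ℕ, (t ^ K) ^ i := by
          apply Summable.tsum_le_tsum htail_le
          · exact Summable.of_nonneg_of_le (fun i => pow_nonneg h0.le _) htail_le
              (summable_geometric_of_lt_one htK0 htK)
          · exact summable_geometric_of_lt_one htK0 htK
      _ = (1 - t ^ K)⁻¹ := tsum_geometric_of_lt_one htK0 htK
  have hber : t ^ K * (1 + (K:ℝ) * ε) ≤ 1 := by
    have hx : (0:ℝ) ≤ 1/t - 1 := by
      rw [le_sub_iff_add_le, zero_add, le_div_iff₀ h0]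
      nlinarith
    have hb := one_add_mul_le_pow (by linarith : (-2:ℝ) ≤ 1/t - 1) K
    have hb2 : 1 + (K:ℝ) * ε ≤ (1/t) ^ K := by
      have hεle : ε ≤ 1/t - 1 := by
        rw [le_sub_iff_add_le, le_div_iff₀ h0]
        nlinarith
      have : 1 + (K:ℝ) * ε ≤ 1 + (K:ℝ) * (1/t - 1) := by
        have : (0:ℝ) ≤ (K:ℝ) := Nat.cast_nonneg K
        nlinarith
      calc 1 + (K:ℝ)*ε ≤ 1 + (K:ℝ)*(1/t-1) := this
        _ ≤ (1 + (1/t - 1))^K := hb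
        _ = (1/t)^K := by ring_nf
    calc t ^ K * (1 + (K:ℝ) * ε) ≤ t ^ K * (1/t) ^ K := by
          apply mul_le_mul_of_nonneg_left hb2 htK0
      _ = (t * (1/t)) ^ K := by rw [mul_pow]
      _ = 1 := by rw [mul_one_div, div_self (ne_of_gt h0), one_pow]
  have hKε1 : δ ≤ (K:ℝ) * ε := by
    have e0 : (1/δ) * ε = δ := by rw [← hδδ]; field_simp
    calc δ = (1/δ) * ε := e0.symm
      _ ≤ (K:ℝ) * ε := mul_le_mul_of_nonneg_right hK1 hε0.le
  have hKε2 : (K:ℝ) * ε ≤ 2 * δ := by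
    have e0 : (2/δ) * ε = 2 * δ := by rw [← hδδ]; field_simp
    calc (K:ℝ) * ε ≤ (2/δ) * ε := mul_le_mul_of_nonneg_right hK2' hε0.le
      _ = 2 * δ := e0
  have hgap : δ/3 ≤ 1 - t ^ K := by
    have e1 : (K:ℝ) * ε ≤ (1 - t ^ K) * (1 + (K:ℝ) * ε) := by
      ring_nf
      ring_nf at hber
      linarith
    have e3 : 0 ≤ (1 - t ^ K) * (2 - (K:ℝ) * ε) := mul_nonneg (by linarith) (by linarith)
    have e4 : (K:ℝ) * ε ≤ (1 - t ^ K) * 3 := by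
      ring_nf at e1 e3 ⊢
      linarith
    linarith
  have hinv : (1 - t ^ K)⁻¹ ≤ 3/δ := by
    have h3 : (0:ℝ) < δ/3 := by positivity
    calc (1 - t ^ K)⁻¹ ≤ (δ/3)⁻¹ := inv_anti₀ h3 hgap
      _ = 3/δ := by field_simp
  rw [← hsplit]
  have hfive : (K:ℝ) + 3/δ ≤ 5/δ := by
    have : 2/δ + 3/δ = 5/δ := by ring
    linarith
  have htail' : (∑' i : ℕ, t ^ (eFun (i + K + 1))) ≤ 3/δ := le_trans htail hinv
  calc (∑ i ∈ Finset.range K, t ^ (eFun (i+1))) + (∑' i : ℕ, t ^ (eFun (i + K + 1)))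
      ≤ (K:ℝ) + 3/δ := add_le_add hhead htail'
    _ ≤ 5/δ := hfive

lemma genFun_nonneg (S : Set ℕ) {t : ℝ} (ht : 0 ≤ t) : 0 ≤ genFun S t :=
  tsum_nonneg fun s => pow_nonneg ht _

lemma summable_genFun (S : Set ℕ) {t : ℝ} (h0 : 0 ≤ t) (h1 : t < 1) :
    Summable (fun s : S => t ^ (s : ℕ)) :=
  (summable_geometric_of_lt_one h0 h1).subtype S

lemma genFun_le {S : Set ℕ} (hS : IsSidon S) {t : ℝ} (h0 : 0 < t) (h1 : t < 1) :
    genFun S t ≤ 5 * Real.sqrt t / Real.sqrt (1 - t) := by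
  have hδ0 : 0 < Real.sqrt (1 - t) := Real.sqrt_pos.mpr (by linarith)
  have hg_nonneg : ∀ k : ℕ, (0:ℝ) ≤ t ^ (eFun (k+1) + 1) := fun k => pow_nonneg h0.le _
  have hg_le : ∀ k : ℕ, t ^ (eFun (k+1) + 1) ≤ t ^ k := fun k =>
    pow_le_pow_of_le_one h0.le h1.le (by have := eFun_succ_ge k; omega)
  have hsumg : Summable (fun k : ℕ => t ^ (eFun (k+1) + 1)) :=
    Summable.of_nonneg_of_le hg_nonneg hg_le (summable_geometric_of_lt_one h0.le h1)
  have step1 : genFun S t ≤ ∑' k : ℕ, t ^ (eFun (k+1) + 1) := by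
    apply Summable.tsum_le_tsum_of_inj (fun s : S => srank S (s : ℕ) - 1)
    · intro s1 s2 h
      have h1' := srank_pos S s1.2
      have h2' := srank_pos S s2.2
      simp only at h
      have hr : srank S (s1:ℕ) = srank S (s2:ℕ) := by omega
      rcases lt_trichotomy (s1:ℕ) (s2:ℕ) with hlt | heq | hgt
      · exact absurd hr (Nat.ne_of_lt (srank_lt S s1.2 s2.2 hlt))
      · exact Subtype.ext heq
      · exact absurd hr.symm (Nat.ne_of_lt (srank_lt S s2.2 s1.2 hgt))
    · intro c _; exact pow_nonneg h0.le _
    · intro s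
      have hr := srank_pos S s.2
      have heq : srank S (s:ℕ) - 1 + 1 = srank S (s:ℕ) := by omega
      rw [heq]
      exact pow_le_pow_of_le_one h0.le h1.le (sidon_exponent hS s.2)
    · exact summable_genFun S h0.le h1
    · exact hsumg
  have step2 : (∑' k : ℕ, t ^ (eFun (k+1) + 1)) = (∑' k : ℕ, t ^ (eFun (k+1))) * t := by
    rw [← tsum_mul_right]
    exact tsum_congr fun k => pow_succ t _
  have step3 : (∑' k : ℕ, t ^ (eFun (k+1))) * t ≤ (5 / Real.sqrt (1-t)) * t :=
    mul_le_mul_of_nonneg_right (theta_bound h0 h1) h0.le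
  have ht_sqrt : t ≤ Real.sqrt t := by
    nth_rewrite 1 [← Real.sqrt_mul_self h0.le]
    exact Real.sqrt_le_sqrt (by nlinarith)
  have step4 : (5 / Real.sqrt (1-t)) * t ≤ 5 * Real.sqrt t / Real.sqrt (1-t) := by
    rw [div_mul_eq_mul_div]
    gcongr
  calc genFun S t ≤ _ := step1
    _ = _ := step2
    _ ≤ _ := step3
    _ ≤ _ := step4

/-! ### Measure-theoretic lemmas -/

noncomputable def GFun (S : Set ℕ) (t : ℝ) : ℝ≥0∞ :=
  ∑' k : ℕ, Set.indicator S (fun s => ENNReal.ofReal (t ^ s)) k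

lemma GFun_measurable (S : Set ℕ) : Measurable (GFun S) := by
  classical
  apply Measurable.ennreal_tsum
  intro k
  have : (fun t : ℝ => Set.indicator S (fun s => ENNReal.ofReal (t ^ s)) k)
      = fun t : ℝ => if k ∈ S then ENNReal.ofReal (t ^ k) else 0 := by
    funext t
    by_cases hk : k ∈ S <;> simp [Set.indicator, hk]
  rw [this]
  by_cases hk : k ∈ S
  · simpa [hk] using (measurable_id.pow_const k).ennreal_ofReal
  · simp [hk]

lemma ofReal_genFun (S : Set ℕ) {t : ℝ} (h0 : 0 ≤ t) (h1 : t < 1) :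
    ENNReal.ofReal (genFun S t) = GFun S t := by
  classical
  rw [genFun, tsum_subtype]
  rw [ENNReal.ofReal_tsum_of_nonneg
    (fun k => Set.indicator_nonneg (fun s _ => pow_nonneg h0 _) k)
    ((summable_geometric_of_lt_one h0 h1).indicator S)]
  exact tsum_congr fun k => by by_cases hk : k ∈ S <;> simp [Set.indicator, hk]

theorem sup_integral_attained (f : ℝ → ℝ)
    (hf : ContinuousOn f (Set.Ico 0 1))
    (hfint : (∫⁻ t in Set.Ioo (0 : ℝ) 1,
        ENNReal.ofReal (|f t| * Real.sqrt t / Real.sqrt (1 - t))) ≠ ⊤) :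
    ∃ S₀ : Set ℕ, IsSidon S₀ ∧
      (∫⁻ t in Set.Ioo (0 : ℝ) 1, ENNReal.ofReal (genFun S₀ t * |f t|)) =
        (⨆ S : {S : Set ℕ // IsSidon S},
          ∫⁻ t in Set.Ioo (0 : ℝ) 1, ENNReal.ofReal (genFun S.1 t * |f t|)) ∧
      (⨆ S : {S : Set ℕ // IsSidon S},
          ∫⁻ t in Set.Ioo (0 : ℝ) 1, ENNReal.ofReal (genFun S.1 t * |f t|)) ≠ ⊤ := by
  classical
  set μ : Measure ℝ := volume.restrict (Set.Ioo (0:ℝ) 1) with hμdef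
  set F : Set ℕ → ℝ≥0∞ := fun S => ∫⁻ t, ENNReal.ofReal (genFun S t * |f t|) ∂μ with hFdef
  set bound : ℝ → ℝ≥0∞ :=
    fun t => 5 * ENNReal.ofReal (|f t| * Real.sqrt t / Real.sqrt (1 - t)) with hbounddef
  have hbound_fin : (∫⁻ t, bound t ∂μ) ≠ ⊤ := by
    rw [hbounddef]
    rw [lintegral_const_mul' 5 _ (by norm_num)]
    exact ENNReal.mul_ne_top (by norm_num) hfint
  -- pointwise bound
  have hptbd : ∀ (S : Set ℕ), IsSidon S → ∀ t ∈ Set.Ioo (0:ℝ) 1,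
      ENNReal.ofReal (genFun S t * |f t|) ≤ bound t := by
    intro S hS t ht
    obtain ⟨ht0, ht1⟩ := ht
    have h1 : genFun S t * |f t| ≤ 5 * (|f t| * Real.sqrt t / Real.sqrt (1 - t)) := by
      have hgl := genFun_le hS ht0 ht1
      have habs : (0:ℝ) ≤ |f t| := abs_nonneg _
      calc genFun S t * |f t| ≤ (5 * Real.sqrt t / Real.sqrt (1-t)) * |f t| :=
            mul_le_mul_of_nonneg_right hgl habs
        _ = 5 * (|f t| * Real.sqrt t / Real.sqrt (1-t)) := by ring
    calc ENNReal.ofReal (genFun S t * |f t|)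
        ≤ ENNReal.ofReal (5 * (|f t| * Real.sqrt t / Real.sqrt (1-t))) :=
          ENNReal.ofReal_le_ofReal h1
      _ = bound t := by
          rw [hbounddef, ENNReal.ofReal_mul (by norm_num : (0:ℝ) ≤ 5)]
          norm_num
  have hF_le : ∀ (S : Set ℕ), IsSidon S → F S ≤ ∫⁻ t, bound t ∂μ := by
    intro S hS
    exact lintegral_mono_ae ((ae_restrict_iff' measurableSet_Ioo).mpr
      (ae_of_all _ (hptbd S hS)))
  have hM_ne : (⨆ S : {S : Set ℕ // IsSidon S}, F S.1) ≠ ⊤ :=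
    ne_top_of_le_ne_top hbound_fin (iSup_le fun S => hF_le S.1 S.2)
  -- measurability
  have hfm : AEMeasurable (fun t => ENNReal.ofReal (|f t|)) μ := by
    have h1 : AEMeasurable (fun t => |f t|) μ :=
      (hf.abs.aemeasurable measurableSet_Ico).mono_measure
        (Measure.restrict_mono Set.Ioo_subset_Ico_self le_rfl)
    exact h1.ennreal_ofReal
  have hmeasF : ∀ S : Set ℕ, AEMeasurable (fun t => ENNReal.ofReal (genFun S t * |f t|)) μ := by
    intro S
    apply AEMeasurable.congr ((GFun_measurable S).aemeasurable.mul hfm)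
    rw [Filter.EventuallyEq, hμdef]
    rw [ae_restrict_iff' measurableSet_Ioo]
    apply ae_of_all
    intro t ht
    rw [ENNReal.ofReal_mul (genFun_nonneg S ht.1.le), ofReal_genFun S ht.1.le ht.2, Pi.mul_apply]
  -- approximating sequence
  have hne : Nonempty {S : Set ℕ // IsSidon S} := ⟨⟨∅, by constructor <;> simp⟩⟩
  obtain ⟨u, -, hu_tend, hu_mem⟩ := exists_seq_tendsto_sSup
    (S := Set.range (fun S : {S : Set ℕ // IsSidon S} => F S.1))
    (Set.range_nonempty _) (OrderTop.bddAbove _)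
  rw [sSup_range] at hu_tend
  choose P hP using fun n => hu_mem n
  -- compactness
  set x : ℕ → (ℕ → Set.Icc (0:ℝ) 1) := fun n k =>
    if k ∈ (P n).1 then ⟨1, by norm_num⟩ else ⟨0, by norm_num⟩ with hxdef
  obtain ⟨A, -, φ, hφ, hconv⟩ := isCompact_univ.tendsto_subseq
    (x := x) (fun n => Set.mem_univ _)
  set S₀ : Set ℕ := {k | ((A k : ℝ)) = 1} with hS₀def
  have hstab : ∀ k : ℕ, ∀ᶠ n in atTop, (k ∈ (P (φ n)).1 ↔ k ∈ S₀) := by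
    intro k
    have hk : Tendsto (fun n => ((x (φ n) k : ℝ))) atTop (𝓝 (A k)) :=
      (continuous_subtype_val.tendsto _).comp (tendsto_pi_nhds.mp hconv k)
    have hval : ∀ n, ((x n k : ℝ)) = 1 ∨ ((x n k : ℝ)) = 0 := by
      intro n
      by_cases h : k ∈ (P n).1 <;> simp [hxdef, h]
    have hlim : ((A k : ℝ)) = 0 ∨ ((A k : ℝ)) = 1 := by
      have hC : IsClosed ({0, 1} : Set ℝ) := Set.Finite.isClosed (by simp)
      have hmem : ∀ n, ((x (φ n) k : ℝ)) ∈ ({0, 1} : Set ℝ) := by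
        intro n; rcases hval (φ n) with h | h <;> simp [h]
      have := hC.mem_of_tendsto hk (Eventually.of_forall hmem)
      simpa using this
    have hev : ∀ᶠ n in atTop, |((x (φ n) k : ℝ)) - A k| < 1/2 := by
      have hb := hk (Metric.ball_mem_nhds (A k : ℝ) (by norm_num : (0:ℝ) < 1/2))
      simpa [Metric.mem_ball, Real.dist_eq] using hb
    filter_upwards [hev] with n hn
    constructor
    · intro hmem
      have hx1 : ((x (φ n) k : ℝ)) = 1 := by simp [hxdef, hmem]
      rcases hlim with h0 | h1
      · rw [hx1, h0] at hn; norm_num at hn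
      · exact h1
    · intro hS0
      by_contra hmem
      have hx0 : ((x (φ n) k : ℝ)) = 0 := by simp [hxdef, hmem]
      have hA1 : ((A k : ℝ)) = 1 := hS0
      rw [hx0, hA1] at hn
      norm_num at hn
  -- S₀ is Sidon
  have hS₀ : IsSidon S₀ := by
    constructor
    · intro s hs
      obtain ⟨n, hn⟩ := (hstab s).exists
      exact (P (φ n)).2.1 s (hn.mpr hs)
    · intro a ha b hb c hc d hd hab hcd hsum
      obtain ⟨n, hn⟩ := (((hstab a).and ((hstab b).and ((hstab c).and (hstab d)))).exists)
      exact (P (φ n)).2.2 a (hn.1.mpr ha) b (hn.2.1.mpr hb) c (hn.2.2.1.mpr hc)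
        d (hn.2.2.2.mpr hd) hab hcd hsum
  -- pointwise convergence of genFun
  have hgen : ∀ t ∈ Set.Ioo (0:ℝ) 1,
      Tendsto (fun n => genFun (P (φ n)).1 t) atTop (𝓝 (genFun S₀ t)) := by
    intro t ht
    have hrw : ∀ S : Set ℕ, genFun S t = ∑' k : ℕ, Set.indicator S (fun s => t ^ s) k :=
      fun S => tsum_subtype S _
    simp only [hrw]
    apply tendsto_tsum_of_dominated_convergence
      (bound := fun k : ℕ => t ^ k) (summable_geometric_of_lt_one ht.1.le ht.2)
    · intro k
      apply Tendsto.congr' _ tendsto_const_nhds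
      filter_upwards [hstab k] with n hn
      by_cases hk : k ∈ S₀
      · simp [Set.indicator, hk, hn.mpr hk]
      · have : k ∉ (P (φ n)).1 := fun h => hk (hn.mp h)
        simp [Set.indicator, hk, this]
    · apply Eventually.of_forall
      intro n k
      rw [Real.norm_eq_abs]
      by_cases hk : k ∈ (P (φ n)).1
      · rw [Set.indicator_of_mem hk, abs_of_nonneg (pow_nonneg ht.1.le _)]
      · rw [Set.indicator_of_notMem hk, abs_zero]
        exact pow_nonneg ht.1.le _
  -- dominated convergence
  have hInt : Tendsto (fun n => F (P (φ n)).1) atTop (𝓝 (F S₀)) := by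
    rw [hFdef]
    apply tendsto_lintegral_of_dominated_convergence' bound
    · intro n; exact hmeasF _
    · intro n
      exact (ae_restrict_iff' measurableSet_Ioo).mpr (ae_of_all _ (hptbd _ (P (φ n)).2))
    · exact hbound_fin
    · rw [hμdef]
      rw [ae_restrict_iff' measurableSet_Ioo]
      apply ae_of_all
      intro t ht
      exact (ENNReal.continuous_ofReal.tendsto _).comp ((hgen t ht).mul_const _)
  -- conclusion
  refine ⟨S₀, hS₀, ?_, hM_ne⟩
  have h2 : Tendsto (fun n => u (φ n)) atTop
      (𝓝 (⨆ S : {S : Set ℕ // IsSidon S}, F S.1)) := hu_tend.comp hφ.tendsto_atTop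
  have h3 : (fun n => F (P (φ n)).1) = fun n => u (φ n) := funext fun n => hP (φ n)
  rw [h3] at hInt
  exact tendsto_nhds_unique hInt h2
end

section
/- Let S be a Sidon set of positive integers such that ∑_{s∈S} 1/s = DDC (such S exists). Then for every positive integer n, the number of elements of S in {1,…,n} is strictly greater than 0.257 · n^{1/4}. -/
open scoped ENNReal

namespace SidonAux

lemma ncast_ne_top (a : ℕ) : ((a : ℝ≥0∞)) ≠ ⊤ := ENNReal.natCast_ne_top a

lemma ediv_le_ediv {a b c d : ℕ} (hb : b ≠ 0) (hd : d ≠ 0) (h : a * d ≤ c * b) :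
    (a : ℝ≥0∞) / (b : ℝ≥0∞) ≤ (c : ℝ≥0∞) / (d : ℝ≥0∞) := by
  have hb0 : (b : ℝ≥0∞) ≠ 0 := Nat.cast_ne_zero.mpr hb
  have hd0 : (d : ℝ≥0∞) ≠ 0 := Nat.cast_ne_zero.mpr hd
  calc (a : ℝ≥0∞) / b = ((a : ℝ≥0∞) * d) / ((b : ℝ≥0∞) * d) := by
        rw [ENNReal.mul_div_mul_right _ _ hd0 (ncast_ne_top d)]
    _ ≤ ((c : ℝ≥0∞) * b) / ((b : ℝ≥0∞) * d) := by
        refine ENNReal.div_le_div_right ?_ _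
        exact_mod_cast h
    _ = (c : ℝ≥0∞) / d := by
        rw [mul_comm (b : ℝ≥0∞) d, ENNReal.mul_div_mul_right _ _ hb0 (ncast_ne_top b)]

lemma two_div_step (x : ℕ) (hx : x ≠ 0) :
    (2 : ℝ≥0∞) / ((x * (x + 1) : ℕ) : ℝ≥0∞) + 2 / (((x + 1 : ℕ)) : ℝ≥0∞)
      = 2 / ((x : ℕ) : ℝ≥0∞) := by
  have hx0 : (x : ℝ≥0∞) ≠ 0 := Nat.cast_ne_zero.mpr hx
  have hx1 : ((x : ℝ≥0∞) + 1) ≠ 0 := by simp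
  have hx1t : ((x : ℝ≥0∞) + 1) ≠ ⊤ := by
    simp [ENNReal.add_ne_top, ncast_ne_top]
  push_cast
  have h1 : (2 : ℝ≥0∞) / ((x : ℝ≥0∞) + 1) = (x : ℝ≥0∞) * 2 / ((x : ℝ≥0∞) * ((x : ℝ≥0∞) + 1)) := by
    rw [ENNReal.mul_div_mul_left _ _ hx0 (ncast_ne_top x)]
  rw [h1, ENNReal.div_add_div_same]
  have h2 : (2 : ℝ≥0∞) + (x : ℝ≥0∞) * 2 = 2 * ((x : ℝ≥0∞) + 1) := by ring
  rw [h2, ENNReal.mul_div_mul_right _ _ hx1 hx1t]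

lemma tele (J : ℕ) (hJ : J ≠ 0) : ∀ t : ℕ,
    (∑ i ∈ Finset.Ico J (J + t), (2 : ℝ≥0∞) / ((i * (i + 1) : ℕ) : ℝ≥0∞))
      + 2 / (((J + t : ℕ)) : ℝ≥0∞) = 2 / ((J : ℕ) : ℝ≥0∞) := by
  intro t
  induction t with
  | zero => simp
  | succ t ih =>
      have hle : J ≤ J + t := Nat.le_add_right _ _
      have : J + (t + 1) = (J + t) + 1 := by omega
      rw [this, Finset.sum_Ico_succ_top hle]
      have hx : J + t ≠ 0 := by omega
      calc (∑ i ∈ Finset.Ico J (J + t), (2 : ℝ≥0∞) / ((i * (i + 1) : ℕ) : ℝ≥0∞))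
            + 2 / (((J + t) * ((J + t) + 1) : ℕ) : ℝ≥0∞) + 2 / (((J + t + 1 : ℕ)) : ℝ≥0∞)
          = (∑ i ∈ Finset.Ico J (J + t), (2 : ℝ≥0∞) / ((i * (i + 1) : ℕ) : ℝ≥0∞))
            + ((2 : ℝ≥0∞) / (((J + t) * ((J + t) + 1) : ℕ) : ℝ≥0∞)
              + 2 / ((((J + t) + 1 : ℕ)) : ℝ≥0∞)) := by
            rw [add_assoc]
        _ = (∑ i ∈ Finset.Ico J (J + t), (2 : ℝ≥0∞) / ((i * (i + 1) : ℕ) : ℝ≥0∞))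
            + 2 / (((J + t : ℕ)) : ℝ≥0∞) := by rw [two_div_step _ hx]
        _ = 2 / ((J : ℕ) : ℝ≥0∞) := ih



lemma sidon_two_diff {S : Set ℕ} (hS : IsSidon S) {x y u v : ℕ}
    (hx : x ∈ S) (hy : y ∈ S) (hu : u ∈ S) (hv : v ∈ S)
    (hxy : x < y) (huv : u < v) (h : y + u = v + x) : x = u ∧ y = v := by
  rcases le_total u y with hc | hc <;> rcases le_total x v with hd | hd
  · have := hS.2 u hu y hy x hx v hv hc hd (by omega : u + y = x + v)
    omega
  · have := hS.2 u hu y hy v hv x hx hc hd (by omega : u + y = v + x)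
    omega
  · have := hS.2 y hy u hu x hx v hv hc hd (by omega : y + u = x + v)
    omega
  · have := hS.2 y hy u hu v hv x hx hc hd (by omega : y + u = v + x)
    omega

lemma pair_repr {F : Finset ℕ} {P : Finset ℕ} (hP : P ∈ F.powersetCard 2) :
    ∃ x y, x < y ∧ x ∈ F ∧ y ∈ F ∧ P = {x, y} := by
  rw [Finset.mem_powersetCard] at hP
  obtain ⟨x, y, hne, rfl⟩ := Finset.card_eq_two.mp hP.2
  have hxF : x ∈ F := hP.1 (by simp)
  have hyF : y ∈ F := hP.1 (by simp)
  rcases lt_or_gt_of_ne hne with h | h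
  · exact ⟨x, y, h, hxF, hyF, rfl⟩
  · exact ⟨y, x, h, hyF, hxF, Finset.pair_comm x y⟩

lemma dfun_pair {x y : ℕ} (hxy : x < y) :
    2 * ({x, y} : Finset ℕ).sup id - ({x, y} : Finset ℕ).sum id = y - x := by
  have h1 : ({x, y} : Finset ℕ).sup id = y := by
    simp [Finset.sup_insert, Finset.sup_singleton, max_eq_right hxy.le]
  have h2 : ({x, y} : Finset ℕ).sum id = x + y := Finset.sum_pair (ne_of_lt hxy)
  rw [h1, h2]; omega

lemma sidon_diam {S : Set ℕ} (hS : IsSidon S) (F : Finset ℕ) (hFS : ∀ x ∈ F, x ∈ S)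
    {a b : ℕ} (hab : ∀ x ∈ F, a ≤ x ∧ x ≤ b) : F.card.choose 2 ≤ b - a := by
  classical
  have hmap : ∀ P ∈ F.powersetCard 2,
      (2 * P.sup id - P.sum id) ∈ Finset.Icc 1 (b - a) := by
    intro P hP
    obtain ⟨x, y, hxy, hxF, hyF, rfl⟩ := pair_repr hP
    rw [dfun_pair hxy, Finset.mem_Icc]
    have h1 := hab x hxF
    have h2 := hab y hyF
    omega
  have hinj : ∀ P ∈ F.powersetCard 2, ∀ Q ∈ F.powersetCard 2,
      (2 * P.sup id - P.sum id) = (2 * Q.sup id - Q.sum id) → P = Q := by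
    intro P hP Q hQ hPQ
    obtain ⟨x, y, hxy, hxF, hyF, rfl⟩ := pair_repr hP
    obtain ⟨u, v, huv, huF, hvF, rfl⟩ := pair_repr hQ
    rw [dfun_pair hxy, dfun_pair huv] at hPQ
    have heq : y + u = v + x := by omega
    have := sidon_two_diff hS (hFS x hxF) (hFS y hyF) (hFS u huF) (hFS v hvF) hxy huv heq
    rw [this.1, this.2]
  have hcard := Finset.card_le_card_of_injOn _ hmap hinj
  rw [Finset.card_powersetCard] at hcard
  simpa using hcard


lemma choose_two_mul (r : ℕ) : 2 * r.choose 2 = r * (r - 1) := by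
  rw [Nat.choose_two_right]
  have h : r * (r - 1) = (r - 1) * ((r - 1) + 1) := by
    cases r with
    | zero => simp
    | succ k => simp [Nat.succ_sub_one]; ring
  obtain ⟨w, hw⟩ := Nat.even_mul_succ_self (r - 1)
  omega

lemma tail_elem_lb {S : Set ℕ} (hS : IsSidon S) (n : ℕ) {s : ℕ} (hs : s ∈ S) (hns : n < s) :
    n + 1 + ((S ∩ Set.Ioc n s).ncard).choose 2 ≤ s := by
  have hfin : (S ∩ Set.Ioc n s).Finite :=
    Set.Finite.subset (Set.finite_Ioc n s) Set.inter_subset_right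
  have hcard : (S ∩ Set.Ioc n s).ncard = hfin.toFinset.card :=
    Set.ncard_eq_toFinset_card _ hfin
  have hsub : ∀ x ∈ hfin.toFinset, x ∈ S := by
    intro x hx
    exact ((hfin.mem_toFinset).mp hx).1
  have hbounds : ∀ x ∈ hfin.toFinset, n + 1 ≤ x ∧ x ≤ s := by
    intro x hx
    have := ((hfin.mem_toFinset).mp hx).2
    simp only [Set.mem_Ioc] at this
    omega
  have := sidon_diam hS hfin.toFinset hsub hbounds
  rw [← hcard] at this
  omega

lemma tail_rank_pos {S : Set ℕ} (n : ℕ) {s : ℕ} (hs : s ∈ S) (hns : n < s) :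
    1 ≤ (S ∩ Set.Ioc n s).ncard := by
  have hfin : (S ∩ Set.Ioc n s).Finite :=
    Set.Finite.subset (Set.finite_Ioc n s) Set.inter_subset_right
  have : s ∈ S ∩ Set.Ioc n s := ⟨hs, by simp [Set.mem_Ioc]; omega⟩
  have := (Set.ncard_pos hfin).mpr ⟨s, this⟩
  omega

lemma tail_sum_le {S : Set ℕ} (hS : IsSidon S) (n J : ℕ) (hJ : J ≠ 0) :
    (∑' s : ↥(S ∩ Set.Ioi n), (1 : ℝ≥0∞) / ((s : ℕ) : ℝ≥0∞)) ≤
      (J : ℝ≥0∞) / ((n + 1 : ℕ) : ℝ≥0∞) + 2 / (J : ℝ≥0∞) := by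
  classical
  set g : ℕ → ℝ≥0∞ := fun i =>
    if i < J then (1 : ℝ≥0∞) / ((n + 1 : ℕ) : ℝ≥0∞)
    else (2 : ℝ≥0∞) / ((i * (i + 1) : ℕ) : ℝ≥0∞) with hg
  set φ : ↥(S ∩ Set.Ioi n) → ℕ := fun s => (S ∩ Set.Ioc n (s : ℕ)).ncard - 1 with hφ
  have hmemS : ∀ s : ↥(S ∩ Set.Ioi n), (s : ℕ) ∈ S := fun s => s.2.1
  have hmemgt : ∀ s : ↥(S ∩ Set.Ioi n), n < (s : ℕ) := fun s => s.2.2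
  have hmono : ∀ s t : ↥(S ∩ Set.Ioi n), (s : ℕ) < (t : ℕ) →
      (S ∩ Set.Ioc n (s : ℕ)).ncard < (S ∩ Set.Ioc n (t : ℕ)).ncard := by
    intro s t hlt
    have hfin : (S ∩ Set.Ioc n (t : ℕ)).Finite :=
      Set.Finite.subset (Set.finite_Ioc n (t : ℕ)) Set.inter_subset_right
    refine Set.ncard_lt_ncard ?_ hfin
    constructor
    · intro x hx
      exact ⟨hx.1, hx.2.1, le_trans hx.2.2 (le_of_lt hlt)⟩
    · intro hcon
      have hmem := hcon ⟨hmemS t, hmemgt t, le_refl _⟩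
      have h2 := hmem.2.2
      omega
  have hinj : Function.Injective φ := by
    intro s t h
    have h1 := tail_rank_pos n (hmemS s) (hmemgt s)
    have h2 := tail_rank_pos n (hmemS t) (hmemgt t)
    have hst : (s : ℕ) = (t : ℕ) := by
      by_contra hne
      rcases lt_or_gt_of_ne hne with hlt | hlt
      · have := hmono s t hlt
        simp only [hφ] at h
        omega
      · have := hmono t s hlt
        simp only [hφ] at h
        omega
    exact Subtype.ext hst
  have hdom : ∀ s : ↥(S ∩ Set.Ioi n), (1 : ℝ≥0∞) / ((s : ℕ) : ℝ≥0∞) ≤ g (φ s) := by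
    intro s
    have hr1 := tail_rank_pos n (hmemS s) (hmemgt s)
    have hlb := tail_elem_lb hS n (hmemS s) (hmemgt s)
    set r := (S ∩ Set.Ioc n (s : ℕ)).ncard with hr
    have hch := choose_two_mul r
    have hφs : φ s = r - 1 := rfl
    by_cases hcase : r - 1 < J
    · have hgv : g (r - 1) = (1 : ℝ≥0∞) / ((n + 1 : ℕ) : ℝ≥0∞) := by
        simp only [hg, if_pos hcase]
      rw [hφs, hgv]
      have h' : ((1 : ℕ) : ℝ≥0∞) / ((s : ℕ) : ℝ≥0∞) ≤ ((1 : ℕ) : ℝ≥0∞) / ((n + 1 : ℕ) : ℝ≥0∞) :=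
        ediv_le_ediv (by omega) (by omega) (by omega)
      exact_mod_cast h'
    · have hgv : g (r - 1) = (2 : ℝ≥0∞) / (((r - 1) * ((r - 1) + 1) : ℕ) : ℝ≥0∞) := by
        simp only [hg, if_neg hcase]
      rw [hφs, hgv]
      have hrr : (r - 1) * ((r - 1) + 1) = r * (r - 1) := by
        cases r with
        | zero => simp
        | succ k => simp [Nat.succ_sub_one]; ring
      have hden : (r - 1) * ((r - 1) + 1) ≠ 0 := by
        apply Nat.mul_ne_zero <;> omega
      have hkey : 1 * ((r - 1) * ((r - 1) + 1)) ≤ 2 * (s : ℕ) := by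
        rw [one_mul, hrr, ← hch]
        omega
      have h' : ((1 : ℕ) : ℝ≥0∞) / ((s : ℕ) : ℝ≥0∞)
          ≤ ((2 : ℕ) : ℝ≥0∞) / (((r - 1) * ((r - 1) + 1) : ℕ) : ℝ≥0∞) :=
        ediv_le_ediv (by omega) hden hkey
      exact_mod_cast h'
  have step1 : (∑' s : ↥(S ∩ Set.Ioi n), (1 : ℝ≥0∞) / ((s : ℕ) : ℝ≥0∞)) ≤ ∑' i : ℕ, g i :=
    ENNReal.summable.tsum_le_tsum_of_inj φ hinj (fun c _ => zero_le) hdom ENNReal.summable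
  refine le_trans step1 ?_
  -- split g
  set g1 : ℕ → ℝ≥0∞ := fun i => if i < J then (1 : ℝ≥0∞) / ((n + 1 : ℕ) : ℝ≥0∞) else 0 with hg1
  set g2 : ℕ → ℝ≥0∞ := fun i =>
    if J ≤ i then (2 : ℝ≥0∞) / ((i * (i + 1) : ℕ) : ℝ≥0∞) else 0 with hg2
  have hgsplit : ∀ i, g i ≤ g1 i + g2 i := by
    intro i
    by_cases hcase : i < J
    · have e1 : g i = g1 i := by simp only [hg, hg1, if_pos hcase]
      rw [e1]; exact le_self_add
    · have e2 : g i = g2 i := by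
        simp only [hg, hg2, if_neg hcase, if_pos (by omega : J ≤ i)]
      rw [e2]; exact le_add_self
  have hs1 : (∑' i : ℕ, g1 i) = (J : ℝ≥0∞) / ((n + 1 : ℕ) : ℝ≥0∞) := by
    have hsupp : ∀ i ∉ Finset.range J, g1 i = 0 := by
      intro i hi
      simp only [Finset.mem_range, not_lt] at hi
      simp [hg1, if_neg (by omega : ¬ i < J)]
    rw [tsum_eq_sum hsupp]
    have : ∀ i ∈ Finset.range J, g1 i = (1 : ℝ≥0∞) / ((n + 1 : ℕ) : ℝ≥0∞) := by
      intro i hi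
      simp only [Finset.mem_range] at hi
      simp [hg1, if_pos hi]
    rw [Finset.sum_congr rfl this, Finset.sum_const, Finset.card_range, nsmul_eq_mul,
      mul_one_div]
  have hs2 : (∑' i : ℕ, g2 i) ≤ 2 / (J : ℝ≥0∞) := by
    rw [ENNReal.tsum_eq_iSup_sum]
    refine iSup_le fun fs => ?_
    obtain ⟨M, hM⟩ := fs.exists_nat_subset_range
    have hsub : ∑ i ∈ fs, g2 i ≤ ∑ i ∈ Finset.range M, g2 i :=
      Finset.sum_le_sum_of_subset hM
    refine le_trans hsub ?_
    by_cases hJM : J ≤ M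
    · have heq : ∑ i ∈ Finset.range M, g2 i
          = ∑ i ∈ Finset.Ico J M, (2 : ℝ≥0∞) / ((i * (i + 1) : ℕ) : ℝ≥0∞) := by
        have hst : Finset.Ico J M ⊆ Finset.range M := by
          intro x hx
          simp only [Finset.mem_Ico] at hx
          simp only [Finset.mem_range]
          omega
        have hzero : ∀ x ∈ Finset.range M, x ∉ Finset.Ico J M → g2 x = 0 := by
          intro x hx hnx
          simp only [Finset.mem_range] at hx
          simp only [Finset.mem_Ico, not_and, not_lt] at hnx
          simp only [hg2, ite_eq_right_iff]
          intro hJx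
          exfalso
          have := hnx hJx
          omega
        rw [← Finset.sum_subset hst hzero]
        refine Finset.sum_congr rfl ?_
        intro i hi
        simp only [Finset.mem_Ico] at hi
        simp [hg2, if_pos hi.1]
      rw [heq]
      have htel := tele J hJ (M - J)
      have hM' : J + (M - J) = M := by omega
      rw [hM'] at htel
      calc ∑ i ∈ Finset.Ico J M, (2 : ℝ≥0∞) / ((i * (i + 1) : ℕ) : ℝ≥0∞)
          ≤ (∑ i ∈ Finset.Ico J M, (2 : ℝ≥0∞) / ((i * (i + 1) : ℕ) : ℝ≥0∞))
            + 2 / ((M : ℕ) : ℝ≥0∞) := le_self_add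
        _ = 2 / (J : ℝ≥0∞) := htel
    · have : ∀ i ∈ Finset.range M, g2 i = 0 := by
        intro i hi
        simp only [Finset.mem_range] at hi
        simp [hg2]
        intro h
        omega
      rw [Finset.sum_congr rfl this]
      simp
  calc (∑' i : ℕ, g i) ≤ ∑' i : ℕ, (g1 i + g2 i) := ENNReal.tsum_le_tsum hgsplit
    _ = (∑' i : ℕ, g1 i) + ∑' i : ℕ, g2 i := ENNReal.tsum_add
    _ ≤ (J : ℝ≥0∞) / ((n + 1 : ℕ) : ℝ≥0∞) + 2 / (J : ℝ≥0∞) := by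
        rw [hs1]
        exact add_le_add_right hs2 _

def FinSidon (F : Finset ℕ) : Prop :=
  (∀ s ∈ F, 0 < s) ∧
    ∀ a ∈ F, ∀ b ∈ F, ∀ c ∈ F, ∀ d ∈ F, a ≤ b → c ≤ d → a + b = c + d → a = c ∧ b = d

lemma greedy_step (F : Finset ℕ) (hF : FinSidon F) (N : ℕ)
    (h : F.card * (F.card + 1) ^ 2 < 2 * N) :
    ∃ m, m ∉ F ∧ m ∈ Finset.Icc 1 N ∧ FinSidon (insert m F) := by
  classical
  set j := F.card with hj
  set P := F.powersetCard 2 with hP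
  set B := ((F ∪ (P ×ˢ F).image (fun q => q.1.sum id - q.2)) ∪
      (F ×ˢ F).image (fun q => q.1 + q.1 - q.2)) ∪ P.image (fun Q => Q.sum id / 2) with hB
  have hPcard : P.card = j.choose 2 := by rw [hP, Finset.card_powersetCard, hj]
  have hBcard : B.card ≤ j + j.choose 2 * j + j * j + j.choose 2 := by
    have h1 : ((P ×ˢ F).image (fun q : Finset ℕ × ℕ => q.1.sum id - q.2)).card
        ≤ j.choose 2 * j := by
      refine le_trans Finset.card_image_le ?_
      rw [Finset.card_product, hPcard]
    have h2 : ((F ×ˢ F).image (fun q : ℕ × ℕ => q.1 + q.1 - q.2)).card ≤ j * j := by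
      refine le_trans Finset.card_image_le ?_
      rw [Finset.card_product]
    have h3 : (P.image (fun Q : Finset ℕ => Q.sum id / 2)).card ≤ j.choose 2 := by
      refine le_trans Finset.card_image_le ?_
      rw [hPcard]
    calc B.card ≤ ((F ∪ (P ×ˢ F).image (fun q : Finset ℕ × ℕ => q.1.sum id - q.2)) ∪
          (F ×ˢ F).image (fun q : ℕ × ℕ => q.1 + q.1 - q.2)).card
          + (P.image (fun Q : Finset ℕ => Q.sum id / 2)).card := Finset.card_union_le _ _
      _ ≤ ((F ∪ (P ×ˢ F).image (fun q : Finset ℕ × ℕ => q.1.sum id - q.2)).card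
          + ((F ×ˢ F).image (fun q : ℕ × ℕ => q.1 + q.1 - q.2)).card)
          + (P.image (fun Q : Finset ℕ => Q.sum id / 2)).card := by
            exact Nat.add_le_add_right (Finset.card_union_le _ _) _
      _ ≤ ((F.card + ((P ×ˢ F).image (fun q : Finset ℕ × ℕ => q.1.sum id - q.2)).card)
          + ((F ×ˢ F).image (fun q : ℕ × ℕ => q.1 + q.1 - q.2)).card)
          + (P.image (fun Q : Finset ℕ => Q.sum id / 2)).card := by
            exact Nat.add_le_add_right (Nat.add_le_add_right (Finset.card_union_le _ _) _) _
      _ ≤ j + j.choose 2 * j + j * j + j.choose 2 := by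
            omega
  have hBN : B.card < N := by
    have hch := choose_two_mul j
    have key : 2 * (j + j.choose 2 * j + j * j + j.choose 2)
        = 2 * j + (2 * j.choose 2) * j + 2 * (j * j) + 2 * j.choose 2 := by ring
    have key2 : 2 * j + (j * (j - 1)) * j + 2 * (j * j) + j * (j - 1) = j * (j + 1) ^ 2 := by
      cases j with
      | zero => simp
      | succ i => simp [Nat.succ_sub_one]; ring
    rw [hch] at key
    have hfin : 2 * (j + j.choose 2 * j + j * j + j.choose 2) = j * (j + 1) ^ 2 := by
      rw [key, key2]
    linarith [hBcard, h, hfin]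
  have hnotsub : ¬ (Finset.Icc 1 N ⊆ B) := by
    intro hsub
    have := Finset.card_le_card hsub
    rw [Nat.card_Icc] at this
    omega
  obtain ⟨m, hmIcc, hmB⟩ := Finset.not_subset.mp hnotsub
  have hm1 : 1 ≤ m := (Finset.mem_Icc.mp hmIcc).1
  have hmF : m ∉ F := fun hm =>
    hmB (Finset.mem_union_left _ (Finset.mem_union_left _ (Finset.mem_union_left _ hm)))
  have hm2 : ∀ x ∈ F, ∀ c ∈ F, ∀ d ∈ F, c ≤ d → m + x ≠ c + d := by
    intro x hx c hc d hd hcd heq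
    rcases eq_or_lt_of_le hcd with rfl | hlt
    · refine hmB (Finset.mem_union_left _ (Finset.mem_union_right _ ?_))
      refine Finset.mem_image.mpr ⟨(c, x), Finset.mem_product.mpr ⟨hc, hx⟩, ?_⟩
      simp only
      omega
    · refine hmB (Finset.mem_union_left _ (Finset.mem_union_left _ (Finset.mem_union_right _ ?_)))
      have hpair : ({c, d} : Finset ℕ) ∈ P := by
        rw [hP, Finset.mem_powersetCard]
        constructor
        · intro z hz
          simp only [Finset.mem_insert, Finset.mem_singleton] at hz
          rcases hz with rfl | rfl
          · exact hc
          · exact hd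
        · exact Finset.card_pair (ne_of_lt hlt)
      refine Finset.mem_image.mpr ⟨({c, d}, x), Finset.mem_product.mpr ⟨hpair, hx⟩, ?_⟩
      simp only
      rw [Finset.sum_pair (ne_of_lt hlt)]
      simp only [id]
      omega
  have hm3 : ∀ c ∈ F, ∀ d ∈ F, c ≤ d → m + m ≠ c + d := by
    intro c hc d hd hcd heq
    rcases eq_or_lt_of_le hcd with rfl | hlt
    · have : m = c := by omega
      exact hmF (this ▸ hc)
    · refine hmB (Finset.mem_union_right _ ?_)
      have hpair : ({c, d} : Finset ℕ) ∈ P := by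
        rw [hP, Finset.mem_powersetCard]
        constructor
        · intro z hz
          simp only [Finset.mem_insert, Finset.mem_singleton] at hz
          rcases hz with rfl | rfl
          · exact hc
          · exact hd
        · exact Finset.card_pair (ne_of_lt hlt)
      refine Finset.mem_image.mpr ⟨{c, d}, hpair, ?_⟩
      rw [Finset.sum_pair (ne_of_lt hlt)]
      simp only [id]
      omega
  refine ⟨m, hmF, hmIcc, ?_, ?_⟩
  · intro s hs
    rcases Finset.mem_insert.mp hs with rfl | hs
    · omega
    · exact hF.1 s hs
  · intro a ha b hb c hc d hd hab hcd heq
    simp only [Finset.mem_insert] at ha hb hc hd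
    rcases ha with ha | ha <;> rcases hb with hb | hb <;>
      rcases hc with hc | hc <;> rcases hd with hd | hd
    · exact ⟨by omega, by omega⟩
    · have hh : d = m := by omega
      rw [hh] at hd; exact absurd hd hmF
    · have hh : c = m := by omega
      rw [hh] at hc; exact absurd hc hmF
    · refine absurd ?_ (hm3 c hc d hd hcd); omega
    · have hh : b = m := by omega
      rw [hh] at hb; exact absurd hb hmF
    · exact ⟨by omega, by omega⟩
    · have hh : b = m := by omega
      rw [hh] at hb; exact absurd hb hmF
    · refine absurd ?_ (hm2 b hb c hc d hd hcd); omega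
    · have hh : a = m := by omega
      rw [hh] at ha; exact absurd ha hmF
    · have hh : a = m := by omega
      rw [hh] at ha; exact absurd ha hmF
    · exact ⟨by omega, by omega⟩
    · refine absurd ?_ (hm2 a ha c hc d hd hcd); omega
    · refine absurd ?_ (hm3 a ha b hb hab); omega
    · refine absurd ?_ (hm2 d hd a ha b hb hab); omega
    · refine absurd ?_ (hm2 c hc a ha b hb hab); omega
    · exact hF.2 a ha b hb c hc d hd hab hcd heq

lemma greedy_ext (N : ℕ) : ∀ (t : ℕ) (F : Finset ℕ), FinSidon F →
    (∀ i < t, (F.card + i) * (F.card + i + 1) ^ 2 < 2 * N) →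
    ∃ G : Finset ℕ, FinSidon G ∧
      (∑ x ∈ F, (1 : ℝ≥0∞) / (x : ℝ≥0∞)) + (t : ℝ≥0∞) / (N : ℝ≥0∞)
        ≤ ∑ x ∈ G, (1 : ℝ≥0∞) / (x : ℝ≥0∞) := by
  intro t
  induction t with
  | zero =>
      intro F hF _
      exact ⟨F, hF, by simp⟩
  | succ t ih =>
      intro F hF hyp
      obtain ⟨m, hmF, hmIcc, hFm⟩ := greedy_step F hF N (by
        have := hyp 0 (by omega)
        simpa using this)
      have hmm := Finset.mem_Icc.mp hmIcc
      have hcard : (insert m F).card = F.card + 1 := Finset.card_insert_of_notMem hmF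
      obtain ⟨G, hG, hsum⟩ := ih (insert m F) hFm (by
        intro i hi
        rw [hcard]
        have h2 := hyp (i + 1) (by omega)
        have e : F.card + (i + 1) = F.card + 1 + i := by omega
        rw [e] at h2
        exact h2)
      refine ⟨G, hG, ?_⟩
      have hmN : (1 : ℝ≥0∞) / (N : ℝ≥0∞) ≤ 1 / (m : ℝ≥0∞) := by
        have h' : ((1 : ℕ) : ℝ≥0∞) / ((N : ℕ) : ℝ≥0∞) ≤ ((1 : ℕ) : ℝ≥0∞) / ((m : ℕ) : ℝ≥0∞) :=
          ediv_le_ediv (by omega) (by omega) (by omega)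
        exact_mod_cast h'
      calc (∑ x ∈ F, (1 : ℝ≥0∞) / (x : ℝ≥0∞)) + ((t + 1 : ℕ) : ℝ≥0∞) / (N : ℝ≥0∞)
          = ((∑ x ∈ F, (1 : ℝ≥0∞) / (x : ℝ≥0∞)) + 1 / (N : ℝ≥0∞)) + (t : ℝ≥0∞) / (N : ℝ≥0∞) := by
            rw [add_assoc, add_comm ((1 : ℝ≥0∞) / (N : ℝ≥0∞)), ENNReal.div_add_div_same]
            push_cast
            ring_nf
        _ ≤ ((∑ x ∈ F, (1 : ℝ≥0∞) / (x : ℝ≥0∞)) + 1 / (m : ℝ≥0∞)) + (t : ℝ≥0∞) / (N : ℝ≥0∞) := by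
            exact add_le_add_left (add_le_add_right hmN _) _
        _ = (∑ x ∈ insert m F, (1 : ℝ≥0∞) / (x : ℝ≥0∞)) + (t : ℝ≥0∞) / (N : ℝ≥0∞) := by
            rw [Finset.sum_insert hmF, add_comm ((1 : ℝ≥0∞) / (m : ℝ≥0∞))]
        _ ≤ ∑ x ∈ G, (1 : ℝ≥0∞) / (x : ℝ≥0∞) := hsum


def MC : Finset ℕ := {1,2,4,8,13,21,31,45,66,81,97,123,148,182,204,252}

set_option maxHeartbeats 2000000 in
lemma MC_sidon : FinSidon MC := ⟨by decide, by decide⟩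

lemma MC_sum_gt_two : (2 : ℝ≥0∞) < ∑ x ∈ MC, (1 : ℝ≥0∞) / (x : ℝ≥0∞) := by
  have hpos : ∀ x ∈ MC, x ≠ 0 := by decide
  have hterm : ∀ x ∈ MC, (1 : ℝ≥0∞) / (x : ℝ≥0∞) ≠ ⊤ := by
    intro x hx
    exact (ENNReal.div_lt_top (by simp) (by exact_mod_cast hpos x hx)).ne
  have hne : (∑ x ∈ MC, (1 : ℝ≥0∞) / (x : ℝ≥0∞)) ≠ ⊤ :=
    (ENNReal.sum_lt_top.mpr (fun a ha => lt_top_iff_ne_top.mpr (hterm a ha))).ne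
  rw [← ENNReal.toReal_lt_toReal (by simp) hne]
  rw [ENNReal.toReal_sum hterm]
  have hcongr : ∀ x ∈ MC, ((1 : ℝ≥0∞) / (x : ℝ≥0∞)).toReal = 1 / (x : ℝ) := by
    intro x hx
    rw [ENNReal.toReal_div]
    simp
  rw [Finset.sum_congr rfl hcongr]
  have h2 : (2 : ℝ≥0∞).toReal = 2 := by simp
  rw [h2, MC]
  rw [Finset.sum_insert (by decide), Finset.sum_insert (by decide), Finset.sum_insert (by decide),
    Finset.sum_insert (by decide), Finset.sum_insert (by decide), Finset.sum_insert (by decide),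
    Finset.sum_insert (by decide), Finset.sum_insert (by decide), Finset.sum_insert (by decide),
    Finset.sum_insert (by decide), Finset.sum_insert (by decide), Finset.sum_insert (by decide),
    Finset.sum_insert (by decide), Finset.sum_insert (by decide), Finset.sum_insert (by decide),
    Finset.sum_singleton]
  norm_num

lemma ddc_ge {T : Set ℕ} (hT : IsSidon T) :
    (∑' s : T, (1 : ℝ≥0∞) / (s : ℕ)) ≤ DDC :=
  le_iSup (fun p : {T : Set ℕ // IsSidon T} => ∑' s : p.1, (1 : ℝ≥0∞) / (s : ℕ))
    (⟨T, hT⟩ : {T : Set ℕ // IsSidon T})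

lemma finsidon_coe {F : Finset ℕ} (hF : FinSidon F) : IsSidon (↑F : Set ℕ) := by
  constructor
  · intro s hs
    exact hF.1 s (Finset.mem_coe.mp hs)
  · intro a ha b hb c hc d hd
    exact hF.2 a (Finset.mem_coe.mp ha) b (Finset.mem_coe.mp hb) c (Finset.mem_coe.mp hc)
      d (Finset.mem_coe.mp hd)

lemma finset_sum_le_ddc {G : Finset ℕ} (hG : FinSidon G) :
    (∑ x ∈ G, (1 : ℝ≥0∞) / (x : ℝ≥0∞)) ≤ DDC := by
  have h1 := ddc_ge (finsidon_coe hG)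
  rwa [Finset.tsum_subtype' G (fun x => (1 : ℝ≥0∞) / (x : ℝ≥0∞))] at h1

end SidonAux

open SidonAux

theorem counting_lower_bound_of_maximal (S : Set ℕ) (hS : IsSidon S)
    (hmax : (∑' s : S, (1 : ℝ≥0∞) / (s : ℕ)) = DDC)
    (n : ℕ) (hn : 0 < n) :
    (0.257 : ℝ) * (n : ℝ) ^ ((1 : ℝ) / 4) < Nat.card ↥(S ∩ Set.Icc 1 n) := by
  classical
  by_contra hcon
  push_neg at hcon
  have hfin : (S ∩ Set.Icc 1 n).Finite :=
    Set.Finite.subset (Set.finite_Icc 1 n) Set.inter_subset_right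
  set F₀ := hfin.toFinset with hF₀
  set k := F₀.card with hk
  have hcardeq : Nat.card ↥(S ∩ Set.Icc 1 n) = k := by
    rw [Nat.card_coe_set_eq, Set.ncard_eq_toFinset_card _ hfin]
  rw [hcardeq] at hcon
  -- decompose the sum over S
  have hdecomp : S = (S ∩ Set.Icc 1 n) ∪ (S ∩ Set.Ioi n) := by
    ext x
    constructor
    · intro hx
      rcases le_or_gt x n with hle | hlt
      · exact Or.inl ⟨hx, hS.1 x hx, hle⟩
      · exact Or.inr ⟨hx, hlt⟩
    · rintro (⟨hx, _⟩ | ⟨hx, _⟩) <;> exact hx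
  have hdisj : Disjoint (S ∩ Set.Icc 1 n) (S ∩ Set.Ioi n) := by
    rw [Set.disjoint_left]
    rintro x ⟨_, _, hle⟩ ⟨_, hgt⟩
    exact absurd hle (not_le.mpr hgt)
  have hsplit : (∑' s : ↥S, (1 : ℝ≥0∞) / ((s : ℕ) : ℝ≥0∞))
      = (∑' s : ↥(S ∩ Set.Icc 1 n), (1 : ℝ≥0∞) / ((s : ℕ) : ℝ≥0∞))
        + ∑' s : ↥(S ∩ Set.Ioi n), (1 : ℝ≥0∞) / ((s : ℕ) : ℝ≥0∞) := by
    conv_lhs => rw [hdecomp]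
    exact ENNReal.summable.tsum_union_disjoint (f := fun m : ℕ => (1 : ℝ≥0∞) / (m : ℝ≥0∞)) hdisj ENNReal.summable
  have hcoe : S ∩ Set.Icc 1 n = (↑F₀ : Set ℕ) := (hfin.coe_toFinset).symm
  have hhead : (∑' s : ↥(S ∩ Set.Icc 1 n), (1 : ℝ≥0∞) / ((s : ℕ) : ℝ≥0∞))
      = ∑ x ∈ F₀, (1 : ℝ≥0∞) / (x : ℝ≥0∞) := by
    rw [hcoe]
    exact Finset.tsum_subtype' F₀ (fun x => (1 : ℝ≥0∞) / (x : ℝ≥0∞))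
  have hDDCsplit : DDC = (∑ x ∈ F₀, (1 : ℝ≥0∞) / (x : ℝ≥0∞))
      + ∑' s : ↥(S ∩ Set.Ioi n), (1 : ℝ≥0∞) / ((s : ℕ) : ℝ≥0∞) := by
    rw [← hmax, hsplit, hhead]
  rcases Nat.eq_zero_or_pos k with hk0 | hk1
  · -- k = 0 : impossible since DDC > 2 but the tail sum is at most 2
    have hF0empty : F₀ = ∅ := Finset.card_eq_zero.mp hk0
    have hDDC0 : DDC = ∑' s : ↥(S ∩ Set.Ioi n), (1 : ℝ≥0∞) / ((s : ℕ) : ℝ≥0∞) := by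
      rw [hDDCsplit, hF0empty]
      simp
    have htail_le := tail_sum_le hS n 2 (by omega)
    have hb1 : ((2 : ℕ) : ℝ≥0∞) / ((n + 1 : ℕ) : ℝ≥0∞) ≤ ((1 : ℕ) : ℝ≥0∞) / ((1 : ℕ) : ℝ≥0∞) :=
      ediv_le_ediv (by omega) (by omega) (by omega)
    have hb2 : (2 : ℝ≥0∞) / ((2 : ℕ) : ℝ≥0∞) = 1 := by
      rw [show ((2 : ℕ) : ℝ≥0∞) = (2 : ℝ≥0∞) by norm_cast]
      exact ENNReal.div_self (by norm_num) (by norm_num)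
    have hDDCle : DDC ≤ 2 := by
      rw [hDDC0]
      refine le_trans htail_le ?_
      calc ((2 : ℕ) : ℝ≥0∞) / ((n + 1 : ℕ) : ℝ≥0∞) + 2 / ((2 : ℕ) : ℝ≥0∞)
          ≤ ((1 : ℕ) : ℝ≥0∞) / ((1 : ℕ) : ℝ≥0∞) + 1 := by
            rw [hb2]
            exact add_le_add_left hb1 _
        _ = 2 := by norm_num
    have hgt := MC_sum_gt_two
    have hle := finset_sum_le_ddc MC_sidon
    exact absurd (lt_of_lt_of_le hgt (le_trans hle hDDCle)) (by norm_num)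
  · -- k ≥ 1
    have hFS : FinSidon F₀ := by
      constructor
      · intro s hs
        exact hS.1 s ((hfin.mem_toFinset.mp hs)).1
      · intro a ha b hb c hc d hd
        exact hS.2 a (hfin.mem_toFinset.mp ha).1 b (hfin.mem_toFinset.mp hb).1
          c (hfin.mem_toFinset.mp hc).1 d (hfin.mem_toFinset.mp hd).1
    obtain ⟨G, hG, hsum⟩ := greedy_ext (4 * k ^ 3) k F₀ hFS (by
      intro i hi
      rw [← hk]
      calc (k + i) * (k + i + 1) ^ 2 < (k + i + 1) * (k + i + 1) ^ 2 := by
            have hp : 0 < (k + i + 1) ^ 2 := by apply pow_pos; omega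
            exact (Nat.mul_lt_mul_right hp).mpr (by omega)
        _ = (k + i + 1) ^ 3 := by ring
        _ ≤ (2 * k) ^ 3 := Nat.pow_le_pow_left (by omega) 3
        _ = 2 * (4 * k ^ 3) := by ring)
    have hchain : (∑ x ∈ F₀, (1 : ℝ≥0∞) / (x : ℝ≥0∞)) + (k : ℝ≥0∞) / ((4 * k ^ 3 : ℕ) : ℝ≥0∞)
        ≤ DDC := le_trans hsum (finset_sum_le_ddc hG)
    have hheadne : (∑ x ∈ F₀, (1 : ℝ≥0∞) / (x : ℝ≥0∞)) ≠ ⊤ := by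
      have hb : ∀ x ∈ F₀, (1 : ℝ≥0∞) / (x : ℝ≥0∞) ≠ ⊤ := by
        intro x hx
        have : x ≠ 0 := by
          have := hFS.1 x hx
          omega
        exact (ENNReal.div_lt_top (by simp) (by exact_mod_cast this)).ne
      exact (ENNReal.sum_lt_top.mpr (fun a ha => lt_top_iff_ne_top.mpr (hb a ha))).ne
    have htail_ge : (k : ℝ≥0∞) / ((4 * k ^ 3 : ℕ) : ℝ≥0∞)
        ≤ ∑' s : ↥(S ∩ Set.Ioi n), (1 : ℝ≥0∞) / ((s : ℕ) : ℝ≥0∞) := by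
      rw [hDDCsplit] at hchain
      exact (ENNReal.add_le_add_iff_left hheadne).mp hchain
    have htail_le := tail_sum_le hS n (21 * k ^ 2) (by have := pow_pos hk1 2; omega)
    have hcomb := le_trans htail_ge htail_le
    -- convert to a real inequality
    have hden1 : (4 * k ^ 3 : ℕ) ≠ 0 := by have := pow_pos hk1 3; omega
    have hden2 : (21 * k ^ 2 : ℕ) ≠ 0 := by have := pow_pos hk1 2; omega
    have hne1 : ((21 * k ^ 2 : ℕ) : ℝ≥0∞) / ((n + 1 : ℕ) : ℝ≥0∞) ≠ ⊤ :=
      (ENNReal.div_lt_top (ncast_ne_top _) (by exact_mod_cast (by omega : (n + 1 : ℕ) ≠ 0))).ne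
    have hne2 : (2 : ℝ≥0∞) / ((21 * k ^ 2 : ℕ) : ℝ≥0∞) ≠ ⊤ :=
      (ENNReal.div_lt_top (by simp) (by exact_mod_cast hden2)).ne
    have hneL : (k : ℝ≥0∞) / ((4 * k ^ 3 : ℕ) : ℝ≥0∞) ≠ ⊤ :=
      (ENNReal.div_lt_top (ncast_ne_top _) (by exact_mod_cast hden1)).ne
    have hR := (ENNReal.toReal_le_toReal hneL (by
      exact ENNReal.add_ne_top.mpr ⟨hne1, hne2⟩)).mpr hcomb
    rw [ENNReal.toReal_add hne1 hne2, ENNReal.toReal_div, ENNReal.toReal_div,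
      ENNReal.toReal_div] at hR
    simp only [ENNReal.toReal_natCast, ENNReal.toReal_ofNat] at hR
    push_cast at hR
    -- now work over the reals
    set K := (k : ℝ) with hK
    have hK1 : (1 : ℝ) ≤ K := by
      rw [hK]; exact_mod_cast hk1
    have hN1 : (1 : ℝ) ≤ (n : ℝ) := by exact_mod_cast hn
    -- k^4 bound from the negated conclusion
    have hnn : (0 : ℝ) ≤ (n : ℝ) := by positivity
    have hq : ((n : ℝ) ^ ((1 : ℝ) / 4)) ^ (4 : ℕ) = (n : ℝ) := by
      rw [← Real.rpow_natCast ((n : ℝ) ^ ((1 : ℝ) / 4)) 4, ← Real.rpow_mul hnn]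
      norm_num
    have hk4 : K ^ 4 ≤ (0.257 : ℝ) ^ 4 * (n : ℝ) := by
      have h1 : K ^ 4 ≤ ((0.257 : ℝ) * (n : ℝ) ^ ((1 : ℝ) / 4)) ^ 4 := by
        apply pow_le_pow_left₀ (by linarith) hcon
      rw [mul_pow, hq] at h1
      exact h1
    have hpow : (10 : ℝ) ^ 12 * K ^ 4 ≤ 4362470401 * (n : ℝ) := by nlinarith [hk4]
    -- final contradiction
    have hKpos : (0 : ℝ) < K := by linarith
    have hNpos : (0 : ℝ) < (n : ℝ) + 1 := by linarith
    have e0 : K / (4 * K ^ 3) = 1 / (4 * K ^ 2) := by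
      field_simp
    rw [e0] at hR
    have hid : 2 / (21 * K ^ 2) + 13 / (84 * K ^ 2) = 1 / (4 * K ^ 2) := by
      field_simp
      ring
    have h3 : 13 / (84 * K ^ 2) ≤ 21 * K ^ 2 / ((n : ℝ) + 1) := by linarith
    rw [div_le_div_iff₀ (by have := pow_pos hKpos 2; linarith) hNpos] at h3
    nlinarith [h3, hpow, hN1, hK1]
end

section
/- Let S be a Sidon set of positive integers such that ∑_{s∈S} 1/s = DDC (such S exists). Then limsup_{n→∞} S(n)/n^{1/3} > 0. -/
open scoped ENNReal

lemma sidon_key {S : Set ℕ} (h : IsSidon S) :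
    ∀ a ∈ S, ∀ b ∈ S, ∀ c ∈ S, ∀ d ∈ S, a + b = c + d → a = c ∨ a = d := by
  intro a ha b hb c hc d hd he
  rcases le_total a b with hab | hab <;> rcases le_total c d with hcd | hcd
  · exact Or.inl (h.2 a ha b hb c hc d hd hab hcd he).1
  · exact Or.inr (h.2 a ha b hb d hd c hc hab hcd (by omega)).1
  · have := h.2 b hb a ha c hc d hd hab hcd (by omega)
    omega
  · have := h.2 b hb a ha d hd c hc hab hcd (by omega)
    omega

lemma sidon_of_key {S : Set ℕ} (hpos : ∀ s ∈ S, 0 < s)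
    (h : ∀ a ∈ S, ∀ b ∈ S, ∀ c ∈ S, ∀ d ∈ S, a + b = c + d → a = c ∨ a = d) :
    IsSidon S := by
  refine ⟨hpos, fun a ha b hb c hc d hd hab hcd he => ?_⟩
  rcases h a ha b hb c hc d hd he with h1 | h1 <;> omega

/-- Erdős–Turán style quadratic Sidon map. -/
def etF (p i : ℕ) : ℕ := 2 * p * i + i ^ 2 % p + 1

lemma etF_lt {p : ℕ} (hp : 0 < p) {i j : ℕ} (hij : i < j) : etF p i < etF p j := by
  have h1 : i ^ 2 % p < p := Nat.mod_lt _ hp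
  have h2 : 2 * p * (i + 1) ≤ 2 * p * j := Nat.mul_le_mul_left _ (by omega)
  have h3 : 2 * p * (i + 1) = 2 * p * i + 2 * p := by ring
  unfold etF
  omega

lemma etF_key {p : ℕ} (hp : Nat.Prime p) (hodd : p ≠ 2) {i j k l : ℕ}
    (hi : i < p) (hj : j < p) (hk : k < p) (hl : l < p)
    (he : etF p i + etF p j = etF p k + etF p l) : i = k ∨ i = l := by
  haveI : Fact p.Prime := ⟨hp⟩
  have hp0 : 0 < p := hp.pos
  have h2p : 0 < 2 * p := by omega
  have hri : i ^ 2 % p < p := Nat.mod_lt _ hp0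
  have hrj : j ^ 2 % p < p := Nat.mod_lt _ hp0
  have hrk : k ^ 2 % p < p := Nat.mod_lt _ hp0
  have hrl : l ^ 2 % p < p := Nat.mod_lt _ hp0
  have he' : 2 * p * (i + j) + (i ^ 2 % p + j ^ 2 % p)
      = 2 * p * (k + l) + (k ^ 2 % p + l ^ 2 % p) := by
    unfold etF at he
    have e1 : 2 * p * (i + j) = 2 * p * i + 2 * p * j := by ring
    have e2 : 2 * p * (k + l) = 2 * p * k + 2 * p * l := by ring
    omega
  -- uniqueness of division by 2p
  have hsum : i + j = k + l := by
    have d1 : (2 * p * (i + j) + (i ^ 2 % p + j ^ 2 % p)) / (2 * p) = i + j := by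
      rw [Nat.mul_add_div h2p, Nat.div_eq_of_lt (by omega)]
      omega
    have d2 : (2 * p * (k + l) + (k ^ 2 % p + l ^ 2 % p)) / (2 * p) = k + l := by
      rw [Nat.mul_add_div h2p, Nat.div_eq_of_lt (by omega)]
      omega
    rw [← d1, ← d2, he']
  have hres : i ^ 2 % p + j ^ 2 % p = k ^ 2 % p + l ^ 2 % p := by
    have e1 : 2 * p * (i + j) = 2 * p * (k + l) := by rw [hsum]
    omega
  -- pass to ZMod p
  set x : ZMod p := (i : ZMod p)
  set y : ZMod p := (j : ZMod p)
  set z : ZMod p := (k : ZMod p)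
  set w : ZMod p := (l : ZMod p)
  have hs : x + y = z + w := by
    have := congrArg (fun n : ℕ => (n : ZMod p)) hsum
    push_cast at this
    exact this
  have hq : x ^ 2 + y ^ 2 = z ^ 2 + w ^ 2 := by
    have := congrArg (fun n : ℕ => (n : ZMod p)) hres
    push_cast [ZMod.natCast_mod] at this
    exact this
  have h2ne : (2 : ZMod p) ≠ 0 := by
    have : ((2 : ℕ) : ZMod p) ≠ 0 := by
      rw [Ne, ZMod.natCast_eq_zero_iff]
      intro hdvd
      exact hodd ((Nat.prime_dvd_prime_iff_eq hp Nat.prime_two).mp hdvd)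
    simpa using this
  have hfact : (2 : ZMod p) * ((x - z) * (x - w)) = 0 := by
    linear_combination (x - y - z - w) * hs + hq
  have hzero : (x - z) * (x - w) = 0 := by
    rcases mul_eq_zero.mp hfact with h | h
    · exact absurd h h2ne
    · exact h
  rcases mul_eq_zero.mp hzero with h | h
  · left
    have : x = z := sub_eq_zero.mp h
    have := congrArg ZMod.val this
    rwa [ZMod.val_natCast_of_lt hi, ZMod.val_natCast_of_lt hk] at this
  · right
    have : x = w := sub_eq_zero.mp h
    have := congrArg ZMod.val this
    rwa [ZMod.val_natCast_of_lt hi, ZMod.val_natCast_of_lt hl] at this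

noncomputable def g : ℕ → ℝ≥0∞ := fun s => (1 : ℝ≥0∞) / s

lemma two_mul_inv_two : (2 : ℝ≥0∞) * 2⁻¹ = 1 :=
  ENNReal.mul_inv_cancel two_ne_zero ENNReal.ofNat_ne_top

lemma pow2_mul_invpow2 {a b : ℕ} (h : a ≤ b) :
    (2 : ℝ≥0∞) ^ a * (2 : ℝ≥0∞)⁻¹ ^ b = (2 : ℝ≥0∞)⁻¹ ^ (b - a) := by
  have hb : b = a + (b - a) := by omega
  rw [hb, pow_add, ← mul_assoc, ← mul_pow, two_mul_inv_two, one_pow, one_mul]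
  congr 1
  omega

lemma tsum_set_finite (f : ℕ → ℝ≥0∞) (s : Set ℕ) (hs : s.Finite) :
    ∑' x : s, f x = ∑ x ∈ hs.toFinset, f x := by
  conv_lhs => rw [← Set.Finite.coe_toFinset hs]
  exact Finset.tsum_subtype _ f

-- tail bound: given counting facts, sum over S ∩ Ioi (8^K) ≤ (2⁻¹)^(2K+1)
lemma tail_bound_s5 (S : Set ℕ) (hpos : ∀ s ∈ S, 0 < s) (K : ℕ) (hK : 2 ≤ K)
    (hcard : ∀ k, K ≤ k → 8 * Nat.card ↥(S ∩ Set.Icc 1 (8 ^ k)) < 2 ^ k) :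
    ∑' x : ↥(S ∩ Set.Ioi (8 ^ K)), g x ≤ (2 : ℝ≥0∞)⁻¹ ^ (2 * K + 1) := by
  set t : ℕ → Set ℕ := fun j => S ∩ Set.Ico (8 ^ (K + j)) (8 ^ (K + j + 1)) with ht
  have hsub : (S ∩ Set.Ioi (8 ^ K)) ⊆ ⋃ j, t j := by
    intro x hx
    obtain ⟨hxS, hxm⟩ := hx
    have hx0 : x ≠ 0 := by
      have := hpos x hxS
      omega
    have hlog1 : 8 ^ (Nat.log 8 x) ≤ x := Nat.pow_log_le_self 8 hx0
    have hlog2 : x < 8 ^ (Nat.log 8 x + 1) := Nat.lt_pow_succ_log_self (by norm_num) x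
    have hKlog : K ≤ Nat.log 8 x := by
      by_contra hcon
      push_neg at hcon
      have : Nat.log 8 x + 1 ≤ K := hcon
      have := Nat.pow_le_pow_right (show 1 ≤ 8 by norm_num) this
      simp only [Set.mem_Ioi] at hxm
      omega
    refine Set.mem_iUnion.mpr ⟨Nat.log 8 x - K, hxS, ?_, ?_⟩
    · have : K + (Nat.log 8 x - K) = Nat.log 8 x := by omega
      rw [this]
      exact hlog1
    · have : K + (Nat.log 8 x - K) + 1 = Nat.log 8 x + 1 := by omega
      rw [this]
      exact hlog2
  have hblock : ∀ j : ℕ, ∑' x : ↥(t j), g x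
      ≤ (2 : ℝ≥0∞) ^ (K + j - 2) * (2 : ℝ≥0∞)⁻¹ ^ (3 * (K + j)) := by
    intro j
    have hfin : (t j).Finite := (Set.finite_Ico _ _).inter_of_right S
    rw [tsum_set_finite g _ hfin]
    have hterm : ∀ x ∈ hfin.toFinset, g x ≤ (2 : ℝ≥0∞)⁻¹ ^ (3 * (K + j)) := by
      intro x hx
      rw [Set.Finite.mem_toFinset] at hx
      obtain ⟨hxS, hx1, hx2⟩ := hx
      have hle : ((2 : ℕ) ^ (3 * (K + j)) : ℝ≥0∞) ≤ (x : ℝ≥0∞) := by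
        have h8 : (8 : ℕ) ^ (K + j) = 2 ^ (3 * (K + j)) := by
          rw [show (8 : ℕ) = 2 ^ 3 by norm_num, ← pow_mul]
        exact_mod_cast Nat.cast_le.mpr (h8 ▸ hx1)
      rw [g, ENNReal.div_eq_inv_mul, mul_one, ← ENNReal.inv_pow]
      apply ENNReal.inv_le_inv.mpr
      exact_mod_cast hle
    have hcardb : hfin.toFinset.card ≤ 2 ^ (K + j - 2) := by
      have hsubb : hfin.toFinset ⊆ ((Set.finite_Icc 1 (8 ^ (K + j + 1))).inter_of_right S).toFinset := by
        intro x hx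
        rw [Set.Finite.mem_toFinset] at hx ⊢
        obtain ⟨hxS, hx1, hx2⟩ := hx
        have := hpos x hxS
        exact ⟨hxS, by omega, by omega⟩
      have h1 : hfin.toFinset.card ≤ Nat.card ↥(S ∩ Set.Icc 1 (8 ^ (K + j + 1))) := by
        rw [Nat.card_coe_set_eq, Set.ncard_eq_toFinset_card _
          ((Set.finite_Icc 1 (8 ^ (K + j + 1))).inter_of_right S)]
        exact Finset.card_le_card hsubb
      have h2 := hcard (K + j + 1) (by omega)
      have h3 : (2 : ℕ) ^ (K + j + 1) = 2 ^ (K + j - 2) * 8 := by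
        rw [show (8 : ℕ) = 2 ^ 3 by norm_num, ← pow_add]
        congr 1
        omega
      omega
    calc ∑ x ∈ hfin.toFinset, g x
        ≤ hfin.toFinset.card • ((2 : ℝ≥0∞)⁻¹ ^ (3 * (K + j))) := Finset.sum_le_card_nsmul _ _ _ hterm
    _ = (hfin.toFinset.card : ℝ≥0∞) * (2 : ℝ≥0∞)⁻¹ ^ (3 * (K + j)) := by
        rw [nsmul_eq_mul]
    _ ≤ (2 : ℝ≥0∞) ^ (K + j - 2) * (2 : ℝ≥0∞)⁻¹ ^ (3 * (K + j)) := by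
        apply mul_le_mul_left
        have : ((2 : ℕ) ^ (K + j - 2) : ℝ≥0∞) = (2 : ℝ≥0∞) ^ (K + j - 2) := by push_cast; ring
        rw [← this]
        exact_mod_cast Nat.cast_le.mpr hcardb
  calc ∑' x : ↥(S ∩ Set.Ioi (8 ^ K)), g x
      ≤ ∑' x : ↥(⋃ j, t j), g x := ENNReal.tsum_mono_subtype g hsub
  _ ≤ ∑' j, ∑' x : ↥(t j), g x := ENNReal.tsum_iUnion_le_tsum g t
  _ ≤ ∑' j : ℕ, (2 : ℝ≥0∞) ^ (K + j - 2) * (2 : ℝ≥0∞)⁻¹ ^ (3 * (K + j)) :=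
      ENNReal.tsum_le_tsum hblock
  _ = ∑' j : ℕ, ((2 : ℝ≥0∞) ^ (K - 2) * (2 : ℝ≥0∞)⁻¹ ^ (3 * K)) * ((2 : ℝ≥0∞)⁻¹ ^ 2) ^ j := by
      apply tsum_congr
      intro j
      have h1 : K + j - 2 = (K - 2) + j := by omega
      have h2 : 3 * (K + j) = 3 * K + 3 * j := by ring
      rw [h1, h2, pow_add, pow_add]
      have h3 : (2 : ℝ≥0∞) ^ j * (2 : ℝ≥0∞)⁻¹ ^ (3 * j) = ((2 : ℝ≥0∞)⁻¹ ^ 2) ^ j := by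
        rw [pow2_mul_invpow2 (by omega)]
        have h4 : 3 * j - j = 2 * j := by omega
        rw [h4, pow_mul]
      rw [← h3]
      ring
  _ ≤ (2 : ℝ≥0∞)⁻¹ ^ (2 * K + 1) := by
      rw [ENNReal.tsum_mul_left, ENNReal.tsum_geometric]
      have hgeo : (1 - (2 : ℝ≥0∞)⁻¹ ^ 2)⁻¹ ≤ 2 := by
        have h1 : (2 : ℝ≥0∞)⁻¹ ≤ 1 - (2 : ℝ≥0∞)⁻¹ ^ 2 := by
          have h2 : (2 : ℝ≥0∞)⁻¹ ^ 2 ≤ 2⁻¹ := by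
            rw [pow_two]
            calc (2 : ℝ≥0∞)⁻¹ * 2⁻¹ ≤ 1 * 2⁻¹ := by
                  apply mul_le_mul_left
                  exact ENNReal.inv_le_one.mpr (by norm_num)
            _ = 2⁻¹ := one_mul _
          have h3 : (2 : ℝ≥0∞)⁻¹ + (2 : ℝ≥0∞)⁻¹ ^ 2 ≤ 1 := by
            calc (2 : ℝ≥0∞)⁻¹ + (2 : ℝ≥0∞)⁻¹ ^ 2 ≤ 2⁻¹ + 2⁻¹ := add_le_add_right h2 _
            _ = 1 := ENNReal.inv_two_add_inv_two
          exact ENNReal.le_sub_of_add_le_left (by norm_num) (by rwa [add_comm] at h3)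
        calc (1 - (2 : ℝ≥0∞)⁻¹ ^ 2)⁻¹ ≤ ((2 : ℝ≥0∞)⁻¹)⁻¹ := ENNReal.inv_le_inv.mpr h1
        _ = 2 := inv_inv _
      calc (2:ℝ≥0∞) ^ (K - 2) * (2:ℝ≥0∞)⁻¹ ^ (3*K) * (1 - (2:ℝ≥0∞)⁻¹ ^ 2)⁻¹
          ≤ (2:ℝ≥0∞) ^ (K - 2) * (2:ℝ≥0∞)⁻¹ ^ (3*K) * 2 := by
            exact mul_le_mul_right hgeo _
      _ = (2:ℝ≥0∞) ^ (K - 1) * (2:ℝ≥0∞)⁻¹ ^ (3*K) := by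
            rw [mul_comm ((2:ℝ≥0∞) ^ (K - 2)) _, mul_assoc, ← pow_succ]
            have : K - 2 + 1 = K - 1 := by omega
            rw [this, mul_comm]
      _ = (2:ℝ≥0∞)⁻¹ ^ (2*K + 1) := by
            rw [pow2_mul_invpow2 (by omega)]
            congr 1
            omega

lemma sidon_extend (S : Set ℕ) (hS : IsSidon S) (m p : ℕ) (hp : Nat.Prime p)
    (hp2 : p ≠ 2) :
    ∃ B : Finset ℕ,
      (∀ b ∈ B, 2 * m + 2 * p * p < b ∧ b ≤ 2 * m + 4 * p * p) ∧
      p ≤ B.card + Nat.card ↥(S ∩ Set.Icc 1 m) * Nat.card ↥(S ∩ Set.Icc 1 m) ∧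
      IsSidon ((S ∩ Set.Icc 1 m) ∪ ↑B) := by
  have hp0 : 0 < p := hp.pos
  have Hfin : (S ∩ Set.Icc 1 m).Finite := (Set.finite_Icc 1 m).inter_of_right S
  set Hf : Finset ℕ := Hfin.toFinset with hHf
  set s0 : ℕ := Hf.card with hs0def
  have hs0 : Nat.card ↥(S ∩ Set.Icc 1 m) = s0 := by
    rw [Nat.card_coe_set_eq, Set.ncard_eq_toFinset_card _ Hfin]
  set L : ℕ := 2 * p * p with hL
  set M : ℕ := 2 * m + L with hM
  set A : Finset ℕ := (Finset.range p).image (etF p) with hA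
  have hmemA : ∀ a, a ∈ A ↔ ∃ i, i < p ∧ etF p i = a := by
    intro a
    simp [hA, Finset.mem_image, Finset.mem_range]
  have hAkey : ∀ a ∈ A, ∀ b ∈ A, ∀ c ∈ A, ∀ d ∈ A,
      a + b = c + d → a = c ∨ a = d := by
    intro a ha b hb c hc d hd he
    obtain ⟨i, hi, rfl⟩ := (hmemA a).mp ha
    obtain ⟨j, hj, rfl⟩ := (hmemA b).mp hb
    obtain ⟨k, hk, rfl⟩ := (hmemA c).mp hc
    obtain ⟨l, hl, rfl⟩ := (hmemA d).mp hd
    rcases etF_key hp hp2 hi hj hk hl he with h | h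
    · exact Or.inl (by rw [h])
    · exact Or.inr (by rw [h])
  have hbound : ∀ a ∈ A, 1 ≤ a ∧ a ≤ L := by
    intro a ha
    obtain ⟨i, hi, rfl⟩ := (hmemA a).mp ha
    have h1 : i ^ 2 % p < p := Nat.mod_lt _ hp0
    have h2 : 2 * p * i ≤ 2 * p * (p - 1) := Nat.mul_le_mul_left _ (by omega)
    have h3 : 2 * p * (p - 1) + 2 * p = 2 * p * p := by
      have hpp : p - 1 + 1 = p := by omega
      calc 2 * p * (p - 1) + 2 * p = 2 * p * (p - 1 + 1) := by ring
      _ = 2 * p * p := by rw [hpp]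
    unfold etF
    omega
  have hAcard : A.card = p := by
    rw [hA, Finset.card_image_of_injOn, Finset.card_range]
    intro i hi j hj hij
    by_contra hne
    rcases Nat.lt_or_ge i j with h | h
    · exact absurd hij (Nat.ne_of_lt (etF_lt hp0 h))
    · have : j < i := by omega
      exact absurd hij.symm (Nat.ne_of_lt (etF_lt hp0 this))
  set D : Finset ℕ := ((Hf ×ˢ Hf).filter fun q => q.1 < q.2).image
      (fun q => q.2 - q.1) with hD
  have hDpos : ∀ d ∈ D, 0 < d := by
    intro d hd
    simp only [hD, Finset.mem_image, Finset.mem_filter] at hd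
    obtain ⟨⟨x, y⟩, ⟨_, hlt⟩, rfl⟩ := hd
    omega
  have hDmem : ∀ h1 h2, h1 ∈ S ∩ Set.Icc 1 m → h2 ∈ S ∩ Set.Icc 1 m → h1 < h2 →
      h2 - h1 ∈ D := by
    intro h1 h2 hh1 hh2 hlt
    simp only [hD, Finset.mem_image, Finset.mem_filter, Finset.mem_product]
    exact ⟨(h1, h2), ⟨⟨Hfin.mem_toFinset.mpr hh1, Hfin.mem_toFinset.mpr hh2⟩, hlt⟩, rfl⟩
  have hDcard : D.card ≤ s0 * s0 := by
    calc D.card ≤ ((Hf ×ˢ Hf).filter fun q => q.1 < q.2).card := Finset.card_image_le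
    _ ≤ (Hf ×ˢ Hf).card := Finset.card_filter_le _ _
    _ = s0 * s0 := by rw [Finset.card_product]
  set bad : Finset ℕ := A.filter (fun a => ∃ a' ∈ A, ∃ d ∈ D, a = a' + d) with hbad
  have hbadcard : bad.card ≤ s0 * s0 := by
    have hsub : bad ⊆ D.biUnion (fun d => A.filter fun a => ∃ a' ∈ A, a = a' + d) := by
      intro a ha
      simp only [hbad, Finset.mem_filter] at ha
      obtain ⟨haA, a', ha', d, hd, he⟩ := ha
      simp only [Finset.mem_biUnion, Finset.mem_filter]
      exact ⟨d, hd, haA, a', ha', he⟩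
    have hone : ∀ d ∈ D, (A.filter fun a => ∃ a' ∈ A, a = a' + d).card ≤ 1 := by
      intro d hd
      rw [Finset.card_le_one]
      intro a1 h1 a2 h2
      simp only [Finset.mem_filter] at h1 h2
      obtain ⟨ha1, a1', ha1', he1⟩ := h1
      obtain ⟨ha2, a2', ha2', he2⟩ := h2
      have hd0 : 0 < d := hDpos d hd
      rcases hAkey a1 ha1 a2' ha2' a2 ha2 a1' ha1' (by omega) with h | h
      · exact h
      · omega
    calc bad.card ≤ (D.biUnion fun d => A.filter fun a => ∃ a' ∈ A, a = a' + d).card :=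
          Finset.card_le_card hsub
    _ ≤ ∑ d ∈ D, (A.filter fun a => ∃ a' ∈ A, a = a' + d).card := Finset.card_biUnion_le
    _ ≤ ∑ _d ∈ D, 1 := Finset.sum_le_sum hone
    _ = D.card := by simp
    _ ≤ s0 * s0 := hDcard
  set A' : Finset ℕ := A \ bad with hA'
  have hA'sub : A' ⊆ A := Finset.sdiff_subset
  have hA'card : p - bad.card ≤ A'.card := by
    rw [hA', Finset.card_sdiff_of_subset (Finset.filter_subset _ _), hAcard]
  set B : Finset ℕ := A'.image (fun a => M + a) with hB
  have hBcard : B.card = A'.card := Finset.card_image_of_injective _ (add_right_injective M)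
  have hmemB : ∀ b, b ∈ B ↔ ∃ α ∈ A', b = M + α := by
    intro b
    simp [hB, Finset.mem_image, eq_comm]
  refine ⟨B, ?_, ?_, ?_⟩
  · intro b hb
    obtain ⟨α, hα, rfl⟩ := (hmemB b).mp hb
    have h1 := hbound α (hA'sub hα)
    have hpp : 4 * p * p = 2 * p * p + 2 * p * p := by ring
    omega
  · rw [hs0, hBcard]
    omega
  · -- Sidon property
    have hclass : ∀ u, u ∈ (S ∩ Set.Icc 1 m) ∪ ↑B →
        (u ∈ S ∩ Set.Icc 1 m) ∨ ∃ α ∈ A', u = M + α := by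
      intro u hu
      rcases hu with hu | hu
      · exact Or.inl hu
      · exact Or.inr ((hmemB u).mp hu)
    have hhelp : ∀ h1 h2 α γ, h1 ∈ S ∩ Set.Icc 1 m → h2 ∈ S ∩ Set.Icc 1 m →
        α ∈ A' → γ ∈ A' → h1 + α = h2 + γ → h1 = h2 ∧ α = γ := by
      intro h1 h2 α γ hh1 hh2 hα hγ he
      rcases Nat.lt_trichotomy h1 h2 with hlt | heq | hgt
      · exfalso
        have hαbad : α ∈ bad := by
          rw [hbad, Finset.mem_filter]
          exact ⟨hA'sub hα, γ, hA'sub hγ, h2 - h1, hDmem h1 h2 hh1 hh2 hlt, by omega⟩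
        exact (Finset.mem_sdiff.mp hα).2 hαbad
      · exact ⟨heq, by omega⟩
      · exfalso
        have hγbad : γ ∈ bad := by
          rw [hbad, Finset.mem_filter]
          exact ⟨hA'sub hγ, α, hA'sub hα, h1 - h2, hDmem h2 h1 hh2 hh1 hgt, by omega⟩
        exact (Finset.mem_sdiff.mp hγ).2 hγbad
    refine sidon_of_key ?_ ?_
    · intro s hs
      rcases hclass s hs with hsH | ⟨α, hα, rfl⟩
      · have := (Set.mem_Icc.mp hsH.2).1
        omega
      · have := hbound α (hA'sub hα)
        omega
    · intro a ha b hb c hc d hd he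
      have hLb : 2 ≤ L := by
        rw [hL]; nlinarith [hp.two_le]
      rcases hclass a ha with hha | ⟨α, hα, rfl⟩ <;>
        rcases hclass b hb with hhb | ⟨β, hβ, rfl⟩ <;>
          rcases hclass c hc with hhc | ⟨γ, hγ, rfl⟩ <;>
            rcases hclass d hd with hhd | ⟨δ, hδ, rfl⟩
      -- 0,0
      · exact sidon_key hS a hha.1 b hhb.1 c hhc.1 d hhd.1 he
      -- 0 B's on left, 1 or 2 on right: impossible by size
      · have h1 := Set.mem_Icc.mp hha.2; have h2 := Set.mem_Icc.mp hhb.2; have h3 := Set.mem_Icc.mp hhc.2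
        have h4 := hbound δ (hA'sub hδ)
        omega
      · have h1 := Set.mem_Icc.mp hha.2; have h2 := Set.mem_Icc.mp hhb.2; have h3 := Set.mem_Icc.mp hhd.2
        have h4 := hbound γ (hA'sub hγ)
        omega
      · have h1 := Set.mem_Icc.mp hha.2; have h2 := Set.mem_Icc.mp hhb.2
        have h3 := hbound γ (hA'sub hγ); have h4 := hbound δ (hA'sub hδ)
        omega
      -- a ∈ H, b ∈ B
      · have h1 := Set.mem_Icc.mp hha.2; have h2 := Set.mem_Icc.mp hhc.2; have h3 := Set.mem_Icc.mp hhd.2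
        have h4 := hbound β (hA'sub hβ)
        omega
      · -- a H, b B, c H, d B : a + (M+β) = c + (M+δ)
        have := hhelp a c β δ hha hhc hβ hδ (by omega)
        exact Or.inl this.1
      · -- a H, b B, c B, d H : a + (M+β) = (M+γ) + d
        have := hhelp a d β γ hha hhd hβ hγ (by omega)
        exact Or.inr this.1
      · -- a H, b B, c B, d B : impossible
        have h1 := Set.mem_Icc.mp hha.2
        have h2 := hbound β (hA'sub hβ); have h3 := hbound γ (hA'sub hγ)
        have h4 := hbound δ (hA'sub hδ)
        omega
      -- a ∈ B, b ∈ H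
      · have h1 := Set.mem_Icc.mp hhb.2; have h2 := Set.mem_Icc.mp hhc.2; have h3 := Set.mem_Icc.mp hhd.2
        have h4 := hbound α (hA'sub hα)
        omega
      · -- a B, b H, c H, d B : (M+α) + b = c + (M+δ)
        have := hhelp b c α δ hhb hhc hα hδ (by omega)
        exact Or.inr (by rw [this.2])
      · -- a B, b H, c B, d H : (M+α) + b = (M+γ) + d
        have := hhelp b d α γ hhb hhd hα hγ (by omega)
        exact Or.inl (by rw [this.2])
      · -- a B, b H, c B, d B : impossible
        have h1 := Set.mem_Icc.mp hhb.2
        have h2 := hbound α (hA'sub hα); have h3 := hbound γ (hA'sub hγ)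
        have h4 := hbound δ (hA'sub hδ)
        omega
      -- a ∈ B, b ∈ B
      · have h1 := Set.mem_Icc.mp hhc.2; have h2 := Set.mem_Icc.mp hhd.2
        have h3 := hbound α (hA'sub hα); have h4 := hbound β (hA'sub hβ)
        omega
      · have h1 := Set.mem_Icc.mp hhc.2
        have h2 := hbound α (hA'sub hα); have h3 := hbound β (hA'sub hβ)
        have h4 := hbound δ (hA'sub hδ)
        omega
      · have h1 := Set.mem_Icc.mp hhd.2
        have h2 := hbound α (hA'sub hα); have h3 := hbound β (hA'sub hβ)
        have h4 := hbound γ (hA'sub hγ)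
        omega
      · -- all in B
        have he' : α + β = γ + δ := by omega
        rcases hAkey α (hA'sub hα) β (hA'sub hβ) γ (hA'sub hγ) δ (hA'sub hδ) he' with h | h
        · exact Or.inl (by rw [h])
        · exact Or.inr (by rw [h])

theorem limsup_counting_pos_of_maximal (S : Set ℕ) (hS : IsSidon S)
    (hmax : (∑' s : S, (1 : ℝ≥0∞) / (s : ℕ)) = DDC) :
    0 < Filter.limsup
      (fun n : ℕ => (Nat.card ↥(S ∩ Set.Icc 1 n) : ℝ≥0∞) / (n : ℝ≥0∞) ^ ((1 : ℝ) / 3))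
      Filter.atTop := by
  by_contra hcon
  have h0 : Filter.limsup
      (fun n : ℕ => (Nat.card ↥(S ∩ Set.Icc 1 n) : ℝ≥0∞) / (n : ℝ≥0∞) ^ ((1 : ℝ) / 3))
      Filter.atTop = 0 := by
    simpa [not_lt, nonpos_iff_eq_zero] using hcon
  have hev : ∀ᶠ n in Filter.atTop,
      (Nat.card ↥(S ∩ Set.Icc 1 n) : ℝ≥0∞) / (n : ℝ≥0∞) ^ ((1 : ℝ) / 3) < 8⁻¹ :=
    Filter.eventually_lt_of_limsup_lt (by rw [h0]; simp)
  obtain ⟨N, hN⟩ := Filter.eventually_atTop.mp hev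
  set K : ℕ := max N 10 with hKdef
  have hK10 : 10 ≤ K := le_max_right _ _
  have hKN : N ≤ K := le_max_left _ _
  have hcard : ∀ k, K ≤ k → 8 * Nat.card ↥(S ∩ Set.Icc 1 (8 ^ k)) < 2 ^ k := by
    intro k hk
    have hkN : N ≤ 8 ^ k := by
      calc N ≤ K := hKN
      _ ≤ k := hk
      _ ≤ 8 ^ k := Nat.le_of_lt (Nat.lt_pow_self (by norm_num : 1 < 8))
    have h1 := hN (8 ^ k) hkN
    set c : ℕ := Nat.card ↥(S ∩ Set.Icc 1 (8 ^ k)) with hc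
    set t : ℝ≥0∞ := ((8 ^ k : ℕ) : ℝ≥0∞) ^ ((1 : ℝ) / 3) with ht
    have hne0 : ((8 ^ k : ℕ) : ℝ≥0∞) ≠ 0 := Nat.cast_ne_zero.mpr (by positivity)
    have hnetop : ((8 ^ k : ℕ) : ℝ≥0∞) ≠ ⊤ := ENNReal.natCast_ne_top _
    have ht0 : t ≠ 0 := by
      rw [ht]
      simp [ENNReal.rpow_eq_zero_iff, hne0, hnetop]
    have httop : t ≠ ⊤ := by
      rw [ht]
      exact ENNReal.rpow_ne_top_of_nonneg (by norm_num) hnetop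
    have hlt : (c : ℝ≥0∞) < 8⁻¹ * t := by
      rw [← ENNReal.div_lt_iff (Or.inl ht0) (Or.inl httop)]
      exact_mod_cast h1
    have ht3 : t ^ (3 : ℕ) = ((8 ^ k : ℕ) : ℝ≥0∞) := by
      rw [ht, ← ENNReal.rpow_natCast (((8 ^ k : ℕ) : ℝ≥0∞) ^ ((1 : ℝ) / 3)) 3,
        ← ENNReal.rpow_mul]
      norm_num
    have hcube : (c : ℝ≥0∞) ^ (3 : ℕ) < (8⁻¹ * t) ^ (3 : ℕ) :=
      ENNReal.pow_lt_pow_left (by norm_num) hlt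
    have hrhs : (8⁻¹ * t : ℝ≥0∞) ^ (3 : ℕ) = (512 : ℝ≥0∞)⁻¹ * ((8 ^ k : ℕ) : ℝ≥0∞) := by
      rw [mul_pow, ht3, ← ENNReal.inv_pow]
      norm_num
    have hlt2 : (512 : ℝ≥0∞) * (c : ℝ≥0∞) ^ (3 : ℕ) < ((8 ^ k : ℕ) : ℝ≥0∞) := by
      calc (512 : ℝ≥0∞) * (c : ℝ≥0∞) ^ (3 : ℕ)
          < 512 * ((512 : ℝ≥0∞)⁻¹ * ((8 ^ k : ℕ) : ℝ≥0∞)) := by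
            refine ENNReal.mul_lt_mul_right (a := 512) (by norm_num) (by norm_num) ?_
            rw [← hrhs]; exact hcube
      _ = ((8 ^ k : ℕ) : ℝ≥0∞) := by
            rw [← mul_assoc, ENNReal.mul_inv_cancel (by norm_num) (by norm_num), one_mul]
    have hnat : 512 * c ^ 3 < 8 ^ k := by exact_mod_cast hlt2
    have e2 : (2 ^ k) ^ 3 = 8 ^ k := by
      rw [← pow_mul, Nat.mul_comm, pow_mul]
      norm_num
    have hfin : (8 * c) ^ 3 < (2 ^ k) ^ 3 := by
      calc (8 * c) ^ 3 = 512 * c ^ 3 := by ring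
      _ < 8 ^ k := hnat
      _ = (2 ^ k) ^ 3 := e2.symm
    exact (Nat.pow_lt_pow_iff_left (by norm_num)).mp hfin
  set m : ℕ := 8 ^ K with hm
  -- Bertrand
  obtain ⟨p, hp, hp_lb, hp_ub⟩ := Nat.exists_prime_lt_and_le_two_mul (2 ^ (2 * K - 5))
    (by positivity)
  have hp2 : p ≠ 2 := by
    have : (2:ℕ)^5 ≤ 2 ^ (2 * K - 5) := Nat.pow_le_pow_right (by norm_num) (by omega)
    omega
  obtain ⟨B, hBmem, hBp, hS'⟩ := sidon_extend S hS m p hp hp2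
  set s0 : ℕ := Nat.card ↥(S ∩ Set.Icc 1 m) with hs0
  have hs0K : 8 * s0 < 2 ^ K := hcard K le_rfl
  -- numeric: B.card ≥ 2^(2K-6) + 2
  have hBcard : 2 ^ (2 * K - 6) + 2 ≤ B.card := by
    have e1 : (2:ℕ) ^ (2 * K - 5) = 2 ^ (2 * K - 6) * 2 := by
      rw [← pow_succ]
      congr 1
      omega
    have e2 : (2:ℕ) ^ K * 2 ^ K = 2 ^ (2 * K - 6) * 64 := by
      rw [← pow_add, show (64:ℕ) = 2 ^ 6 by norm_num, ← pow_add]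
      congr 1
      omega
    have e3 := Nat.mul_lt_mul'' hs0K hs0K
    have e4 : 8 * s0 * (8 * s0) = 64 * (s0 * s0) := by ring
    omega
  -- every element of B is ≤ 2^(4K-5) and > m
  have hpub' : p ≤ 2 ^ (2 * K - 4) := by
    have e1 : (2:ℕ) ^ (2 * K - 4) = 2 ^ (2 * K - 5) * 2 := by
      rw [← pow_succ]; congr 1; omega
    omega
  have hppow : p * p ≤ 2 ^ (4 * K - 8) := by
    calc p * p ≤ 2 ^ (2 * K - 4) * 2 ^ (2 * K - 4) := Nat.mul_le_mul hpub' hpub'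
    _ = 2 ^ (4 * K - 8) := by rw [← pow_add]; congr 1; omega
  have hmpow : m = 2 ^ (3 * K) := by
    rw [hm, show (8:ℕ) = 2 ^ 3 by norm_num, ← pow_mul]
  have hBle : ∀ b ∈ B, (b : ℕ) ≤ 2 ^ (4 * K - 5) := by
    intro b hb
    have h1 := (hBmem b hb).2
    have h2 : (2:ℕ) ^ (3 * K) * 2 ≤ 2 ^ (4 * K - 6) := by
      calc (2:ℕ) ^ (3 * K) * 2 = 2 ^ (3 * K + 1) := by rw [pow_succ]
      _ ≤ 2 ^ (4 * K - 6) := Nat.pow_le_pow_right (by norm_num) (by omega)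
    have h3 : (2:ℕ) ^ (4 * K - 8) * 4 = 2 ^ (4 * K - 6) := by
      rw [show (4:ℕ) = 2 ^ 2 by norm_num, ← pow_add]
      congr 1
      omega
    have h4 : (2:ℕ) ^ (4 * K - 6) * 2 = 2 ^ (4 * K - 5) := by
      rw [← pow_succ]; congr 1; omega
    have h0 : 4 * p * p = 4 * (p * p) := by ring
    omega
  have hBgt : ∀ b ∈ B, m < b := by
    intro b hb
    have := (hBmem b hb).1
    omega
  -- sum over B is large
  have hsumB : (2:ℝ≥0∞)⁻¹ ^ (2 * K + 1) + 2 * (2:ℝ≥0∞)⁻¹ ^ (4 * K - 5)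
      ≤ ∑ b ∈ B, g b := by
    have hterm : ∀ b ∈ B, (2:ℝ≥0∞)⁻¹ ^ (4 * K - 5) ≤ g b := by
      intro b hb
      have h1 : (b : ℝ≥0∞) ≤ ((2:ℕ) ^ (4 * K - 5) : ℕ) := by
        exact_mod_cast Nat.cast_le.mpr (hBle b hb)
      rw [g, ENNReal.div_eq_inv_mul, mul_one, ← ENNReal.inv_pow]
      apply ENNReal.inv_le_inv.mpr
      calc (2:ℝ≥0∞) ^ (4 * K - 5) = ((2:ℕ) ^ (4 * K - 5) : ℕ) := by push_cast; ring
      _ ≥ (b : ℝ≥0∞) := h1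
    calc (2:ℝ≥0∞)⁻¹ ^ (2 * K + 1) + 2 * (2:ℝ≥0∞)⁻¹ ^ (4 * K - 5)
        = ((2 ^ (2 * K - 6) + 2 : ℕ) : ℝ≥0∞) * (2:ℝ≥0∞)⁻¹ ^ (4 * K - 5) := by
          push_cast
          rw [add_mul]
          congr 1
          rw [pow2_mul_invpow2 (by omega)]
          congr 1
          omega
    _ ≤ (B.card : ℝ≥0∞) * (2:ℝ≥0∞)⁻¹ ^ (4 * K - 5) := by
          apply mul_le_mul_left
          exact_mod_cast Nat.cast_le.mpr hBcard
    _ = B.card • ((2:ℝ≥0∞)⁻¹ ^ (4 * K - 5)) := by rw [nsmul_eq_mul]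
    _ ≤ ∑ b ∈ B, g b := Finset.card_nsmul_le_sum _ _ _ hterm
  -- head sum
  have Hfin : (S ∩ Set.Icc 1 m).Finite := (Set.finite_Icc 1 m).inter_of_right S
  set head : ℝ≥0∞ := ∑' x : ↥(S ∩ Set.Icc 1 m), g x with hhead
  have hheadfin : head ≠ ⊤ := by
    rw [hhead, tsum_set_finite g _ Hfin]
    refine (ENNReal.sum_lt_top.mpr ?_).ne
    intro x hx
    rw [Set.Finite.mem_toFinset] at hx
    have hx1 : 1 ≤ x := hx.2.1
    rw [g]
    exact ENNReal.div_lt_top ENNReal.one_ne_top (Nat.cast_ne_zero.mpr (by omega))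
  -- upper bound for DDC
  have hDDC_le : DDC ≤ head + (2:ℝ≥0∞)⁻¹ ^ (2 * K + 1) := by
    rw [← hmax]
    have hsub : S ⊆ (S ∩ Set.Icc 1 m) ∪ (S ∩ Set.Ioi m) := by
      intro x hx
      have := hS.1 x hx
      by_cases hxm : x ≤ m
      · exact Or.inl ⟨hx, Set.mem_Icc.mpr ⟨by omega, hxm⟩⟩
      · exact Or.inr ⟨hx, Set.mem_Ioi.mpr (by omega)⟩
    calc (∑' s : ↥S, (1:ℝ≥0∞) / (s : ℕ))
        = ∑' s : ↥S, g ↑s := rfl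
    _ ≤ ∑' x : ↥((S ∩ Set.Icc 1 m) ∪ (S ∩ Set.Ioi m)), g ↑x :=
        ENNReal.tsum_mono_subtype g hsub
    _ ≤ head + ∑' x : ↥(S ∩ Set.Ioi m), g ↑x := ENNReal.tsum_union_le g _ _
    _ ≤ head + (2:ℝ≥0∞)⁻¹ ^ (2 * K + 1) := by
        apply add_le_add_right
        exact tail_bound_s5 S hS.1 K (by omega) hcard
  -- lower bound via S'
  have hS'sum : (∑' s : ↥((S ∩ Set.Icc 1 m) ∪ ↑B), (1:ℝ≥0∞) / (s : ℕ))
      = head + ∑ b ∈ B, g b := by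
    have hdisj : Disjoint (S ∩ Set.Icc 1 m) (↑B : Set ℕ) := by
      rw [Set.disjoint_left]
      intro x hx hxB
      have h1 : x ≤ m := hx.2.2
      have h2 := hBgt x hxB
      omega
    calc (∑' s : ↥((S ∩ Set.Icc 1 m) ∪ ↑B), (1:ℝ≥0∞) / (s : ℕ))
        = ∑' s : ↥((S ∩ Set.Icc 1 m) ∪ ↑B), g ↑s := rfl
    _ = ∑' x : ℕ, ((S ∩ Set.Icc 1 m) ∪ ↑B).indicator g x := tsum_subtype _ g
    _ = ∑' x : ℕ, ((S ∩ Set.Icc 1 m).indicator g x + (↑B : Set ℕ).indicator g x) := by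
        apply tsum_congr
        intro x
        rw [Set.indicator_union_of_disjoint hdisj]
    _ = (∑' x : ℕ, (S ∩ Set.Icc 1 m).indicator g x)
        + ∑' x : ℕ, (↑B : Set ℕ).indicator g x := ENNReal.tsum_add
    _ = head + ∑ b ∈ B, g b := by
        rw [hhead, tsum_subtype _ g]
        congr 1
        rw [← tsum_subtype _ g]
        exact Finset.tsum_subtype _ g
  have hge : head + ∑ b ∈ B, g b ≤ DDC := by
    rw [← hS'sum, DDC]
    exact le_iSup (fun T : {T : Set ℕ // IsSidon T} => ∑' s : T.1, (1 : ℝ≥0∞) / (s : ℕ))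
      ⟨(S ∩ Set.Icc 1 m) ∪ ↑B, hS'⟩
  -- contradiction
  have hlt : head + (2:ℝ≥0∞)⁻¹ ^ (2 * K + 1) < head + ∑ b ∈ B, g b := by
    calc head + (2:ℝ≥0∞)⁻¹ ^ (2 * K + 1)
        < head + ((2:ℝ≥0∞)⁻¹ ^ (2 * K + 1) + 2 * (2:ℝ≥0∞)⁻¹ ^ (4 * K - 5)) := by
          rw [← add_assoc]
          apply ENNReal.lt_add_right
          · exact ENNReal.add_ne_top.mpr ⟨hheadfin,
              ENNReal.pow_ne_top (ENNReal.inv_ne_top.mpr two_ne_zero)⟩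
          · exact mul_ne_zero two_ne_zero
              (pow_ne_zero _ (ENNReal.inv_ne_zero.mpr ENNReal.ofNat_ne_top))
    _ ≤ head + ∑ b ∈ B, g b := add_le_add_right hsumB _
  exact absurd (hDDC_le.trans_lt (hlt.trans_le hge)) (lt_irrefl DDC)
end

section
/- There exists a Sidon set S of positive integers such that ∫₀¹ f_S(t)² dt = +∞. -/
open scoped ENNReal

/-- Sidon property for finite sets. -/
def SidonF (S : Finset ℕ) : Prop :=
  ∀ a ∈ S, ∀ b ∈ S, ∀ c ∈ S, ∀ d ∈ S,
    a ≤ b → c ≤ d → a + b = c + d → a = c ∧ b = d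

/-- Erdős–Turán generator. -/
def etg (p i : ℕ) : ℕ := 2 * p * i + i ^ 2 % p + 1

lemma etg_lt (p : ℕ) (hp : 0 < p) {i j : ℕ} (hij : i < j) : etg p i < etg p j := by
  have h1 : i ^ 2 % p < p := Nat.mod_lt _ hp
  have h2 : 2 * p * (i + 1) ≤ 2 * p * j := Nat.mul_le_mul_left _ hij
  unfold etg
  nlinarith [Nat.zero_le (j ^ 2 % p)]

lemma etg_le (p : ℕ) (hp : 0 < p) {i : ℕ} (hi : i < p) : etg p i ≤ 2 * p ^ 2 := by
  have h1 : i ^ 2 % p < p := Nat.mod_lt _ hp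
  have h2 : 2 * p * i ≤ 2 * p * (p - 1) := Nat.mul_le_mul_left _ (by omega)
  unfold etg
  nlinarith

lemma et_key (p : ℕ) (hp : p.Prime) (hp2 : p ≠ 2) {i j k l : ℕ}
    (hi : i < p) (hj : j < p) (hk : k < p) (hl : l < p)
    (h : etg p i + etg p j = etg p k + etg p l) :
    (i = k ∧ j = l) ∨ (i = l ∧ j = k) := by
  haveI := Fact.mk hp
  have hp0 : 0 < p := hp.pos
  have hri : i ^ 2 % p < p := Nat.mod_lt _ hp0
  have hrj : j ^ 2 % p < p := Nat.mod_lt _ hp0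
  have hrk : k ^ 2 % p < p := Nat.mod_lt _ hp0
  have hrl : l ^ 2 % p < p := Nat.mod_lt _ hp0
  have heq : 2 * p * (i + j) + (i ^ 2 % p + j ^ 2 % p)
      = 2 * p * (k + l) + (k ^ 2 % p + l ^ 2 % p) := by
    unfold etg at h; ring_nf at h ⊢; omega
  -- step 1 : i + j = k + l
  have hsum : i + j = k + l := by
    rcases lt_trichotomy (i + j) (k + l) with h1 | h1 | h1
    · have h2 : 2 * p * (i + j) + 2 * p ≤ 2 * p * (k + l) := by
        have := Nat.mul_le_mul_left (2 * p) (Nat.succ_le_of_lt h1)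
        rw [Nat.mul_succ] at this; omega
      omega
    · exact h1
    · have h2 : 2 * p * (k + l) + 2 * p ≤ 2 * p * (i + j) := by
        have := Nat.mul_le_mul_left (2 * p) (Nat.succ_le_of_lt h1)
        rw [Nat.mul_succ] at this; omega
      omega
  have hmod : i ^ 2 % p + j ^ 2 % p = k ^ 2 % p + l ^ 2 % p := by
    rw [hsum] at heq; omega
  -- step 2 : work in ZMod p
  have hc1 : (i : ZMod p) + j = k + l := by
    have := congrArg (fun n : ℕ => (n : ZMod p)) hsum
    push_cast at this; exact this
  have hc2 : (i : ZMod p) ^ 2 + (j : ZMod p) ^ 2 = (k : ZMod p) ^ 2 + (l : ZMod p) ^ 2 := by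
    have := congrArg (fun n : ℕ => (n : ZMod p)) hmod
    push_cast [ZMod.natCast_mod] at this; exact this
  have h2ne : (2 : ZMod p) ≠ 0 := by
    haveI : NeZero p := ⟨hp.ne_zero⟩
    intro h0
    rw [show ((2 : ZMod p)) = ((2 : ℕ) : ZMod p) by push_cast; ring,
      ZMod.natCast_eq_zero_iff] at h0
    rcases (Nat.prime_dvd_prime_iff_eq hp Nat.prime_two).mp h0 with rfl
    exact hp2 rfl
  have hij : (i : ZMod p) * j = (k : ZMod p) * l := by
    have h2 : (2 : ZMod p) * ((i : ZMod p) * j) = 2 * ((k : ZMod p) * l) := by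
      linear_combination hc1 * ((i : ZMod p) + j + k + l) - hc2
    exact mul_left_cancel₀ h2ne h2
  have hfact : ((i : ZMod p) - k) * ((i : ZMod p) - l) = 0 := by
    linear_combination (i : ZMod p) * hc1 - hij
  have hinj : ∀ a b : ℕ, a < p → b < p → (a : ZMod p) = b → a = b := by
    intro a b ha hb hab
    have := ZMod.val_cast_of_lt ha
    have := ZMod.val_cast_of_lt hb
    rw [hab] at *; omega
  rcases mul_eq_zero.mp hfact with h0 | h0
  · left
    have hik : i = k := hinj _ _ hi hk (by linear_combination h0)
    exact ⟨hik, by omega⟩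
  · right
    have hil : i = l := hinj _ _ hi hl (by linear_combination h0)
    exact ⟨hil, by omega⟩

/-- The Erdős–Turán Sidon set. -/
def etSet (p : ℕ) : Finset ℕ := (Finset.range p).image (etg p)

lemma etSet_sidon (p : ℕ) (hp : p.Prime) (hp2 : p ≠ 2) : SidonF (etSet p) := by
  intro a ha b hb c hc d hd hab hcd habcd
  simp only [etSet, Finset.mem_image, Finset.mem_range] at ha hb hc hd
  obtain ⟨i, hi, rfl⟩ := ha
  obtain ⟨j, hj, rfl⟩ := hb
  obtain ⟨k, hk, rfl⟩ := hc
  obtain ⟨l, hl, rfl⟩ := hd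
  rcases et_key p hp hp2 hi hj hk hl habcd with ⟨rfl, rfl⟩ | ⟨rfl, rfl⟩
  · exact ⟨rfl, rfl⟩
  · omega

lemma etSet_card (p : ℕ) (hp : 0 < p) : (etSet p).card = p := by
  rw [etSet, Finset.card_image_of_injOn, Finset.card_range]
  intro i hi j hj hij
  by_contra hne
  rcases Nat.lt_or_ge i j with h | h
  · exact absurd hij (Nat.ne_of_lt (etg_lt p hp h))
  · exact absurd hij.symm (Nat.ne_of_lt (etg_lt p hp (by omega)))

lemma etSet_bounds (p : ℕ) (hp : 0 < p) : ∀ x ∈ etSet p, 1 ≤ x ∧ x ≤ 2 * p ^ 2 := by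
  intro x hx
  simp only [etSet, Finset.mem_image, Finset.mem_range] at hx
  obtain ⟨i, hi, rfl⟩ := hx
  exact ⟨by unfold etg; omega, etg_le p hp hi⟩



lemma sidon_delete (B : Finset ℕ) (hB : SidonF B) (F : Finset ℕ) :
    ∃ A : Finset ℕ, A ⊆ B ∧ B.card ≤ A.card + F.card ∧
      ∀ x ∈ A, ∀ y ∈ A, x < y → y - x ∉ F := by
  classical
  set bad : ℕ → Prop := fun y => ∃ x ∈ B, x < y ∧ y - x ∈ F with hbad
  refine ⟨B.filter (fun y => ¬ bad y), Finset.filter_subset _ _, ?_, ?_⟩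
  · have hsplit : (B.filter bad).card + (B.filter (fun y => ¬ bad y)).card = B.card :=
      Finset.card_filter_add_card_filter_not bad
    have hR : (B.filter bad).card ≤ F.card := by
      apply Finset.card_le_card_of_injOn
        (fun y => y - (if h : bad y then h.choose else 0))
      · intro y hy
        rw [Finset.mem_coe, Finset.mem_filter] at hy
        simp only [Finset.mem_coe]
        rw [dif_pos hy.2]
        exact hy.2.choose_spec.2.2
      · intro y1 hy1 y2 hy2 hφ
        simp only [Finset.coe_filter, Set.mem_setOf_eq] at hy1 hy2
        simp only at hφ
        rw [dif_pos hy1.2, dif_pos hy2.2] at hφ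
        obtain ⟨hx1B, hx1lt, hf1⟩ := hy1.2.choose_spec
        obtain ⟨hx2B, hx2lt, hf2⟩ := hy2.2.choose_spec
        set x1 := hy1.2.choose with hx1def
        set x2 := hy2.2.choose with hx2def
        by_contra hne
        have hkey : x1 + y2 = x2 + y1 := by omega
        have hy1B : y1 ∈ B := hy1.1
        have hy2B : y2 ∈ B := hy2.1
        rcases Nat.lt_trichotomy x1 x2 with hx | hx | hx
        · have hy12 : y1 < y2 := by omega
          rcases le_total x2 y1 with hmx | hmx
          · have := hB x1 hx1B y2 hy2B x2 hx2B y1 hy1B (by omega) hmx hkey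
            omega
          · have := hB x1 hx1B y2 hy2B y1 hy1B x2 hx2B (by omega) hmx (by omega)
            omega
        · exact hne (by omega)
        · have hy21 : y2 < y1 := by omega
          rcases le_total x1 y2 with hmx | hmx
          · have := hB x2 hx2B y1 hy1B x1 hx1B y2 hy2B (by omega) hmx hkey.symm
            omega
          · have := hB x2 hx2B y1 hy1B y2 hy2B x1 hx1B (by omega) hmx (by omega)
            omega
    omega
  · intro x hx y hy hxy hmem
    rw [Finset.mem_filter] at hx hy
    exact hy.2 ⟨x, hx.1, hxy, hmem⟩




lemma sidonF_subset {A B : Finset ℕ} (h : A ⊆ B) (hB : SidonF B) : SidonF A :=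
  fun a ha b hb c hc d hd hab hcd heq =>
    hB a (h ha) b (h hb) c (h hc) d (h hd) hab hcd heq

lemma sidonF_shift {A : Finset ℕ} (T : ℕ) (hA : SidonF A) :
    SidonF (A.image (· + T)) := by
  intro a ha b hb c hc d hd hab hcd heq
  simp only [Finset.mem_image] at ha hb hc hd
  obtain ⟨x, hx, rfl⟩ := ha
  obtain ⟨y, hy, rfl⟩ := hb
  obtain ⟨z, hz, rfl⟩ := hc
  obtain ⟨w, hw, rfl⟩ := hd
  have := hA x hx y hy z hz w hw (by omega) (by omega) (by omega)
  omega

lemma step (S : Finset ℕ) (m : ℕ) :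
    ∃ (C : Finset ℕ) (M : ℕ),
      (∀ y ∈ C, 2 * m < y ∧ y ≤ M) ∧ 2 * m < M ∧
      M ≤ 32 * C.card ^ 2 ∧
      (SidonF S → (∀ x ∈ S, 0 < x ∧ x ≤ m) → SidonF (S ∪ C)) := by
  classical
  set P := S.card with hP
  obtain ⟨q, hq, hqp⟩ := Nat.exists_infinite_primes (2 * P ^ 2 + m + 3)
  have hq0 : 0 < q := hqp.pos
  have hq2 : q ≠ 2 := by omega
  set F : Finset ℕ := (S ×ˢ S).image (fun p => p.1 - p.2) with hF
  have hFcard : F.card ≤ P ^ 2 := by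
    calc F.card ≤ (S ×ˢ S).card := Finset.card_image_le
    _ = P ^ 2 := by rw [Finset.card_product]; ring
  obtain ⟨A, hAB, hAcard, hAdiff⟩ := sidon_delete (etSet q) (etSet_sidon q hqp hq2) F
  have hAS : SidonF A := sidonF_subset hAB (etSet_sidon q hqp hq2)
  have hAbounds : ∀ x ∈ A, 1 ≤ x ∧ x ≤ 2 * q ^ 2 := fun x hx => etSet_bounds q hq0 x (hAB hx)
  have hAcard' : q ≤ A.card + P ^ 2 := by
    have := etSet_card q hq0; omega
  set T := 2 * m + 4 * q ^ 2 with hT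
  set C := A.image (· + T) with hC
  have hCcard : C.card = A.card := Finset.card_image_of_injective _ (add_left_injective T)
  have hCbounds : ∀ y ∈ C, T + 1 ≤ y ∧ y ≤ T + 2 * q ^ 2 := by
    intro y hy
    simp only [hC, Finset.mem_image] at hy
    obtain ⟨x, hx, rfl⟩ := hy
    have := hAbounds x hx
    omega
  refine ⟨C, 2 * m + 6 * q ^ 2, ?_, ?_, ?_, ?_⟩
  · intro y hy
    have := hCbounds y hy
    have : 0 < q ^ 2 := pow_pos hq0 2
    omega
  · have : 0 < q ^ 2 := pow_pos hq0 2
    omega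
  · -- density : 2*m + 6*q^2 ≤ 32 * C.card ^ 2
    rw [hCcard]
    have h1 : q ≤ 2 * (A.card) := by nlinarith
    have h2 : m ≤ q := by omega
    nlinarith
  · -- Sidon of the union
    intro hS hSb
    intro a ha b hb c hc d hd hab hcd heq
    rw [Finset.mem_union] at ha hb hc hd
    have hQ1 : 1 ≤ q ^ 2 := pow_pos hq0 2
    -- dispatch cases
    rcases ha with ha | ha <;> rcases hb with hb | hb <;>
      rcases hc with hc | hc <;> rcases hd with hd | hd
    -- all in S
    · exact hS a ha b hb c hc d hd hab hcd heq
    -- a,b,c ∈ S, d ∈ C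
    · have := hSb a ha; have := hSb b hb; have := hSb c hc; have := hCbounds d hd; omega
    · have := hSb a ha; have := hSb b hb; have := hCbounds c hc; have := hSb d hd; omega
    · have := hSb a ha; have := hSb b hb; have := hCbounds c hc; have := hCbounds d hd; omega
    · have := hSb a ha; have := hCbounds b hb; have := hSb c hc; have := hSb d hd; omega
    -- KEY CASE : a, c ∈ S, b, d ∈ C
    · simp only [hC, Finset.mem_image] at hb hd
      obtain ⟨x, hx, rfl⟩ := hb
      obtain ⟨y, hy, rfl⟩ := hd
      rcases Nat.lt_trichotomy x y with hxy | hxy | hxy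
      · exfalso
        have hsub : y - x = a - c := by omega
        have hac : c < a := by omega
        have hmem : a - c ∈ F := by
          rw [hF]; exact Finset.mem_image.mpr ⟨(a, c), Finset.mem_product.mpr ⟨ha, hc⟩, rfl⟩
        exact hAdiff x hx y hy hxy (by rw [hsub]; exact hmem)
      · subst hxy
        constructor <;> omega
      · exfalso
        have hsub : x - y = c - a := by omega
        have hmem : c - a ∈ F := by
          rw [hF]; exact Finset.mem_image.mpr ⟨(c, a), Finset.mem_product.mpr ⟨hc, ha⟩, rfl⟩
        exact hAdiff y hy x hx hxy (by rw [hsub]; exact hmem)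
    · have := hSb a ha; have := hCbounds b hb; have := hCbounds c hc; have := hSb d hd; omega
    · have := hSb a ha; have := hCbounds b hb; have := hCbounds c hc; have := hCbounds d hd; omega
    · have := hCbounds a ha; have := hSb b hb; have := hSb c hc; have := hSb d hd; omega
    · have := hCbounds a ha; have := hSb b hb; have := hSb c hc; have := hCbounds d hd; omega
    · have := hCbounds a ha; have := hSb b hb; have := hCbounds c hc; have := hSb d hd; omega
    · have := hCbounds a ha; have := hSb b hb; have := hCbounds c hc; have := hCbounds d hd; omega
    · have := hCbounds a ha; have := hCbounds b hb; have := hSb c hc; have := hSb d hd; omega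
    · have := hCbounds a ha; have := hCbounds b hb; have := hSb c hc; have := hCbounds d hd; omega
    · have := hCbounds a ha; have := hCbounds b hb; have := hCbounds c hc; have := hSb d hd; omega
    -- all in C
    · exact sidonF_shift T hAS a ha b hb c hc d hd hab hcd heq

noncomputable def sys : ℕ → Finset ℕ × ℕ
  | 0 => (∅, 1)
  | n + 1 =>
    ((sys n).1 ∪ (step (sys n).1 (sys n).2).choose,
      ((step (sys n).1 (sys n).2).choose_spec).choose)

/-- The block added at stage `n`. -/
noncomputable def blk (n : ℕ) : Finset ℕ := (step (sys n).1 (sys n).2).choose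

lemma sys_succ_fst (n : ℕ) : (sys (n + 1)).1 = (sys n).1 ∪ blk n := rfl

lemma spec (n : ℕ) :
    (∀ y ∈ blk n, 2 * (sys n).2 < y ∧ y ≤ (sys (n + 1)).2) ∧
      2 * (sys n).2 < (sys (n + 1)).2 ∧
      (sys (n + 1)).2 ≤ 32 * (blk n).card ^ 2 ∧
      (SidonF (sys n).1 → (∀ x ∈ (sys n).1, 0 < x ∧ x ≤ (sys n).2) →
        SidonF ((sys n).1 ∪ blk n)) :=
  ((step (sys n).1 (sys n).2).choose_spec).choose_spec

lemma inv (n : ℕ) :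
    SidonF (sys n).1 ∧ (∀ x ∈ (sys n).1, 0 < x ∧ x ≤ (sys n).2) ∧ 1 ≤ (sys n).2 := by
  induction n with
  | zero =>
    refine ⟨?_, ?_, le_refl 1⟩
    · intro a ha; simp [sys] at ha
    · intro x hx; simp [sys] at hx
  | succ n ih =>
    obtain ⟨hS, hb, hM⟩ := ih
    obtain ⟨hblk, hMgrow, _, hSid⟩ := spec n
    refine ⟨hSid hS hb, ?_, by omega⟩
    intro x hx
    rw [sys_succ_fst, Finset.mem_union] at hx
    rcases hx with hx | hx
    · have := hb x hx; omega
    · have := hblk x hx; omega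

lemma sys_mono : ∀ {n m : ℕ}, n ≤ m → (sys n).1 ⊆ (sys m).1 := by
  intro n m h
  induction m with
  | zero => rw [Nat.le_zero.mp h]
  | succ m ih =>
    rcases Nat.lt_or_ge n (m + 1) with h' | h'
    · intro x hx
      rw [sys_succ_fst, Finset.mem_union]
      exact Or.inl (ih (by omega) hx)
    · rw [Nat.le_antisymm h h']

/-- The infinite Sidon set. -/
noncomputable def SS : Set ℕ := ⋃ n, ((sys n).1 : Set ℕ)

lemma SS_sidon : IsSidon SS := by
  constructor
  · intro s hs
    obtain ⟨n, hn⟩ := Set.mem_iUnion.mp hs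
    exact ((inv n).2.1 s hn).1
  · intro a ha b hb c hc d hd hab hcd heq
    obtain ⟨na, hna⟩ := Set.mem_iUnion.mp ha
    obtain ⟨nb, hnb⟩ := Set.mem_iUnion.mp hb
    obtain ⟨nc, hnc⟩ := Set.mem_iUnion.mp hc
    obtain ⟨nd, hnd⟩ := Set.mem_iUnion.mp hd
    set N := max (max na nb) (max nc nd) with hN
    exact (inv N).1 a (sys_mono (by omega) hna) b (sys_mono (by omega) hnb)
      c (sys_mono (by omega) hnc) d (sys_mono (by omega) hnd) hab hcd heq

lemma blk_subset_SS (n : ℕ) : ∀ x ∈ blk n, x ∈ SS := by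
  intro x hx
  refine Set.mem_iUnion.mpr ⟨n + 1, ?_⟩
  rw [sys_succ_fst]
  exact Finset.mem_coe.mpr (Finset.mem_union_right _ hx)

/-- Real versions of the numbers. -/
noncomputable def Mr (n : ℕ) : ℝ := ((sys n).2 : ℝ)

lemma Mr_one_le (n : ℕ) : 1 ≤ Mr n := by
  have := (inv n).2.2; unfold Mr; exact_mod_cast this

lemma Mr_growth (n : ℕ) : 2 * Mr n + 1 ≤ Mr (n + 1) := by
  have := (spec n).2.1
  have : 2 * (sys n).2 + 1 ≤ (sys (n+1)).2 := by omega
  unfold Mr; exact_mod_cast this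

lemma Mr_pos (n : ℕ) : 0 < Mr n := lt_of_lt_of_le one_pos (Mr_one_le n)

noncomputable def aa (n : ℕ) : ℝ := 1 - 1 / (2 * Mr n)

lemma aa_lt_one (n : ℕ) : aa n < 1 := by
  unfold aa
  have := Mr_pos n
  have : 0 < 1 / (2 * Mr n) := by positivity
  linarith

lemma aa_half (n : ℕ) : (1:ℝ)/2 ≤ aa n := by
  unfold aa
  have h1 := Mr_one_le n
  have h2 : 1 / (2 * Mr n) ≤ 1 / 2 := by
    apply div_le_div_of_nonneg_left (by norm_num) (by norm_num)
    linarith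
  linarith

lemma Mr_mono {n m : ℕ} (h : n ≤ m) : Mr n ≤ Mr m := by
  induction m with
  | zero => rw [Nat.le_zero.mp h]
  | succ m ih =>
    rcases Nat.lt_or_ge n (m + 1) with h' | h'
    · have h1 := ih (by omega)
      have h2 := Mr_growth m
      have h3 := Mr_one_le n
      linarith
    · rw [Nat.le_antisymm h h']

lemma aa_mono {n m : ℕ} (h : n ≤ m) : aa n ≤ aa m := by
  unfold aa
  have h1 := Mr_pos n
  have h2 := Mr_pos m
  have h3 := Mr_mono h
  have : 1 / (2 * Mr m) ≤ 1 / (2 * Mr n) := by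
    apply div_le_div_of_nonneg_left (by norm_num) (by linarith) (by linarith)
  linarith

lemma aa_strict (n : ℕ) : aa n < aa (n + 1) := by
  unfold aa
  have h1 := Mr_pos n
  have h2 := Mr_pos (n + 1)
  have h3 := Mr_growth n
  have : 1 / (2 * Mr (n+1)) < 1 / (2 * Mr n) := by
    apply div_lt_div_of_pos_left (by norm_num) (by linarith) (by linarith)
  linarith

/-- Intervals used for the lower bound. -/
noncomputable def J (n : ℕ) : Set ℝ := Set.Ioo (aa (n + 1)) (aa (n + 2))

lemma J_subset (n : ℕ) : J n ⊆ Set.Ioo (0:ℝ) 1 := by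
  intro t ht
  obtain ⟨h1, h2⟩ := ht
  have := aa_half (n + 1)
  have := aa_lt_one (n + 2)
  constructor <;> linarith

lemma J_disjoint : Pairwise (Function.onFun Disjoint J) := by
  intro m n hmn
  wlog h : m < n generalizing m n
  · exact (this hmn.symm (by omega)).symm
  · rw [Function.onFun, Set.disjoint_left]
    intro t htm htn
    have h1 : t < aa (m + 2) := htm.2
    have h2 : aa (n + 1) < t := htn.1
    have h3 : aa (m + 2) ≤ aa (n + 1) := aa_mono (by omega)
    linarith

/-- Pointwise lower bound for the generating function on `J n`. -/
lemma genFun_lower (n : ℕ) {t : ℝ} (ht : t ∈ J n) :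
    (Mr (n + 1)) / 128 ≤ genFun SS t ^ 2 := by
  obtain ⟨ht1, ht2⟩ := ht
  have ht0 : 0 < t := lt_of_lt_of_le (by linarith [aa_half (n+1)]) ht1.le
  have htlt1 : t < 1 := lt_trans ht2 (aa_lt_one (n + 2))
  -- key : each element s of blk n satisfies t ^ s ≥ 1/2
  have hpow : ∀ s ∈ blk n, (1:ℝ)/2 ≤ t ^ s := by
    intro s hs
    have hsM : s ≤ (sys (n+1)).2 := ((spec n).1 s hs).2
    have h1 : t ^ s ≥ t ^ ((sys (n+1)).2) :=
      pow_le_pow_of_le_one ht0.le htlt1.le hsM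
    have h2 : (1:ℝ) + ((sys (n+1)).2 : ℕ) * (t - 1) ≤ t ^ ((sys (n+1)).2) := by
      have := one_add_mul_le_pow (a := t - 1) (by linarith) ((sys (n+1)).2)
      simpa using this
    have h3 : 1 - t ≤ 1 / (2 * Mr (n + 1)) := by
      have : aa (n+1) < t := ht1
      unfold aa at this; linarith
    have h4 : (((sys (n+1)).2 : ℕ) : ℝ) = Mr (n + 1) := rfl
    have h5 : Mr (n+1) * (1 - t) ≤ Mr (n+1) * (1 / (2 * Mr (n+1))) :=
      mul_le_mul_of_nonneg_left h3 (Mr_pos (n+1)).le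
    have h6 : Mr (n+1) * (1 / (2 * Mr (n+1))) = 1/2 := by
      rw [mul_one_div, div_eq_div_iff (by linarith [Mr_pos (n+1)]) (by norm_num)]
      ring
    rw [h4] at h2
    nlinarith
  -- sum over the block
  have hsummable : Summable (fun s : SS => t ^ (s : ℕ)) := by
    have : Summable (fun k : ℕ => t ^ k) :=
      summable_geometric_of_lt_one ht0.le htlt1
    exact this.subtype _
  have hblock : ∑ s ∈ blk n, t ^ s ≤ genFun SS t := by
    unfold genFun
    let e : {x // x ∈ blk n} ↪ SS :=
      ⟨fun x => ⟨x.1, blk_subset_SS n x.1 x.2⟩, by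
        intro x y hxy
        exact Subtype.ext (congrArg (fun z : SS => (z : ℕ)) hxy)⟩
    have h1 : ∑ s ∈ blk n, t ^ s = ∑ x ∈ (blk n).attach.map e, t ^ (x : ℕ) := by
      rw [Finset.sum_map]
      simp only [e, Function.Embedding.coeFn_mk]
      exact (Finset.sum_attach _ _).symm
    rw [h1]
    apply Summable.sum_le_tsum
    · intro i _; positivity
    · exact hsummable
  have hcardsum : ((blk n).card : ℝ) * (1/2) ≤ ∑ s ∈ blk n, t ^ s := by
    calc ((blk n).card : ℝ) * (1/2) = ∑ _s ∈ blk n, (1:ℝ)/2 := by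
          rw [Finset.sum_const, nsmul_eq_mul]
    _ ≤ ∑ s ∈ blk n, t ^ s := Finset.sum_le_sum hpow
  have hf : ((blk n).card : ℝ) / 2 ≤ genFun SS t := by
    have := le_trans hcardsum hblock; linarith
  have hfnn : 0 ≤ ((blk n).card : ℝ) / 2 := by positivity
  have hsq : (((blk n).card : ℝ) / 2) ^ 2 ≤ genFun SS t ^ 2 := by
    apply pow_le_pow_left₀ hfnn hf
  have hdens : Mr (n + 1) ≤ 32 * ((blk n).card : ℝ) ^ 2 := by
    have := (spec n).2.2.1
    unfold Mr
    exact_mod_cast this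
  nlinarith

lemma piece (n : ℕ) :
    ENNReal.ofReal (1/512 : ℝ) ≤
      ∫⁻ t in J n, ENNReal.ofReal (genFun SS t ^ 2) := by
  set c : ℝ≥0∞ := ENNReal.ofReal (Mr (n + 1) / 128) with hc
  have hmeas : MeasurableSet (J n) := measurableSet_Ioo
  have hvol : MeasureTheory.volume (J n) = ENNReal.ofReal (aa (n+2) - aa (n+1)) :=
    Real.volume_Ioo
  have step1 : ENNReal.ofReal (1/512 : ℝ) ≤ c * MeasureTheory.volume (J n) := by
    rw [hvol, hc, ← ENNReal.ofReal_mul (div_nonneg (Mr_pos (n+1)).le (by norm_num))]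
    apply ENNReal.ofReal_le_ofReal
    have hx := Mr_one_le (n + 1)
    have hy := Mr_growth (n + 1)
    have hx0 := Mr_pos (n + 1)
    have hy0 := Mr_pos (n + 2)
    have hgap : aa (n+2) - aa (n+1) = 1/(2*Mr (n+1)) - 1/(2*Mr (n+2)) := by
      unfold aa; ring
    rw [hgap]
    have h1 : 1/(2*Mr (n+2)) ≤ 1/(4*Mr (n+1)) := by
      apply div_le_div_of_nonneg_left (by norm_num) (by linarith) (by linarith)
    have h2 : 1/(2*Mr (n+1)) - 1/(4*Mr (n+1)) = 1/(4*Mr (n+1)) := by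
      field_simp; ring
    have h3 : 1/(4*Mr (n+1)) ≤ 1/(2*Mr (n+1)) - 1/(2*Mr (n+2)) := by linarith
    calc (1:ℝ)/512 = (Mr (n+1)/128) * (1/(4*Mr (n+1))) := by
          field_simp
          ring
    _ ≤ Mr (n+1)/128 * (1/(2*Mr (n+1)) - 1/(2*Mr (n+2))) := by
        apply mul_le_mul_of_nonneg_left h3 (div_nonneg hx0.le (by norm_num))
  have step2 : c * MeasureTheory.volume (J n) ≤
      ∫⁻ t in J n, ENNReal.ofReal (genFun SS t ^ 2) := by
    have h1 : c * MeasureTheory.volume (J n)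
        = ∫⁻ t, (J n).indicator (fun _ => c) t := by
      rw [MeasureTheory.lintegral_indicator hmeas, MeasureTheory.setLIntegral_const]
    have h2 : ∫⁻ t in J n, ENNReal.ofReal (genFun SS t ^ 2)
        = ∫⁻ t, (J n).indicator (fun t => ENNReal.ofReal (genFun SS t ^ 2)) t := by
      rw [MeasureTheory.lintegral_indicator hmeas]
    rw [h1, h2]
    apply MeasureTheory.lintegral_mono
    intro t
    by_cases ht : t ∈ J n
    · simp only [Set.indicator_of_mem ht, hc]
      exact ENNReal.ofReal_le_ofReal (genFun_lower n ht)
    · simp [Set.indicator_of_notMem ht]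
  exact le_trans step1 step2

theorem exists_sidon_genFun_sq_not_integrable :
    ∃ S : Set ℕ, IsSidon S ∧
      (∫⁻ t in Set.Ioo (0 : ℝ) 1, ENNReal.ofReal (genFun S t ^ 2)) = ⊤ := by
  refine ⟨SS, SS_sidon, ?_⟩
  rw [eq_top_iff]
  have hdisj := J_disjoint
  have hmeas : ∀ n, MeasurableSet (J n) := fun n => measurableSet_Ioo
  calc (⊤ : ℝ≥0∞) = ∑' _n : ℕ, ENNReal.ofReal (1/512 : ℝ) :=
        (ENNReal.tsum_const_eq_top_of_ne_zero (by positivity)).symm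
  _ ≤ ∑' n : ℕ, ∫⁻ t in J n, ENNReal.ofReal (genFun SS t ^ 2) :=
      ENNReal.tsum_le_tsum (fun n => piece n)
  _ = ∫⁻ t in ⋃ n, J n, ENNReal.ofReal (genFun SS t ^ 2) :=
      (MeasureTheory.lintegral_iUnion hmeas hdisj _).symm
  _ ≤ ∫⁻ t in Set.Ioo (0:ℝ) 1, ENNReal.ofReal (genFun SS t ^ 2) :=
      MeasureTheory.lintegral_mono_set (Set.iUnion_subset J_subset)
end

section
/- Every Sidon set S of positive integers satisfying limsup_{n→∞} S(n)/√n > 0 satisfies ∫₀¹ f_S(t)² dt = +∞. -/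
open scoped ENNReal

open MeasureTheory Filter

private lemma genFun_lower_s8 (S : Set ℕ) (n : ℕ) {t : ℝ} (h0 : 0 ≤ t) (h1 : t < 1) :
    (Nat.card ↥(S ∩ Set.Icc 1 n) : ℝ) * t ^ n ≤ genFun S t := by
  classical
  set F : Finset ℕ := (Finset.Icc 1 n).filter (· ∈ S) with hF
  have hset : S ∩ Set.Icc 1 n = ↑F := by
    ext x
    simp only [Set.mem_inter_iff, Set.mem_Icc, Finset.mem_coe, Finset.mem_filter,
      Finset.mem_Icc, hF]
    tauto
  have hcard : (Nat.card ↥(S ∩ Set.Icc 1 n) : ℕ) = F.card := by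
    rw [hset, Nat.card_coe_set_eq, Set.ncard_coe_finset]
  have hsum : Summable (S.indicator fun k => t ^ k) :=
    (summable_geometric_of_lt_one h0 h1).indicator S
  have h2 : genFun S t = ∑' k, S.indicator (fun k => t ^ k) k := by
    rw [genFun, tsum_subtype]
  rw [h2, hcard]
  calc (F.card : ℝ) * t ^ n = ∑ _s ∈ F, t ^ n := by
        rw [Finset.sum_const, nsmul_eq_mul]
    _ ≤ ∑ s ∈ F, S.indicator (fun k => t ^ k) s := by
        apply Finset.sum_le_sum
        intro s hs
        have hsS : s ∈ S := (Finset.mem_filter.1 hs).2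
        have hsn : s ≤ n := (Finset.mem_Icc.1 (Finset.mem_filter.1 hs).1).2
        rw [Set.indicator_of_mem hsS]
        exact pow_le_pow_of_le_one h0 h1.le hsn
    _ ≤ ∑' k, S.indicator (fun k => t ^ k) k := by
        apply Summable.sum_le_tsum _ _ hsum
        intro i _
        exact Set.indicator_nonneg (fun k _ => pow_nonneg h0 k) i

private lemma interval_bound (S : Set ℕ) {ε : ℝ} (hε : 0 < ε) (N : ℕ) (hN : 1 ≤ N)
    (hcard : ε * Real.sqrt N ≤ (Nat.card ↥(S ∩ Set.Icc 1 N) : ℝ)) :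
    ENNReal.ofReal (ε ^ 2 / 16) ≤
      ∫⁻ t in Set.Ioo (1 - 1 / (2 * N) : ℝ) (1 - 1 / (4 * N)),
        ENNReal.ofReal (genFun S t ^ 2) := by
  have hN' : (1 : ℝ) ≤ N := by exact_mod_cast hN
  have hNpos : (0 : ℝ) < N := by linarith
  set a : ℝ := 1 - 1 / (2 * N) with ha
  set b : ℝ := 1 - 1 / (4 * N) with hb
  have ha0 : (0 : ℝ) < a := by
    have : 1 / (2 * (N : ℝ)) ≤ 1 / 2 := by
      apply div_le_div_of_nonneg_left one_pos.le two_pos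
      linarith
    rw [ha]; linarith
  have hb1 : b < 1 := by
    have : 0 < 1 / (4 * (N : ℝ)) := by positivity
    rw [hb]; linarith
  -- Bernoulli: (1 - 1/(2N))^N ≥ 1/2
  have hBer : (1 : ℝ) / 2 ≤ a ^ N := by
    have hle : 1 / (2 * (N : ℝ)) ≤ 1 / 2 := by
      apply div_le_div_of_nonneg_left one_pos.le two_pos
      linarith
    have h := one_add_mul_le_pow (a := -(1 / (2 * (N : ℝ)))) (by linarith) N
    have heq : 1 + (N : ℝ) * -(1 / (2 * N)) = 1 / 2 := by
      field_simp
      ring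
    have heq2 : (1 : ℝ) + -(1 / (2 * N)) = a := by rw [ha]; ring
    rw [heq, heq2] at h
    exact h
  have hsN : (0 : ℝ) ≤ Real.sqrt N := Real.sqrt_nonneg _
  -- pointwise bound on the interval
  have hpt : ∀ t ∈ Set.Ioo a b,
      ENNReal.ofReal (ε ^ 2 * N / 4) ≤ ENNReal.ofReal (genFun S t ^ 2) := by
    intro t ht
    have ht0 : 0 ≤ t := le_of_lt (lt_of_lt_of_le ha0 ht.1.le)
    have ht1 : t < 1 := lt_trans ht.2 hb1
    have htN : (1 : ℝ) / 2 ≤ t ^ N :=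
      le_trans hBer (pow_le_pow_left₀ ha0.le ht.1.le N)
    have hf : ε * Real.sqrt N * (1 / 2) ≤ genFun S t := by
      calc ε * Real.sqrt N * (1 / 2)
          ≤ (Nat.card ↥(S ∩ Set.Icc 1 N) : ℝ) * t ^ N := by
            apply mul_le_mul hcard htN (by norm_num)
            exact le_trans (by positivity) hcard
        _ ≤ genFun S t := genFun_lower_s8 S N ht0 ht1
    apply ENNReal.ofReal_le_ofReal
    have hnn : 0 ≤ ε * Real.sqrt N * (1 / 2) := by positivity
    have := pow_le_pow_left₀ hnn hf 2
    calc ε ^ 2 * N / 4 = (ε * Real.sqrt N * (1 / 2)) ^ 2 := by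
          rw [mul_pow, mul_pow, Real.sq_sqrt hNpos.le]; ring
      _ ≤ genFun S t ^ 2 := this
  have hmeas : MeasurableSet (Set.Ioo a b) := measurableSet_Ioo
  calc ENNReal.ofReal (ε ^ 2 / 16)
      = ENNReal.ofReal (ε ^ 2 * N / 4) * volume (Set.Ioo a b) := by
        rw [Real.volume_Ioo, ← ENNReal.ofReal_mul (by positivity)]
        congr 1
        rw [hb, ha]
        field_simp
        ring
    _ = ∫⁻ _t in Set.Ioo a b, ENNReal.ofReal (ε ^ 2 * N / 4) := by
        rw [setLIntegral_const]
    _ ≤ ∫⁻ t in Set.Ioo a b, ENNReal.ofReal (genFun S t ^ 2) :=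
        setLIntegral_mono' hmeas hpt

theorem genFun_sq_not_integrable_of_limsup_pos (S : Set ℕ) (hS : IsSidon S)
    (h : 0 < Filter.limsup
      (fun n : ℕ => (Nat.card ↥(S ∩ Set.Icc 1 n) : ℝ≥0∞) / (n : ℝ≥0∞) ^ ((1 : ℝ) / 2))
      Filter.atTop) :
    (∫⁻ t in Set.Ioo (0 : ℝ) 1, ENNReal.ofReal (genFun S t ^ 2)) = ⊤ := by
  classical
  set u : ℕ → ℝ≥0∞ :=
    fun n : ℕ => (Nat.card ↥(S ∩ Set.Icc 1 n) : ℝ≥0∞) / (n : ℝ≥0∞) ^ ((1 : ℝ) / 2) with hu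
  set L := Filter.limsup u Filter.atTop with hL
  have h1 : (0 : ℝ≥0∞) < min L 1 := lt_min h one_pos
  set c := min L 1 / 2 with hc
  have hmtop : min L 1 ≠ ⊤ := ne_top_of_le_ne_top ENNReal.one_ne_top (min_le_right _ _)
  have hc0 : c ≠ 0 := by
    rw [hc, Ne, ENNReal.div_eq_zero_iff]
    push_neg
    exact ⟨h1.ne', ENNReal.ofNat_ne_top⟩
  have hctop : c ≠ ⊤ := by
    rw [hc]
    exact (ENNReal.div_lt_top hmtop (by norm_num)).ne
  have hcL : c < L :=
    lt_of_lt_of_le (ENNReal.half_lt_self h1.ne' hmtop) (min_le_left _ _)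
  -- frequently c < u n
  have hfreq : ∀ n₀ : ℕ, ∃ n, n₀ ≤ n ∧ c < u n := by
    intro n₀
    by_contra hcon
    push_neg at hcon
    have hev : ∀ᶠ n in atTop, u n ≤ c := eventually_atTop.2 ⟨n₀, hcon⟩
    have : L ≤ c := Filter.limsup_le_of_le (h := hev)
    exact absurd hcL (not_lt.2 this)
  set ε : ℝ := c.toReal with hε'
  have hε : 0 < ε := ENNReal.toReal_pos hc0 hctop
  -- good n's in real form
  have good : ∀ n₀ : ℕ, ∃ n, n₀ ≤ n ∧ 1 ≤ n ∧
      ε * Real.sqrt n ≤ (Nat.card ↥(S ∩ Set.Icc 1 n) : ℝ) := by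
    intro n₀
    obtain ⟨n, hn, hcu⟩ := hfreq (max n₀ 1)
    refine ⟨n, le_trans (le_max_left _ _) hn, le_trans (le_max_right _ _) hn, ?_⟩
    have hn1 : 1 ≤ n := le_trans (le_max_right _ _) hn
    have hb0 : ((n : ℝ≥0∞) ^ ((1 : ℝ) / 2)) ≠ 0 := by
      apply ne_of_gt
      apply ENNReal.rpow_pos _ (ENNReal.natCast_ne_top n)
      exact_mod_cast Nat.pos_of_ne_zero (by omega)
    have hbtop : ((n : ℝ≥0∞) ^ ((1 : ℝ) / 2)) ≠ ⊤ :=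
      ENNReal.rpow_ne_top_of_nonneg (by norm_num) (ENNReal.natCast_ne_top n)
    have hmul : c * (n : ℝ≥0∞) ^ ((1 : ℝ) / 2) <
        (Nat.card ↥(S ∩ Set.Icc 1 n) : ℝ≥0∞) := by
      rw [hu] at hcu
      exact (ENNReal.lt_div_iff_mul_lt (Or.inl hb0) (Or.inl hbtop)).1 hcu
    have htR := ENNReal.toReal_mono (ENNReal.natCast_ne_top _) hmul.le
    rw [ENNReal.toReal_mul] at htR
    have hrw : ((n : ℝ≥0∞) ^ ((1 : ℝ) / 2)).toReal = Real.sqrt n := by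
      simp [← ENNReal.toReal_rpow, Real.sqrt_eq_rpow]
    rw [hrw] at htR
    simpa using htR
  choose g hg1 hg2 hg3 using good
  -- doubling sequence of good n's
  set m : ℕ → ℕ := fun k => Nat.rec (g 1) (fun _ prev => g (2 * prev + 1)) k with hm
  have hm1 : ∀ k, 1 ≤ m k := by
    intro k
    cases k with
    | zero => exact hg2 1
    | succ k => exact hg2 _
  have hmgood : ∀ k, ε * Real.sqrt (m k) ≤ (Nat.card ↥(S ∩ Set.Icc 1 (m k)) : ℝ) := by
    intro k
    cases k with
    | zero => exact hg3 1
    | succ k => exact hg3 _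
  have hmdb : ∀ k, 2 * m k + 1 ≤ m (k + 1) := fun k => hg1 (2 * m k + 1)
  have hmono : StrictMono m := strictMono_nat_of_lt_succ fun k => by
    have := hmdb k
    have := hm1 k
    omega
  have hdouble : ∀ j k, j < k → 2 * m j ≤ m k := by
    intro j k hjk
    have h1 : 2 * m j ≤ m (j + 1) := by have := hmdb j; omega
    exact le_trans h1 (hmono.monotone (show j + 1 ≤ k by omega))
  -- disjoint intervals
  set J : ℕ → Set ℝ :=
    fun k => Set.Ioo (1 - 1 / (2 * (m k : ℝ))) (1 - 1 / (4 * (m k : ℝ))) with hJ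
  have hmR : ∀ k, (1 : ℝ) ≤ (m k : ℝ) := fun k => by exact_mod_cast hm1 k
  have hsub : (⋃ k, J k) ⊆ Set.Ioo 0 1 := by
    rw [Set.iUnion_subset_iff]
    intro k t ht
    have h1 := hmR k
    have hlow : (0 : ℝ) < 1 - 1 / (2 * (m k : ℝ)) := by
      have : 1 / (2 * ((m k : ℕ) : ℝ)) ≤ 1 / 2 := by
        apply div_le_div_of_nonneg_left one_pos.le two_pos
        linarith
      linarith
    have hhigh : 1 - 1 / (4 * ((m k : ℕ) : ℝ)) < 1 := by
      have : 0 < 1 / (4 * ((m k : ℕ) : ℝ)) := by positivity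
      linarith
    exact ⟨lt_trans hlow ht.1, lt_trans ht.2 hhigh⟩
  have hdisj : Pairwise (Function.onFun Disjoint J) := by
    have key : ∀ j k, j < k → Disjoint (J j) (J k) := by
      intro j k hjk
      rw [Set.disjoint_left]
      intro t htj htk
      have hdb : 2 * m j ≤ m k := hdouble j k hjk
      have hj1 := hmR j
      have hdbR : 2 * ((m j : ℕ) : ℝ) ≤ ((m k : ℕ) : ℝ) := by exact_mod_cast hdb
      -- upper end of J j ≤ lower end of J k
      have : 1 / (2 * ((m k : ℕ) : ℝ)) ≤ 1 / (4 * ((m j : ℕ) : ℝ)) := by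
        apply div_le_div_of_nonneg_left one_pos.le (by linarith)
        linarith
      have h2 := htj.2
      have h3 := htk.1
      linarith
    intro j k hjk
    rcases lt_or_gt_of_ne hjk with h' | h'
    · exact key j k h'
    · exact (key k j h').symm
  have hmeas : ∀ k, MeasurableSet (J k) := fun _ => measurableSet_Ioo
  have hkey : ∀ k : ℕ, ENNReal.ofReal (ε ^ 2 / 16) ≤
      ∫⁻ t in J k, ENNReal.ofReal (genFun S t ^ 2) := by
    intro k
    have := interval_bound S hε (m k) (hm1 k) (hmgood k)
    simpa [hJ, Nat.cast_ofNat, mul_comm] using this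
  have hδ : ENNReal.ofReal (ε ^ 2 / 16) ≠ 0 := by
    rw [Ne, ENNReal.ofReal_eq_zero, not_le]
    positivity
  have htop : (⊤ : ℝ≥0∞) ≤ ∫⁻ t in Set.Ioo (0 : ℝ) 1, ENNReal.ofReal (genFun S t ^ 2) := by
    calc (⊤ : ℝ≥0∞) = ∑' _k : ℕ, ENNReal.ofReal (ε ^ 2 / 16) :=
          (ENNReal.tsum_const_eq_top_of_ne_zero hδ).symm
      _ ≤ ∑' k : ℕ, ∫⁻ t in J k, ENNReal.ofReal (genFun S t ^ 2) :=
          ENNReal.tsum_le_tsum hkey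
      _ = ∫⁻ t in ⋃ k, J k, ENNReal.ofReal (genFun S t ^ 2) :=
          (lintegral_iUnion hmeas hdisj _).symm
      _ ≤ ∫⁻ t in Set.Ioo (0 : ℝ) 1, ENNReal.ofReal (genFun S t ^ 2) :=
          lintegral_mono_set hsub
  exact top_le_iff.1 htop
end
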